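/- arXiv:2506.20778 — 11 statements merged into one kernel-verified Lean document; each statement's English description precedes it below -/
import Mathlib

section
/- Let d and H be as in the construction and let {x_{ij}}_{(i,j)∈[d]×[d]} be the resulting d² vectors in L^d. Then {x_{ij}} forms a (12,16,96)-SIC, i.e.: (a) (x_{ij},x_{ij}) = 12 for all (i,j); (b) (x_{ij},x_{kl})·(x_{kl},x_{ij}) = 16 whenever (i,j) ≠ (k,l); (c) Σ_{(i,j)∈[d]×[d]} x_{ij}·x_{ij}* = 96·I; and (d) span{x_{ij} : (i,j) ∈ [d]×[d]} = L^d. (Here 12, 16, 96 denote the corresponding multiples of 1 in K.) -/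
open scoped BigOperators

noncomputable section

/-- The sesquilinear form `(x, y) = ∑ₖ conj (x k) * y k` on `Fin d → L`. -/
def sesq {L : Type*} [Field L] (conj : L →+* L) {d : ℕ} (x y : Fin d → L) : L :=
  ∑ k, conj (x k) * y k

/-- The SIC vectors of the construction: `x i j = h j ∘ (𝟙 + z • e i)` with
`z = -2(1 + i0)`, i.e. the `k`-th entry is `H k j * (1 + z * δ_{k i})`. -/
def sicVec {K L : Type*} [Field K] [Field L] (φ : K →+* L) (i0 : L) {d : ℕ}
    (H : Matrix (Fin d) (Fin d) K) (i j : Fin d) : Fin d → L :=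
  fun k => φ (H k j) * (1 + (-2 * (1 + i0)) * (if k = i then 1 else 0))

/-- The SIC vectors indexed by `[d] × [d]`. -/
def sicFam {K L : Type*} [Field K] [Field L] (φ : K →+* L) (i0 : L) {d : ℕ}
    (H : Matrix (Fin d) (Fin d) K) : Fin d × Fin d → Fin d → L :=
  fun m => sicVec φ i0 H m.1 m.2

theorem stmt_0 {K L : Type*} [Field K] [Field L]
    (hK2 : (2 : K) ≠ 0) (hKroot : ∀ a : K, a ^ 2 ≠ -1)
    (φ : K →+* L) (i0 : L) (hi0 : i0 ^ 2 = -1)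
    (conj : L →+* L) (hconj2 : ∀ x : L, conj (conj x) = x)
    (hconjφ : ∀ a : K, conj (φ a) = φ a) (hconji : conj i0 = -i0)
    (hLgen : ∀ x : L, ∃ a b : K, x = φ a + φ b * i0)
    {d : ℕ} (H : Matrix (Fin d) (Fin d) K)
    (hH1 : ∀ i j, H i j ^ 2 = 1)
    (hH2 : H.transpose * H = (d : K) • (1 : Matrix (Fin d) (Fin d) K))
    (hd8 : (d : K) = 8) :
    (∀ m : Fin d × Fin d, sesq conj (sicFam φ i0 H m) (sicFam φ i0 H m) = φ 12) ∧
    (∀ m n : Fin d × Fin d, m ≠ n →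
      sesq conj (sicFam φ i0 H m) (sicFam φ i0 H n) *
        sesq conj (sicFam φ i0 H n) (sicFam φ i0 H m) = φ 16) ∧
    ((∑ m : Fin d × Fin d,
        (Matrix.of fun k l : Fin d => sicFam φ i0 H m k * conj (sicFam φ i0 H m l) :
          Matrix (Fin d) (Fin d) L))
      = φ 96 • (1 : Matrix (Fin d) (Fin d) L)) ∧
    Submodule.span L (Set.range (sicFam φ i0 H)) = ⊤ := by
  -- make z and w = conj z opaque constants
  obtain ⟨z, hz⟩ : ∃ z : L, -2 * (1 + i0) = z := ⟨_, rfl⟩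
  have hzv : z = -2 * (1 + i0) := hz.symm
  obtain ⟨w, hwz⟩ : ∃ w : L, conj z = w := ⟨_, rfl⟩
  have hwv : w = -2 * (1 - i0) := by
    rw [← hwz, hzv, map_mul, map_neg, map_ofNat, map_add, map_one, hconji]
    ring
  -- φ maps numerals to numerals
  have hφ8 : φ 8 = 8 := map_ofNat φ 8
  have hφinj : Function.Injective φ := φ.injective
  have h8K : (8 : K) ≠ 0 := by
    have h : (8 : K) = 2 ^ 3 := by norm_num
    rw [h]
    exact pow_ne_zero _ hK2
  -- HᵀH entries
  have hHtH : ∀ j l, (∑ m, H m j * H m l) = 8 * (if j = l then 1 else 0) := by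
    intro j l
    have h : (H.transpose * H) j l = ((d : K) • (1 : Matrix (Fin d) (Fin d) K)) j l := by
      rw [hH2]
    simpa [Matrix.mul_apply, Matrix.transpose_apply, Matrix.smul_apply, Matrix.one_apply,
      hd8, smul_eq_mul] using h
  -- H Hᵀ = 8 • 1
  have hHHt : ∀ i k, (∑ j, H i j * H k j) = 8 * (if i = k then 1 else 0) := by
    have h1 : ((8 : K)⁻¹ • H.transpose) * H = 1 := by
      rw [Matrix.smul_mul, hH2, hd8, smul_smul, inv_mul_cancel₀ h8K, one_smul]
    have h2 : H * ((8 : K)⁻¹ • H.transpose) = 1 := mul_eq_one_comm.mp h1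
    have h3 : H * H.transpose = (8 : K) • 1 := by
      have h4 := congrArg (fun M => (8 : K) • M) h2
      simpa [Matrix.mul_smul, smul_smul, mul_inv_cancel₀ h8K] using h4
    intro i k
    have h : (H * H.transpose) i k = ((8 : K) • (1 : Matrix (Fin d) (Fin d) K)) i k := by
      rw [h3]
    simpa [Matrix.mul_apply, Matrix.transpose_apply, Matrix.smul_apply, Matrix.one_apply,
      smul_eq_mul] using h
  -- closed form for the sesquilinear products
  have key : ∀ i j k l : Fin d,
      sesq conj (sicVec φ i0 H i j) (sicVec φ i0 H k l) =
      φ 8 * (if j = l then 1 else 0) + w * φ (H i j * H i l)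
        + z * φ (H k j * H k l)
        + (if i = k then w * z * φ (H i j * H i l) else 0) := by
    intro i j k l
    unfold sesq sicVec
    simp only [hz]
    have expand : ∀ m : Fin d,
        conj (φ (H m j) * (1 + z * (if m = i then 1 else 0))) *
          (φ (H m l) * (1 + z * (if m = k then 1 else 0))) =
        φ (H m j * H m l)
          + (if m = i then w * φ (H m j * H m l) else 0)
          + (if m = k then z * φ (H m j * H m l) else 0)
          + (if m = i then (if i = k then w * z * φ (H m j * H m l) else 0) else 0) := by
      intro m
      by_cases h1 : m = i <;> by_cases h2 : m = k
      · have hik : i = k := h1.symm.trans h2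
        simp only [if_pos h1, if_pos h2, if_pos hik, mul_one, map_mul, map_add, map_one,
          hconjφ, hwz]
        ring
      · have hik : ¬ i = k := fun h => h2 (h1.trans h)
        simp only [if_pos h1, if_neg h2, if_neg hik, mul_one, mul_zero, add_zero,
          map_mul, map_add, map_one, hconjφ, hwz]
        ring
      · have hik : ¬ i = k := fun h => h1 (h2.trans h.symm)
        simp only [if_pos h2, if_neg h1, if_neg hik, mul_one, mul_zero, add_zero,
          map_mul, map_add, map_one, hconjφ, hwz]
        ring
      · simp only [if_neg h1, if_neg h2, mul_zero, add_zero, mul_one,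
          map_mul, map_add, map_one, hconjφ, hwz]
    calc (∑ m, conj (φ (H m j) * (1 + z * (if m = i then 1 else 0))) *
          (φ (H m l) * (1 + z * (if m = k then 1 else 0))))
        = ∑ m, (φ (H m j * H m l)
          + (if m = i then w * φ (H m j * H m l) else 0)
          + (if m = k then z * φ (H m j * H m l) else 0)
          + (if m = i then (if i = k then w * z * φ (H m j * H m l) else 0) else 0)) :=
          Finset.sum_congr rfl fun m _ => expand m
      _ = (∑ m, φ (H m j * H m l))
          + (∑ m, if m = i then w * φ (H m j * H m l) else 0)
          + (∑ m, if m = k then z * φ (H m j * H m l) else 0)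
          + (∑ m, if m = i then (if i = k then w * z * φ (H m j * H m l) else 0) else 0) := by
          rw [Finset.sum_add_distrib, Finset.sum_add_distrib, Finset.sum_add_distrib]
      _ = φ 8 * (if j = l then 1 else 0) + w * φ (H i j * H i l)
          + z * φ (H k j * H k l)
          + (if i = k then w * z * φ (H i j * H i l) else 0) := by
          have hS1 : (∑ m, φ (H m j * H m l)) = φ 8 * (if j = l then 1 else 0) := by
            rw [← map_sum, hHtH j l, map_mul, apply_ite φ, map_one, map_zero]
          rw [Finset.sum_ite_eq', Finset.sum_ite_eq', Finset.sum_ite_eq', hS1]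
          simp only [Finset.mem_univ, if_true]
  -- squares of φ of products of H entries
  have hsq : ∀ i j l : Fin d, (φ (H i j * H i l)) ^ 2 = 1 := by
    intro i j l
    rw [← map_pow, mul_pow, hH1, hH1, one_mul, map_one]
  refine ⟨?_, ?_, ?_, ?_⟩
  · -- part (a)
    rintro ⟨i, j⟩
    show sesq conj (sicVec φ i0 H i j) (sicVec φ i0 H i j) = φ 12
    rw [key i j i j]
    have h1 : φ (H i j * H i j) = 1 := by
      rw [← pow_two, hH1, map_one]
    simp only [eq_self_iff_true, if_true, h1, hφ8, mul_one]
    rw [show φ 12 = 12 from map_ofNat φ 12, hwv, hzv]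
    linear_combination (-4 : L) * hi0
  · -- part (b)
    rintro ⟨i, j⟩ ⟨k, l⟩ hmn
    show sesq conj (sicVec φ i0 H i j) (sicVec φ i0 H k l) *
        sesq conj (sicVec φ i0 H k l) (sicVec φ i0 H i j) = φ 16
    rw [key i j k l, key k l i j, show φ 16 = 16 from map_ofNat φ 16]
    have hcomm1 : φ (H k l * H k j) = φ (H k j * H k l) := by rw [mul_comm]
    have hcomm2 : φ (H i l * H i j) = φ (H i j * H i l) := by rw [mul_comm]
    rw [hcomm1, hcomm2]
    set a := φ (H i j * H i l) with ha
    set b := φ (H k j * H k l) with hb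
    have ha2 : a ^ 2 = 1 := hsq i j l
    have hb2 : b ^ 2 = 1 := hsq k j l
    by_cases hik : i = k
    · subst hik
      have hjl : ¬ j = l := by
        intro h; exact hmn (by rw [h])
      have hab : b = a := by rw [hb, ha, mul_comm]
      have hki : i = i := rfl
      simp only [eq_self_iff_true, if_true, if_neg hjl, if_neg (fun h : l = j => hjl h.symm), hab]
      rw [hwv, hzv]
      linear_combination (16 : L) * ha2 + (16 * a ^ 2 * (i0 ^ 2 - 1)) * hi0
    · simp only [if_neg hik, if_neg (fun h : k = i => hik h.symm)]
      by_cases hjl : j = l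
      · subst hjl
        have h1 : a = 1 := by rw [ha, ← pow_two, hH1, map_one]
        have h2 : b = 1 := by rw [hb, ← pow_two, hH1, map_one]
        simp only [eq_self_iff_true, if_true, h1, h2, hφ8]
        rw [hwv, hzv]; ring
      · simp only [if_neg hjl, if_neg (fun h : l = j => hjl h.symm), hφ8]
        rw [hwv, hzv]
        linear_combination (8 : L) * ha2 + (8 : L) * hb2
          + (8 * a * b - 4 * a ^ 2 - 4 * b ^ 2) * hi0
  · -- part (c)
    ext k l
    rw [Matrix.sum_apply]
    have hterm : ∀ m : Fin d × Fin d,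
        (Matrix.of fun k l : Fin d => sicFam φ i0 H m k * conj (sicFam φ i0 H m l)) k l =
        φ (H k m.2 * H l m.2) * ((1 + z * (if k = m.1 then 1 else 0)) *
          (1 + w * (if l = m.1 then 1 else 0))) := by
      rintro ⟨i, j⟩
      show sicVec φ i0 H i j k * conj (sicVec φ i0 H i j l) = _
      unfold sicVec
      simp only [hz]
      by_cases h1 : k = i <;> by_cases h2 : l = i
      · simp only [if_pos h1, if_pos h2, mul_one, map_mul, map_add, map_one, hconjφ, hwz]
        ring
      · simp only [if_pos h1, if_neg h2, mul_one, mul_zero, add_zero,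
          map_mul, map_add, map_one, hconjφ, hwz]
        ring
      · simp only [if_neg h1, if_pos h2, mul_one, mul_zero, add_zero,
          map_mul, map_add, map_one, hconjφ, hwz]
        ring
      · simp only [if_neg h1, if_neg h2, mul_zero, add_zero, mul_one,
          map_mul, map_add, map_one, hconjφ, hwz]
    rw [Finset.sum_congr rfl fun m _ => hterm m, Fintype.sum_prod_type]
    have hsumj : ∀ i : Fin d, (∑ j, φ (H k j * H l j) * ((1 + z * (if k = i then 1 else 0)) *
        (1 + w * (if l = i then 1 else 0)))) =
        (φ 8 * (if k = l then 1 else 0)) * ((1 + z * (if k = i then 1 else 0)) *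
        (1 + w * (if l = i then 1 else 0))) := by
      intro i
      rw [← Finset.sum_mul, ← map_sum, hHHt k l]
      simp [map_mul, apply_ite φ, hφ8]
    rw [Finset.sum_congr rfl fun i _ => hsumj i, ← Finset.mul_sum]
    have expand2 : ∀ i : Fin d,
        (1 + z * (if k = i then 1 else 0)) * (1 + w * (if l = i then 1 else 0)) =
        1 + (if k = i then z else 0) + (if l = i then w else 0)
          + (if k = i then (if k = l then z * w else 0) else 0) := by
      intro i
      by_cases h1 : k = i <;> by_cases h2 : l = i
      · have hkl : k = l := by rw [h1, h2]
        simp only [if_pos h1, if_pos h2, if_pos hkl, mul_one]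
        ring
      · have hkl : ¬ k = l := by rintro rfl; exact h2 h1
        simp only [if_pos h1, if_neg h2, if_neg hkl, mul_one, mul_zero, add_zero]
      · simp only [if_neg h1, if_pos h2, mul_one, mul_zero, add_zero]
        ring
      · simp only [if_neg h1, if_neg h2, mul_zero, add_zero]
        ring
    rw [Finset.sum_congr rfl fun i _ => expand2 i]
    rw [Finset.sum_add_distrib, Finset.sum_add_distrib, Finset.sum_add_distrib,
      Finset.sum_ite_eq, Finset.sum_ite_eq, Finset.sum_ite_eq]
    have hdL : ((d : ℕ) : L) = 8 := by
      rw [← map_natCast φ, hd8, hφ8]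
    rw [Finset.sum_const, Finset.card_univ, Fintype.card_fin, nsmul_eq_mul, mul_one, hdL]
    rw [Matrix.smul_apply, Matrix.one_apply, smul_eq_mul,
      show φ 96 = 96 from map_ofNat φ 96, hφ8]
    simp only [Finset.mem_univ, if_true]
    by_cases hkl : k = l
    · rw [if_pos hkl, if_pos hkl, hwv, hzv]
      linear_combination (-32 : L) * hi0
    · rw [if_neg hkl, if_neg hkl]
      ring
  · -- part (d)
    have h2L : (2 : L) ≠ 0 := by
      intro h
      apply hK2
      apply hφinj
      rw [map_ofNat, map_zero, h]
    have hz1 : (1 : L) + z ≠ 0 := by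
      intro h
      have h2i : (2 : L) * i0 = -1 := by rw [hzv] at h; linear_combination -h
      have hieq : i0 = φ (-(2⁻¹ : K)) := by
        rw [map_neg, map_inv₀, map_ofNat]
        field_simp
        linear_combination h2i
      apply hKroot (-(2⁻¹ : K))
      apply hφinj
      rw [map_pow, ← hieq, hi0, map_neg, map_one]
    have h8L : (8 : L) ≠ 0 := by
      intro h
      apply h8K
      apply hφinj
      rw [hφ8, map_zero, h]
    have hcoef : (8 : L) * (1 + z) ≠ 0 := mul_ne_zero h8L hz1
    rw [eq_top_iff]
    intro x _
    have hx : x = ∑ i, x i • fun j => if i = j then (1 : L) else 0 := pi_eq_sum_univ x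
    rw [hx]
    apply Submodule.sum_mem
    intro i _
    apply Submodule.smul_mem
    -- the standard basis vector e_i lies in the span
    have hsum : (∑ j, φ (H i j) • sicFam φ i0 H (i, j)) =
        ((8 : L) * (1 + z)) • fun k => if i = k then (1 : L) else 0 := by
      funext k
      rw [Finset.sum_apply]
      simp only [Pi.smul_apply, smul_eq_mul]
      have hterm : ∀ j, φ (H i j) * sicFam φ i0 H (i, j) k =
          φ (H i j * H k j) * (1 + z * (if k = i then 1 else 0)) := by
        intro j
        show φ (H i j) * (φ (H k j) * _) = _
        rw [map_mul, hz]; ring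
      rw [Finset.sum_congr rfl fun j _ => hterm j, ← Finset.sum_mul, ← map_sum, hHHt i k]
      by_cases hik : i = k
      · subst hik
        simp only [eq_self_iff_true, if_true, map_mul, hφ8, map_one, mul_one]
        try ring
      · simp [if_neg hik, if_neg (fun h : k = i => hik h.symm), map_mul, hφ8, apply_ite φ]
    have hei : (fun k => if i = k then (1 : L) else 0) =
        ((8 : L) * (1 + z))⁻¹ • ∑ j, φ (H i j) • sicFam φ i0 H (i, j) := by
      rw [hsum, smul_smul, inv_mul_cancel₀ hcoef, one_smul]
    rw [hei]
    apply Submodule.smul_mem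
    apply Submodule.sum_mem
    intro j _
    apply Submodule.smul_mem
    exact Submodule.subset_span ⟨(i, j), rfl⟩
end
end

section
/- Let d, H, and {x_{ij}} be as in the construction. Then for all (i,j) ≠ (k,l) in [d]×[d], the inner product (x_{ij},x_{kl}) equals 4·(−1)^{δ_{ik}}·(−1)^{δ_{jl}}·w, where w = +1 if H_{ij}H_{il} = −1 and H_{kj}H_{kl} = −1; w = −1 if H_{ij}H_{il} = +1 and H_{kj}H_{kl} = +1; w = +i if H_{ij}H_{il} = +1 and H_{kj}H_{kl} = −1; and w = −i if H_{ij}H_{il} = −1 and H_{kj}H_{kl} = +1. -/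
open scoped BigOperators

noncomputable section

open scoped Classical in
theorem stmt_1 {K L : Type*} [Field K] [Field L]
    (hK2 : (2 : K) ≠ 0) (hKroot : ∀ a : K, a ^ 2 ≠ -1)
    (φ : K →+* L) (i0 : L) (hi0 : i0 ^ 2 = -1)
    (conj : L →+* L) (hconj2 : ∀ x : L, conj (conj x) = x)
    (hconjφ : ∀ a : K, conj (φ a) = φ a) (hconji : conj i0 = -i0)
    (hLgen : ∀ x : L, ∃ a b : K, x = φ a + φ b * i0)
    {d : ℕ} (H : Matrix (Fin d) (Fin d) K)
    (hH1 : ∀ i j, H i j ^ 2 = 1)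
    (hH2 : H.transpose * H = (d : K) • (1 : Matrix (Fin d) (Fin d) K))
    (hd8 : (d : K) = 8) :
    ∀ m n : Fin d × Fin d, m ≠ n →
      sesq conj (sicFam φ i0 H m) (sicFam φ i0 H n) =
        4 * (if m.1 = n.1 then -1 else 1) * (if m.2 = n.2 then -1 else 1) *
          (if H m.1 m.2 * H m.1 n.2 = -1 then
            (if H n.1 m.2 * H n.1 n.2 = -1 then 1 else -i0)
          else
            (if H n.1 m.2 * H n.1 n.2 = -1 then i0 else -1)) := by
  have h1ne : (1 : K) ≠ -1 := fun h => hK2 (by linear_combination h)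
  rintro ⟨i, j⟩ ⟨k, l⟩ hmn
  have hcz : conj (-2 * (1 + i0)) = -2 * (1 - i0) := by
    rw [map_mul, map_add, map_one, hconji, map_neg, map_ofNat]; ring
  have key : ∀ t : Fin d, conj (φ (H t j) * (1 + -2 * (1 + i0) * (if t = i then 1 else 0))) *
      (φ (H t l) * (1 + -2 * (1 + i0) * (if t = k then 1 else 0))) =
      φ (H t j * H t l)
        + (if t = i then (-2 * (1 - i0)) * φ (H t j * H t l) else 0)
        + (if t = k then (-2 * (1 + i0)) * φ (H t j * H t l) else 0)
        + (if t = i then (if t = k then 8 * φ (H t j * H t l) else 0) else 0) := by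
    intro t
    simp only [map_mul, map_add, map_one, hcz, hconjφ, apply_ite conj, map_zero]
    split_ifs <;>
      first
        | ring1
        | linear_combination (-4 * (φ (H t j) * φ (H t l))) * hi0
  have hsum : ∑ t, φ (H t j * H t l) = if j = l then 8 else 0 := by
    rw [← map_sum]
    have h2 : ∑ t, H t j * H t l = (H.transpose * H) j l := by
      simp [Matrix.mul_apply, Matrix.transpose_apply]
    rw [h2, hH2]
    simp [Matrix.smul_apply, Matrix.one_apply, hd8, apply_ite φ, map_ofNat]
  have hmain : sesq conj (sicFam φ i0 H (i, j)) (sicFam φ i0 H (k, l)) =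
      (if j = l then (8 : L) else 0) + (-2 * (1 - i0)) * φ (H i j * H i l)
        + (-2 * (1 + i0)) * φ (H k j * H k l)
        + (if i = k then 8 * φ (H i j * H i l) else 0) := by
    simp only [sesq, sicFam, sicVec]
    rw [Finset.sum_congr rfl fun t _ => key t]
    simp only [Finset.sum_add_distrib, Finset.sum_ite_eq' Finset.univ, Finset.mem_univ,
      if_true, hsum]
  rw [hmain]
  have he : H i j * H i l = 1 ∨ H i j * H i l = -1 := by
    rw [← mul_self_eq_one_iff]; linear_combination (H i l) ^ 2 * hH1 i j + hH1 i l
  have hf : H k j * H k l = 1 ∨ H k j * H k l = -1 := by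
    rw [← mul_self_eq_one_iff]; linear_combination (H k l) ^ 2 * hH1 k j + hH1 k l
  by_cases hjl : j = l
  · subst hjl
    by_cases hik : i = k
    · exact absurd (by rw [hik]) hmn
    · have he1 : H i j * H i j = 1 := by linear_combination hH1 i j
      have hf1 : H k j * H k j = 1 := by linear_combination hH1 k j
      simp [he1, hf1, hik, h1ne, map_one]
      ring
  · by_cases hik : i = k
    · subst hik
      rcases he with he | he <;>
        simp [he, hjl, h1ne, map_one, map_neg] <;> ring
    · rcases he with he | he <;> rcases hf with hf | hf <;>
        simp [he, hf, hjl, hik, h1ne, map_one, map_neg] <;> ring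
end
end

section
/- Let d, H, and {x_{ij}} be as in the construction. Then (x_{ij}, x_{ij}) = 12·1_K for every (i,j) ∈ [d]×[d]. -/
open scoped BigOperators

noncomputable section

theorem stmt_2 {K L : Type*} [Field K] [Field L]
    (hK2 : (2 : K) ≠ 0) (hKroot : ∀ a : K, a ^ 2 ≠ -1)
    (φ : K →+* L) (i0 : L) (hi0 : i0 ^ 2 = -1)
    (conj : L →+* L) (hconj2 : ∀ x : L, conj (conj x) = x)
    (hconjφ : ∀ a : K, conj (φ a) = φ a) (hconji : conj i0 = -i0)
    (hLgen : ∀ x : L, ∃ a b : K, x = φ a + φ b * i0)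
    {d : ℕ} (H : Matrix (Fin d) (Fin d) K)
    (hH1 : ∀ i j, H i j ^ 2 = 1)
    (hH2 : H.transpose * H = (d : K) • (1 : Matrix (Fin d) (Fin d) K))
    (hd8 : (d : K) = 8) :
    ∀ i j : Fin d, sesq conj (sicVec φ i0 H i j) (sicVec φ i0 H i j) = φ 12 := by
  intro i j
  have hφ1 : ∀ k, φ (H k j) ^ 2 = 1 := fun k => by rw [← map_pow, hH1, map_one]
  have hterm : ∀ k : Fin d,
      conj (sicVec φ i0 H i j k) * sicVec φ i0 H i j k = if k = i then 5 else 1 := by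
    intro k
    by_cases hk : k = i
    · simp only [sicVec, hk, if_pos rfl, if_true, mul_one]
      have hc : conj (φ (H i j) * (1 + -2 * (1 + i0)))
          = φ (H i j) * (1 + -2 * (1 - i0)) := by
        rw [map_mul, hconjφ, map_add, map_one, map_mul, map_add, map_one, hconji,
          map_neg, map_ofNat]
        ring
      rw [hc]
      linear_combination (1 - 4 * i0 ^ 2) * hφ1 i - 4 * hi0
    · simp only [sicVec, if_neg hk, mul_zero, add_zero, mul_one, hconjφ]
      linear_combination hφ1 k
  unfold sesq
  rw [Finset.sum_congr rfl fun k _ => hterm k]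
  have : ∀ k : Fin d, (if k = i then (5:L) else 1) = 1 + if k = i then 4 else 0 := by
    intro k; split <;> norm_num
  rw [Finset.sum_congr rfl fun k _ => this k, Finset.sum_add_distrib,
    Finset.sum_const, Finset.sum_ite_eq' Finset.univ i (fun _ => (4:L))]
  simp only [Finset.mem_univ, if_pos, Finset.card_univ, Fintype.card_fin, smul_eq_mul, mul_one]
  have h12 : (12 : K) = 8 + 4 := by norm_num
  rw [h12, map_add, ← hd8, map_natCast, map_ofNat]
  simp [nsmul_eq_mul]
end
end

section
/- Let d, H, and {x_{ij}} be as in the construction. Then Σ_{(i,j)∈[d]×[d]} x_{ij}·x_{ij}* = 96·I, where I is the d×d identity matrix and 96 denotes 96·1_K. -/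
open scoped BigOperators

noncomputable section

theorem stmt_3 {K L : Type*} [Field K] [Field L]
    (hK2 : (2 : K) ≠ 0) (hKroot : ∀ a : K, a ^ 2 ≠ -1)
    (φ : K →+* L) (i0 : L) (hi0 : i0 ^ 2 = -1)
    (conj : L →+* L) (hconj2 : ∀ x : L, conj (conj x) = x)
    (hconjφ : ∀ a : K, conj (φ a) = φ a) (hconji : conj i0 = -i0)
    (hLgen : ∀ x : L, ∃ a b : K, x = φ a + φ b * i0)
    {d : ℕ} (H : Matrix (Fin d) (Fin d) K)
    (hH1 : ∀ i j, H i j ^ 2 = 1)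
    (hH2 : H.transpose * H = (d : K) • (1 : Matrix (Fin d) (Fin d) K))
    (hd8 : (d : K) = 8) :
    (∑ m : Fin d × Fin d,
        (Matrix.of fun k l : Fin d => sicFam φ i0 H m k * conj (sicFam φ i0 H m l) :
          Matrix (Fin d) (Fin d) L))
      = φ 96 • (1 : Matrix (Fin d) (Fin d) L) := by

  classical
  have h8 : (8:K) ≠ 0 := by
    have h : (8:K) = 2^3 := by norm_num
    rw [h]; exact pow_ne_zero _ hK2
  have hHHt : H * H.transpose = (8:K) • 1 := by
    have h1 : ((8:K)⁻¹ • H.transpose) * H = 1 := by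
      rw [Matrix.smul_mul, hH2, hd8, smul_smul, inv_mul_cancel₀ h8, one_smul]
    have h2 := mul_eq_one_comm.mp h1
    calc H * H.transpose = (8:K) • (H * ((8:K)⁻¹ • H.transpose)) := by
          rw [Matrix.mul_smul, smul_smul, mul_inv_cancel₀ h8, one_smul]
      _ = (8:K) • 1 := by rw [h2]
  have key : ∀ k l : Fin d, (∑ j, φ (H k j) * φ (H l j)) = if k = l then φ 8 else 0 := by
    intro k l
    have h := congrArg (fun M : Matrix (Fin d) (Fin d) K => φ (M k l)) hHHt
    simpa [Matrix.mul_apply, Matrix.transpose_apply, Matrix.smul_apply, Matrix.one_apply,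
      map_sum, map_mul, apply_ite φ, mul_ite, mul_one, mul_zero] using h
  have hcz : conj (-2 * (1 + i0)) = -2 * (1 - i0) := by
    have : conj (-2 * (1 + i0)) = conj (-2) * (conj 1 + conj i0) := by
      rw [map_mul, map_add]
    rw [this, hconji, map_one]
    have h2 : conj (-2 : L) = -2 := by
      rw [map_neg, map_ofNat]
    rw [h2]; ring
  have hz5 : (1 + (-2 * (1 + i0))) * (1 + (-2 * (1 - i0))) = 5 := by
    have : (1 + (-2 * (1 + i0))) * (1 + (-2 * (1 - i0))) = 1 - 4 * i0 ^ 2 := by ring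
    rw [this, hi0]; norm_num
  have hdL : ((d : ℕ) : L) = φ 8 := by
    rw [← map_natCast φ d, hd8]
  ext k l
  simp only [Matrix.sum_apply, Matrix.of_apply, sicFam, sicVec]
  rw [Fintype.sum_prod_type]
  have hterm : ∀ i : Fin d,
      (∑ j, (φ (H k j) * (1 + -2 * (1 + i0) * (if k = i then 1 else 0))) *
        (conj (φ (H l j) * (1 + -2 * (1 + i0) * (if l = i then 1 else 0)))))
      = (if k = l then φ 8 else 0) *
        ((1 + -2 * (1 + i0) * (if k = i then 1 else 0)) *
         (1 + -2 * (1 - i0) * (if l = i then 1 else 0))) := by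
    intro i
    rw [← key k l, Finset.sum_mul]
    refine Finset.sum_congr rfl fun j _ => ?_
    rw [map_mul, hconjφ, map_add, map_mul, map_one, hcz, apply_ite conj, map_one, map_zero]
    ring
  rw [Finset.sum_congr rfl fun i _ => hterm i]
  by_cases hkl : k = l
  · subst hkl
    simp only [eq_self_iff_true, if_true]
    rw [← Finset.mul_sum]
    have hsum : (∑ i : Fin d,
        ((1 + -2 * (1 + i0) * (if k = i then 1 else 0)) *
         (1 + -2 * (1 - i0) * (if k = i then 1 else 0)))) = φ 8 + 4 := by
      have heach : ∀ i : Fin d,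
          ((1 + -2 * (1 + i0) * (if k = i then 1 else 0)) *
           (1 + -2 * (1 - i0) * (if k = i then 1 else 0)))
          = 1 + (if k = i then (4:L) else 0) := by
        intro i
        by_cases h : k = i
        · simp only [if_pos h]
          rw [mul_one, mul_one, hz5]; norm_num
        · simp only [if_neg h]; ring
      rw [Finset.sum_congr rfl fun i _ => heach i, Finset.sum_add_distrib,
        Finset.sum_const, Finset.sum_ite_eq, if_pos (Finset.mem_univ k)]
      simp [hdL]
    rw [hsum, Matrix.smul_apply, Matrix.one_apply_eq, smul_eq_mul, mul_one]
    rw [show (4:L) = φ 4 from (map_ofNat φ 4).symm, ← map_add, ← map_mul]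
    norm_num
  · simp only [if_neg hkl, zero_mul, Finset.sum_const_zero]
    rw [Matrix.smul_apply, Matrix.one_apply_ne hkl, smul_eq_mul, mul_zero]
end
end

section
/- Let d, H, and {x_{ij}} be as in the construction. Then for every fixed i ∈ [d], the d vectors x_{i1}, …, x_{id} form a basis of L^d; in particular, span{x_{ij} : (i,j) ∈ [d]×[d]} = L^d. -/
open scoped BigOperators

noncomputable section

theorem stmt_4 {K L : Type*} [Field K] [Field L]
    (hK2 : (2 : K) ≠ 0) (hKroot : ∀ a : K, a ^ 2 ≠ -1)
    (φ : K →+* L) (i0 : L) (hi0 : i0 ^ 2 = -1)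
    (conj : L →+* L) (hconj2 : ∀ x : L, conj (conj x) = x)
    (hconjφ : ∀ a : K, conj (φ a) = φ a) (hconji : conj i0 = -i0)
    (hLgen : ∀ x : L, ∃ a b : K, x = φ a + φ b * i0)
    {d : ℕ} (H : Matrix (Fin d) (Fin d) K)
    (hH1 : ∀ i j, H i j ^ 2 = 1)
    (hH2 : H.transpose * H = (d : K) • (1 : Matrix (Fin d) (Fin d) K))
    (hd8 : (d : K) = 8) :
    (∀ i : Fin d,
      LinearIndependent L (fun j => sicVec φ i0 H i j) ∧
      Submodule.span L (Set.range fun j => sicVec φ i0 H i j) = ⊤) ∧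
    Submodule.span L (Set.range (sicFam φ i0 H)) = ⊤ := by
  -- basic nonvanishing facts
  have h8K : (8 : K) ≠ 0 := by
    have : (2 : K) ^ 3 ≠ 0 := pow_ne_zero 3 hK2
    simpa [show (2:K)^3 = 8 by norm_num] using this
  -- det H ≠ 0
  have hdetH : H.det ≠ 0 := by
    intro h0
    have h1 : (H.transpose * H).det = H.det * H.det := by
      rw [Matrix.det_mul, Matrix.det_transpose]
    have h2 : ((d : K) • (1 : Matrix (Fin d) (Fin d) K)).det = (d : K) ^ d := by
      rw [Matrix.det_smul, Matrix.det_one, mul_one, Fintype.card_fin]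
    have h3 : H.det * H.det = (8 : K) ^ d := by
      rw [← h1, hH2, h2, hd8]
    rw [h0, mul_zero] at h3
    exact pow_ne_zero d h8K h3.symm
  -- 1 + z ≠ 0
  have hz : (1 : L) + (-2 * (1 + i0)) ≠ 0 := by
    intro h
    have h2L : (2 : L) ≠ 0 := by
      intro h2
      apply hK2
      apply φ.injective
      rw [map_ofNat, map_zero, h2]
    have hi : i0 = -(2 : L)⁻¹ := by
      field_simp at h ⊢
      linear_combination -h
    have hsq : ((2 : L)⁻¹) ^ 2 = -1 := by
      rw [← hi0, hi]; ring
    apply hKroot ((2 : K)⁻¹)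
    apply φ.injective
    rw [map_pow, map_inv₀, map_ofNat, map_neg, map_one, hsq]
  -- the matrix of the vectors
  have key : ∀ i : Fin d,
      LinearIndependent L (fun j => sicVec φ i0 H i j) ∧
      Submodule.span L (Set.range fun j => sicVec φ i0 H i j) = ⊤ := by
    intro i
    set M : Matrix (Fin d) (Fin d) L :=
      Matrix.of (fun k j => sicVec φ i0 H i j k) with hM
    have hMfact : M = Matrix.diagonal
        (fun k => if k = i then 1 + (-2 * (1 + i0)) else 1) * φ.mapMatrix H := by
      ext k j
      rw [Matrix.diagonal_mul]
      simp only [hM, Matrix.of_apply, sicVec, RingHom.mapMatrix_apply, Matrix.map_apply]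
      split_ifs <;> ring
    have hdet : M.det ≠ 0 := by
      rw [hMfact, Matrix.det_mul, Matrix.det_diagonal, ← RingHom.map_det]
      apply mul_ne_zero
      · rw [Finset.prod_ite_eq' Finset.univ i
          (fun _ => (1 : L) + (-2 * (1 + i0)))]
        simpa using hz
      · intro h0
        apply hdetH
        apply φ.injective
        rw [h0, map_zero]
    have hUnit : IsUnit M := by
      rw [Matrix.isUnit_iff_isUnit_det]
      exact isUnit_iff_ne_zero.2 hdet
    have hcols : (fun j => sicVec φ i0 H i j) = fun j => M.transpose j := by
      funext j; rfl
    constructor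
    · rw [hcols]
      exact Matrix.linearIndependent_cols_iff_isUnit.2 hUnit
    · rw [hcols]
      rw [show (Set.range fun j => M.transpose j) = Set.range M.col from rfl,
        ← Matrix.range_mulVecLin]
      rw [LinearMap.range_eq_top]
      exact Matrix.mulVec_surjective_iff_isUnit.2 hUnit
  refine ⟨key, ?_⟩
  -- d ≠ 0
  have hd0 : 0 < d := by
    rcases Nat.eq_zero_or_pos d with h | h
    · exfalso; apply h8K; rw [← hd8, h, Nat.cast_zero]
    · exact h
  have i : Fin d := ⟨0, hd0⟩
  rw [eq_top_iff, ← (key i).2]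
  apply Submodule.span_mono
  rintro x ⟨j, rfl⟩
  exact ⟨(i, j), rfl⟩
end
end

section
/- Suppose there exists a Hadamard matrix of order d (a d×d matrix over ℤ with entries ±1 satisfying HᵀH = d·I), and let p be a prime with p ≡ 3 mod 4 such that p divides d−8. Then there exists a (12,16,96)-SIC consisting of d² vectors in F_{p²}^d. -/
open scoped BigOperators

noncomputable section

/-- A `(12,16,96)`-SIC of `d²` vectors in `F_{p²}^d = (GaloisField p 2)^d`, where
conjugation is the Frobenius `x ↦ x ^ p`: the vectors have norm `12`, pairwise
products of cross inner products equal `16`, they resolve `96` times the identity,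
and they span the space. -/
def IsSIC (p : ℕ) [Fact p.Prime] (d : ℕ)
    (x : Fin (d ^ 2) → Fin d → GaloisField p 2) : Prop :=
  (∀ m, (∑ k, x m k ^ p * x m k) = 12) ∧
  (∀ m n, m ≠ n →
    (∑ k, x m k ^ p * x n k) * (∑ k, x n k ^ p * x m k) = 16) ∧
  (∀ k l, (∑ m, x m k * x m l ^ p) = if k = l then 96 else 0) ∧
  Submodule.span (GaloisField p 2) (Set.range x) = ⊤

theorem sic_aux (p : ℕ) [Fact p.Prime] (hp4 : p % 4 = 3)
    (F : Type) [Field F] [CharP F p]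
    (d : ℕ) (H : Matrix (Fin d) (Fin d) ℤ)
    (hH1 : ∀ i j, H i j = 1 ∨ H i j = -1)
    (hH2 : H.transpose * H = (d : ℤ) • (1 : Matrix (Fin d) (Fin d) ℤ))
    (hpd : (p : ℤ) ∣ (d : ℤ) - 8)
    (i : F) (hi : i ^ 2 = -1) :
    ∃ x : Fin (d ^ 2) → Fin d → F,
      (∀ m, (∑ k, x m k ^ p * x m k) = 12) ∧
      (∀ m n, m ≠ n →
        (∑ k, x m k ^ p * x n k) * (∑ k, x n k ^ p * x m k) = 16) ∧
      (∀ k l, (∑ m, x m k * x m l ^ p) = if k = l then 96 else 0) ∧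
      Submodule.span F (Set.range x) = ⊤ := by
  classical
  have hp : p.Prime := Fact.out
  have hple : 2 ≤ p := hp.two_le
  have hp2 : p ≠ 2 := by rintro rfl; omega
  have hpK : (p : F) = 0 := CharP.cast_eq_zero F p
  have hnz : ∀ n : ℕ, ¬ p ∣ n → (n : F) ≠ 0 := by
    intro n hn h
    exact hn ((CharP.cast_eq_zero_iff F p n).mp h)
  have hpdvd2 : ¬ p ∣ 2 := by
    intro h; exact hp2 ((Nat.prime_dvd_prime_iff_eq hp Nat.prime_two).mp h)
  have hpdvd8 : ¬ p ∣ 8 := by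
    intro h
    have : p ∣ 2 := hp.dvd_of_dvd_pow (n := 3) (by norm_num at h ⊢; exact h)
    exact hpdvd2 this
  have h8F : (8 : F) ≠ 0 := by
    have := hnz 8 hpdvd8; simpa using this
  have h40F : (40 : F) ≠ 0 := by
    have hpdvd40 : ¬ p ∣ 40 := by
      intro h
      have h40 : (40 : ℕ) = 8 * 5 := by norm_num
      rw [h40] at h
      rcases (Nat.Prime.dvd_mul hp).mp h with h' | h'
      · exact hpdvd8 h'
      · have : p = 5 := (Nat.prime_dvd_prime_iff_eq hp (by norm_num)).mp h'
        omega
    have := hnz 40 hpdvd40; simpa using this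
  have hd0 : d ≠ 0 := by
    rintro rfl
    have h8 : (p : ℤ) ∣ 8 := by
      have := (dvd_neg (α := ℤ)).mpr hpd
      simpa using this
    exact hpdvd8 (by exact_mod_cast h8)
  have hd8 : (d : F) = 8 := by
    obtain ⟨t, ht⟩ := hpd
    have h := congrArg (fun z : ℤ => (z : F)) ht
    push_cast [hpK] at h
    linear_combination h
  -- Frobenius facts
  have hintp : ∀ n : ℤ, ((n : F)) ^ p = n := by
    intro n
    rw [← frobenius_def, map_intCast]
  have hip : i ^ p = -i := by
    have h4 : i ^ 4 = 1 := by linear_combination (i ^ 2 - 1) * hi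
    have hp3 : p = 4 * (p / 4) + 3 := by omega
    calc i ^ p = (i ^ 4) ^ (p / 4) * i ^ 3 := by rw [← pow_mul, ← pow_add, ← hp3]
    _ = -i := by rw [h4, one_pow]; linear_combination i * hi
  -- the quadratic scalars
  set A : F := -1 + 2 * i with hA
  set B : F := -1 - 2 * i with hB
  have hab : A * B = 5 := by rw [hA, hB]; linear_combination (-4 : F) * hi
  have hsum : A + B = -2 := by rw [hA, hB]; ring
  have hABpow : A ^ p = B := by
    rw [hA, hB, add_pow_char]
    have h1 : ((-1 : F)) ^ p = -1 := by
      have := hintp (-1); simpa using this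
    have h2 : ((2 : F) * i) ^ p = 2 * (-i) := by
      rw [mul_pow, hip]
      have : ((2 : F)) ^ p = 2 := by have := hintp 2; simpa using this
      rw [this]
    rw [h1, h2]; ring
  -- Hadamard entries over F
  set g : Fin d → Fin d → F := fun k j => ((H k j : ℤ) : F) with hg
  have hg1 : ∀ k j, g k j = 1 ∨ g k j = -1 := by
    intro k j
    rcases hH1 k j with h | h
    · left; simp [hg, h]
    · right; simp [hg, h]
  have hgne : ∀ k j, g k j ≠ 0 := by
    intro k j; rcases hg1 k j with h | h <;> rw [h] <;> norm_num
  have hgsq : ∀ k j, g k j * g k j = 1 := by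
    intro k j; rcases hg1 k j with h | h <;> rw [h] <;> ring
  have hgp : ∀ k j, (g k j) ^ p = g k j := fun k j => hintp _
  have hABp : ∀ c j, (A * g c j) ^ p = B * g c j := by
    intro c j; rw [mul_pow, hABpow, hgp]
  have horthZ : ∀ j j', (∑ k, H k j * H k j') = if j = j' then (d : ℤ) else 0 := by
    intro j j'
    have h := congrFun (congrFun hH2 j) j'
    simpa [Matrix.mul_apply, Matrix.transpose_apply, Matrix.one_apply, mul_ite] using h
  have horth : ∀ j j', (∑ k, g k j * g k j') = if j = j' then (8 : F) else 0 := by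
    intro j j'
    have h := congrArg (fun z : ℤ => (z : F)) (horthZ j j')
    push_cast at h
    rw [hd8] at h
    exact h
  set M : Matrix (Fin d) (Fin d) F := Matrix.of g with hM
  have hMtM : M.transpose * M = (8 : F) • 1 := by
    ext j j'
    simp only [Matrix.mul_apply, Matrix.transpose_apply, Matrix.smul_apply,
      Matrix.one_apply, hM, Matrix.of_apply, smul_eq_mul, mul_ite, mul_one, mul_zero]
    exact horth j j'
  have hMM1 : ((8 : F)⁻¹ • M.transpose) * M = 1 := by
    rw [Matrix.smul_mul, hMtM, smul_smul, inv_mul_cancel₀ h8F, one_smul]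
  have hMM2 : M * ((8 : F)⁻¹ • M.transpose) = 1 := mul_eq_one_comm.mp hMM1
  have hMMt : M * M.transpose = (8 : F) • 1 := by
    calc M * M.transpose = (8 : F) • (M * ((8 : F)⁻¹ • M.transpose)) := by
          rw [Matrix.mul_smul, smul_smul, mul_inv_cancel₀ h8F, one_smul]
    _ = (8 : F) • 1 := by rw [hMM2]
  have hrow : ∀ k l, (∑ j, g k j * g l j) = if k = l then (8 : F) else 0 := by
    intro k l
    have h := congrFun (congrFun hMMt k) l
    simpa [Matrix.mul_apply, Matrix.transpose_apply, Matrix.smul_apply,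
      Matrix.one_apply, hM, mul_ite] using h
  -- the vectors
  set v : Fin d → Fin d → Fin d → F :=
    fun j c k => if k = c then A * g c j else g k j with hv
  have hvp : ∀ j c k, (v j c k) ^ p = if k = c then B * g c j else g k j := by
    intro j c k
    by_cases hk : k = c
    · simp only [hv, hk, if_pos rfl]; exact hABp c j
    · simp only [hv, if_neg hk]; exact hgp k j
  have hsip : ∀ j c j' c', (∑ k, (v j c k) ^ p * (v j' c' k)) =
      (if j = j' then (8 : F) else 0) +
      (if c = c' then 4 * (g c j * g c j')
       else (B - 1) * (g c j * g c j') + (A - 1) * (g c' j * g c' j')) := by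
    intro j c j' c'
    rcases eq_or_ne c c' with rfl | hcc
    · have hpt : ∀ k, (v j c k) ^ p * (v j' c k) =
          g k j * g k j' + (if k = c then 4 * (g c j * g c j') else 0) := by
        intro k
        rw [hvp]
        by_cases hk : k = c
        · subst hk
          simp [hv]
          linear_combination (g k j * g k j') * hab
        · simp [hv, hk]
      rw [Finset.sum_congr rfl (fun k _ => hpt k), Finset.sum_add_distrib,
        Finset.sum_ite_eq' Finset.univ c (fun _ => 4 * (g c j * g c j')), horth]
      simp
    · have hpt : ∀ k, (v j c k) ^ p * (v j' c' k) =
          g k j * g k j' + (if k = c then (B - 1) * (g c j * g c j') else 0)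
            + (if k = c' then (A - 1) * (g c' j * g c' j') else 0) := by
        intro k
        rw [hvp]
        by_cases hk : k = c
        · subst hk
          simp [hv, hcc]
          ring
        · by_cases hk' : k = c'
          · subst hk'
            simp [hv, hk, (Ne.symm hcc)]
            ring
          · simp [hv, hk, hk']
      rw [Finset.sum_congr rfl (fun k _ => hpt k), Finset.sum_add_distrib,
        Finset.sum_add_distrib,
        Finset.sum_ite_eq' Finset.univ c (fun _ => (B - 1) * (g c j * g c j')),
        Finset.sum_ite_eq' Finset.univ c' (fun _ => (A - 1) * (g c' j * g c' j')),
        horth]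
      simp [hcc]
      ring
  -- norm condition
  have hnorm : ∀ j c, (∑ k, (v j c k) ^ p * (v j c k)) = 12 := by
    intro j c
    rw [hsip]
    simp [hgsq]
    norm_num
  -- cross condition
  have hcross : ∀ j c j' c', (j ≠ j' ∨ c ≠ c') →
      (∑ k, (v j c k) ^ p * (v j' c' k)) * (∑ k, (v j' c' k) ^ p * (v j c k)) = 16 := by
    intro j c j' c' hne
    rw [hsip, hsip]
    rcases eq_or_ne j j' with rfl | hj
    · have hc : c ≠ c' := hne.resolve_left (by simp)
      rw [if_pos rfl, if_neg hc, if_neg (Ne.symm hc)]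
      rw [hgsq, hgsq]
      linear_combination (A + B + 10) * hsum
    · rw [if_neg hj, if_neg (Ne.symm hj)]
      rcases eq_or_ne c c' with rfl | hc
      · rw [if_pos rfl, if_pos rfl]
        linear_combination (16 * (g c j' * g c j')) * hgsq c j + 16 * hgsq c j'
      · rw [if_neg hc, if_neg (Ne.symm hc)]
        linear_combination
          ((A - 1) * (B - 1) * (g c j' * g c j')) * hgsq c j
          + ((A - 1) * (B - 1)) * hgsq c j'
          + ((A - 1) * (B - 1) * (g c' j' * g c' j')) * hgsq c' j
          + ((A - 1) * (B - 1)) * hgsq c' j'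
          + (2 - 2 * (g c j * g c j' * (g c' j * g c' j'))) * hab
          + ((A + B - 4) * (g c j * g c j' * (g c' j * g c' j')) - 2) * hsum
  -- resolution condition
  have hres : ∀ k l, (∑ j, ∑ c, v j c k * (v j c l) ^ p) = if k = l then (96 : F) else 0 := by
    intro k l
    rcases eq_or_ne k l with rfl | hkl
    · have hpt : ∀ j c, v j c k * (v j c k) ^ p = 1 + (if k = c then (4 : F) else 0) := by
        intro j c
        rw [hvp]
        by_cases hk : k = c
        · subst hk
          simp [hv]
          linear_combination (A * B) * hgsq k j + hab
        · simp [hv, hk, hgsq]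
      have hinner : ∀ j, (∑ c, v j c k * (v j c k) ^ p) = 12 := by
        intro j
        rw [Finset.sum_congr rfl (fun c _ => hpt j c), Finset.sum_add_distrib,
          Finset.sum_ite_eq Finset.univ k (fun _ => (4 : F)), Finset.sum_const,
          Finset.card_univ, Fintype.card_fin]
        simp [hd8]
        norm_num
      rw [Finset.sum_congr rfl (fun j _ => hinner j), Finset.sum_const,
        Finset.card_univ, Fintype.card_fin, if_pos rfl]
      rw [nsmul_eq_mul, hd8]
      norm_num
    · have hpt : ∀ j c, v j c k * (v j c l) ^ p =
          g k j * g l j + (if k = c then (A - 1) * (g k j * g l j) else 0)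
            + (if l = c then (B - 1) * (g k j * g l j) else 0) := by
        intro j c
        rw [hvp]
        by_cases hk : k = c
        · subst hk
          simp [hv, Ne.symm hkl, hkl]
          ring
        · by_cases hl : l = c
          · subst hl
            simp [hv, hk, hkl]
            ring
          · simp [hv, hk, hl]
      have hinner : ∀ j, (∑ c, v j c k * (v j c l) ^ p) = (6 + A + B) * (g k j * g l j) := by
        intro j
        rw [Finset.sum_congr rfl (fun c _ => hpt j c), Finset.sum_add_distrib,
          Finset.sum_add_distrib,
          Finset.sum_ite_eq Finset.univ k (fun _ => (A - 1) * (g k j * g l j)),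
          Finset.sum_ite_eq Finset.univ l (fun _ => (B - 1) * (g k j * g l j)),
          Finset.sum_const, Finset.card_univ, Fintype.card_fin]
        rw [nsmul_eq_mul, hd8]
        simp
        ring
      rw [Finset.sum_congr rfl (fun j _ => hinner j), ← Finset.mul_sum, hrow,
        if_neg hkl, if_neg hkl, mul_zero]
  -- nonvanishing scalars
  have h7A : (7 + A) ≠ 0 := by
    intro h
    apply h40F
    have hprod : (7 + A) * (7 + B) = 40 := by linear_combination hab + 7 * hsum
    rw [← hprod, h, zero_mul]
  have hA1 : A - 1 ≠ 0 := by
    intro h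
    apply h8F
    have hprod : (A - 1) * (B - 1) = 8 := by linear_combination hab - hsum
    rw [← hprod, h, zero_mul]
  -- the indexed family
  have hdd : d ^ 2 = d * d := by ring
  set e : Fin (d ^ 2) ≃ Fin d × Fin d := (finCongr hdd).trans finProdFinEquiv.symm with he
  set x : Fin (d ^ 2) → Fin d → F := fun m => v (e m).1 (e m).2 with hx
  have hxv : ∀ j c, x (e.symm (j, c)) = v j c := by
    intro j c
    simp [hx]
  refine ⟨x, ?_, ?_, ?_, ?_⟩
  · intro m
    exact hnorm (e m).1 (e m).2
  · intro m n hmn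
    have hne : (e m).1 ≠ (e n).1 ∨ (e m).2 ≠ (e n).2 := by
      by_contra hcon
      push_neg at hcon
      exact hmn (e.injective (Prod.ext hcon.1 hcon.2))
    exact hcross (e m).1 (e m).2 (e n).1 (e n).2 hne
  · intro k l
    have hse : (∑ m, x m k * (x m l) ^ p)
        = ∑ j, ∑ c, v j c k * (v j c l) ^ p := by
      rw [← Fintype.sum_prod_type (fun q : Fin d × Fin d => v q.1 q.2 k * (v q.1 q.2 l) ^ p)]
      exact (Equiv.sum_comp e (fun q : Fin d × Fin d => v q.1 q.2 k * (v q.1 q.2 l) ^ p)).symm ▸ rfl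
    rw [hse]
    exact hres k l
  · -- spanning
    have hd1 : 0 < d := Nat.pos_of_ne_zero hd0
    let j0 : Fin d := ⟨0, hd1⟩
    have hvmem : ∀ j c, v j c ∈ Submodule.span F (Set.range x) :=
      fun j c => Submodule.subset_span ⟨e.symm (j, c), hxv j c⟩
    have hcol : ∀ j, (fun k => g k j) ∈ Submodule.span F (Set.range x) := by
      intro j
      have hs : (∑ c, v j c) ∈ Submodule.span F (Set.range x) :=
        Submodule.sum_mem _ (fun c _ => hvmem j c)
      have hef : (∑ c, v j c) = fun k => (7 + A) * g k j := by
        funext k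
        rw [Finset.sum_apply]
        have hpt : ∀ c, v j c k = g k j + (if k = c then (A - 1) * g k j else 0) := by
          intro c
          by_cases hk : k = c
          · subst hk; simp [hv]; ring
          · simp [hv, hk]
        rw [Finset.sum_congr rfl (fun c _ => hpt c), Finset.sum_add_distrib,
          Finset.sum_ite_eq Finset.univ k (fun _ => (A - 1) * g k j),
          Finset.sum_const, Finset.card_univ, Fintype.card_fin]
        rw [nsmul_eq_mul, hd8]
        simp
        ring
      have heq : (fun k => g k j) = (7 + A)⁻¹ • (∑ c, v j c) := by
        rw [hef]
        funext k
        simp only [Pi.smul_apply, smul_eq_mul]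
        rw [← mul_assoc, inv_mul_cancel₀ h7A, one_mul]
      rw [heq]
      exact Submodule.smul_mem _ _ hs
    have hbasis : ∀ c, (fun k => if c = k then (1 : F) else 0) ∈
        Submodule.span F (Set.range x) := by
      intro c
      have hdiff : (v j0 c - fun k => g k j0) ∈ Submodule.span F (Set.range x) :=
        Submodule.sub_mem _ (hvmem j0 c) (hcol j0)
      have hcg : (A - 1) * g c j0 ≠ 0 := mul_ne_zero hA1 (hgne c j0)
      have hef : (v j0 c - fun k => g k j0)
          = ((A - 1) * g c j0) • (fun k => if c = k then (1 : F) else 0) := by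
        funext k
        simp only [Pi.sub_apply, Pi.smul_apply, smul_eq_mul]
        by_cases hk : k = c
        · subst hk; simp [hv]; ring
        · simp [hv, hk, Ne.symm hk]
      have heq : (fun k => if c = k then (1 : F) else 0)
          = ((A - 1) * g c j0)⁻¹ • (v j0 c - fun k => g k j0) := by
        rw [hef, smul_smul, inv_mul_cancel₀ hcg, one_smul]
      rw [heq]
      exact Submodule.smul_mem _ _ hdiff
    rw [Submodule.eq_top_iff']
    intro w
    rw [pi_eq_sum_univ w]
    exact Submodule.sum_mem _ (fun c _ => Submodule.smul_mem _ _ (hbasis c))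

theorem stmt_5 (d : ℕ) (H : Matrix (Fin d) (Fin d) ℤ)
    (hH1 : ∀ i j, H i j = 1 ∨ H i j = -1)
    (hH2 : H.transpose * H = (d : ℤ) • (1 : Matrix (Fin d) (Fin d) ℤ))
    (p : ℕ) [Fact p.Prime] (hp4 : p % 4 = 3)
    (hpd : (p : ℤ) ∣ (d : ℤ) - 8) :
    ∃ x : Fin (d ^ 2) → Fin d → GaloisField p 2, IsSIC p d x := by
  have hp : p.Prime := Fact.out
  haveI : Fintype (GaloisField p 2) := Fintype.ofFinite _
  have hcard : Fintype.card (GaloisField p 2) = p ^ 2 := by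
    rw [← Nat.card_eq_fintype_card]; exact GaloisField.card p 2 (by norm_num)
  have hsq : IsSquare (-1 : GaloisField p 2) := by
    rw [FiniteField.isSquare_neg_one_iff, hcard]
    rw [Nat.pow_mod, hp4]
    norm_num
  obtain ⟨i, hi⟩ := hsq
  obtain ⟨x, h1, h2, h3, h4⟩ := sic_aux p hp4 (GaloisField p 2) d H hH1 hH2 hpd i
    (by rw [pow_two]; exact hi.symm)
  exact ⟨x, h1, h2, h3, h4⟩
end
end

section
/- Let H and H' be modular Hadamard matrices in K^{d×d}, let {x_{ij}} and {x'_{ij}} be the corresponding SICs in L^d given by the construction, and let H̃ and H̃' be the associated matrices indexed by [d]×[d] with H̃_{(i,j),(k,l)} = H_{kj}·H_{il} and H̃'_{(i,j),(k,l)} = H'_{kj}·H'_{il}. If a permutation π of [d]×[d] induces a weak equivalence from the tuple {x_{ij}} to the tuple {x'_{ij}}, then π induces a strong equivalence from H̃ to H̃'. -/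
open scoped BigOperators

noncomputable section

/-- `(π, σ)` induces a weak equivalence from the matrix `A` to `A'`. -/
def MatWeakEquiv {R : Type*} [CommRing R] {X : Type*} (π σ : Equiv.Perm X)
    (A A' : Matrix X X R) : Prop :=
  ∃ ε ε' : X → R, (∀ i, ε i = 1 ∨ ε i = -1) ∧ (∀ i, ε' i = 1 ∨ ε' i = -1) ∧
    ∀ i j, A' (π i) (σ j) = ε i * ε' j * A i j

/-- `π` induces a strong equivalence from the matrix `A` to `A'`. -/
def MatStrongEquiv {R : Type*} [CommRing R] {X : Type*} (π : Equiv.Perm X)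
    (A A' : Matrix X X R) : Prop :=
  ∃ ε : X → R, (∀ i, ε i = 1 ∨ ε i = -1) ∧
    ∀ i j, A' (π i) (π j) = ε i * ε j * A i j

/-- `π` induces a weak equivalence from the tuple `y` to the tuple `y'`:
there are an invertible linear map `U` preserving the sesquilinear form, scalars `c m`
with `conj (c m) * c m` constant, and a field automorphism `γ` of `L` commuting with
conjugation, such that `y' (π m) = c m • γ (U (y m))` (with `γ` acting entrywise). -/
def SICWeakEquiv {L : Type*} [Field L] (conj : L →+* L) {d : ℕ} {X : Type*}
    (π : Equiv.Perm X) (y y' : X → Fin d → L) : Prop :=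
  ∃ (U : (Fin d → L) ≃ₗ[L] (Fin d → L)) (c : X → L) (cc : L) (γ : L ≃+* L),
    (∀ v w : Fin d → L, sesq conj (U v) (U w) = sesq conj v w) ∧
    (∀ m, conj (c m) * c m = cc) ∧
    (∀ a : L, γ (conj a) = conj (γ a)) ∧
    (∀ m, y' (π m) = fun k => c m * γ (U (y m) k))

/-- `π` induces a strong equivalence from the tuple `y` to the tuple `y'`
(as in `SICWeakEquiv`, but with `γ` the identity). -/
def SICStrongEquiv {L : Type*} [Field L] (conj : L →+* L) {d : ℕ} {X : Type*}
    (π : Equiv.Perm X) (y y' : X → Fin d → L) : Prop :=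
  ∃ (U : (Fin d → L) ≃ₗ[L] (Fin d → L)) (c : X → L) (cc : L),
    (∀ v w : Fin d → L, sesq conj (U v) (U w) = sesq conj v w) ∧
    (∀ m, conj (c m) * c m = cc) ∧
    (∀ m, y' (π m) = fun k => c m * U (y m) k)

/-- The matrix `H̃` indexed by `[d] × [d]` with `H̃ (i,j) (k,l) = H k j * H i l`. -/
def htilde {K : Type*} [Field K] {d : ℕ} (H : Matrix (Fin d) (Fin d) K) :
    Matrix (Fin d × Fin d) (Fin d × Fin d) K :=
  Matrix.of fun m n : Fin d × Fin d => H n.1 m.2 * H m.1 n.2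

lemma sesq_gram {K L : Type*} [Field K] [Field L]
    (φ : K →+* L) (i0 : L) (hi0 : i0 ^ 2 = -1)
    (conj : L →+* L) (hconjφ : ∀ a : K, conj (φ a) = φ a) (hconji : conj i0 = -i0)
    {d : ℕ} (H : Matrix (Fin d) (Fin d) K)
    (hH2 : H.transpose * H = (d : K) • (1 : Matrix (Fin d) (Fin d) K))
    (hd8 : (d : K) = 8) (i j k l : Fin d) :
    sesq conj (sicVec φ i0 H i j) (sicVec φ i0 H k l) =
      φ ((if j = l then (8:K) else 0) + (if i = k then 8 * (H i j * H i l) else 0)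
          - 2 * (H k j * H k l + H i j * H i l))
        + φ (2 * (H i j * H i l - H k j * H k l)) * i0 := by
  classical
  have hsum : ∀ k' : Fin d,
      conj (sicVec φ i0 H i j k') * (sicVec φ i0 H k l k') =
        φ (H k' j * H k' l)
        + (if k' = i then φ (H i j * H i l) * (-2 * (1 - i0)) else 0)
        + (if k' = k then φ (H k j * H k l) * (-2 * (1 + i0)) else 0)
        + (if i = k then (if k' = i then 8 * φ (H i j * H i l) else 0) else 0) := by
    intro k'
    simp only [sicVec, map_mul, map_add, map_one, map_neg, map_ofNat, apply_ite conj,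
      map_zero, hconjφ, hconji]
    by_cases h1 : k' = i <;> by_cases h2 : k' = k
    · subst h1; subst h2
      simp only [if_pos rfl, ite_true, if_true]
      linear_combination (-4 * φ (H k' j) * φ (H k' l)) * hi0
    · subst h1
      simp only [if_pos rfl, if_neg h2, ite_true, if_true]
      ring
    · subst h2
      have hik : ¬ i = k' := fun h => h1 h.symm
      simp only [if_pos rfl, if_neg h1, if_neg hik, ite_true, if_true]
      ring
    · simp only [if_neg h1, if_neg h2, ite_self]
      ring
  rw [sesq]
  rw [Finset.sum_congr rfl (fun k' _ => hsum k')]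
  rw [Finset.sum_add_distrib, Finset.sum_add_distrib, Finset.sum_add_distrib]
  have e1 : ∑ k', φ (H k' j * H k' l) = φ (if j = l then (8:K) else 0) := by
    rw [← map_sum]
    congr 1
    have h2' := congrFun (congrFun hH2 j) l
    simp only [Matrix.mul_apply, Matrix.transpose_apply, Matrix.smul_apply, Matrix.one_apply,
      smul_eq_mul, hd8] at h2'
    simpa using h2'
  have e2 : (∑ k', if k' = i then φ (H i j * H i l) * (-2 * (1 - i0)) else 0)
      = φ (H i j * H i l) * (-2 * (1 - i0)) := by
    simp [Finset.sum_ite_eq']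
  have e3 : (∑ k', if k' = k then φ (H k j * H k l) * (-2 * (1 + i0)) else 0)
      = φ (H k j * H k l) * (-2 * (1 + i0)) := by
    simp [Finset.sum_ite_eq']
  have e4 : (∑ k' : Fin d, if i = k then (if k' = i then 8 * φ (H i j * H i l) else 0) else 0)
      = if i = k then 8 * φ (H i j * H i l) else 0 := by
    by_cases hik : i = k <;> simp [hik, Finset.sum_ite_eq']
  rw [e1, e2, e3, e4]
  simp only [map_add, map_sub, map_mul, map_ofNat, apply_ite φ, map_zero]
  split_ifs <;> ring

lemma gk {K : Type*} [Field K] {d : ℕ} (H : Matrix (Fin d) (Fin d) K)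
    (hH1 : ∀ i j, H i j ^ 2 = 1) (i j k l : Fin d) (hmn : ¬(i = k ∧ j = l)) :
    ((if j = l then (8:K) else 0) + (if i = k then 8 * (H i j * H i l) else 0)
        - 2 * (H k j * H k l + H i j * H i l)) * (2 * (H i j * H i l - H k j * H k l)) = 0 ∧
    ((if j = l then (8:K) else 0) + (if i = k then 8 * (H i j * H i l) else 0)
        - 2 * (H k j * H k l + H i j * H i l)) ^ 2 - (2 * (H i j * H i l - H k j * H k l)) ^ 2
      = 16 * (H i j * H i l * (H k j * H k l)) ∧
    ((if j = l then (8:K) else 0) + (if i = k then 8 * (H i j * H i l) else 0)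
        - 2 * (H k j * H k l + H i j * H i l)) ^ 2 + (2 * (H i j * H i l - H k j * H k l)) ^ 2
      = 16 := by
  by_cases hik : i = k <;> by_cases hjl : j = l
  · exact absurd ⟨hik, hjl⟩ hmn
  · subst hik
    simp only [eq_self_iff_true, if_true, if_neg hjl]
    refine ⟨by ring, by ring, ?_⟩
    linear_combination (16 * H i l ^ 2) * hH1 i j + 16 * hH1 i l
  · subst hjl
    simp only [eq_self_iff_true, if_true, if_neg hik]
    refine ⟨?_, ?_, ?_⟩
    · linear_combination (2 * (8 - 2 * (H k j ^ 2 + H i j ^ 2))) * hH1 i j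
        - (2 * (8 - 2 * (H k j ^ 2 + H i j ^ 2))) * hH1 k j
    · linear_combination (-32 : K) * hH1 i j + (-32 : K) * hH1 k j
    · linear_combination (8 * (H i j ^ 2 - 3)) * hH1 i j + (8 * (H k j ^ 2 - 3)) * hH1 k j
  · simp only [if_neg hik, if_neg hjl]
    refine ⟨?_, by ring, ?_⟩
    · linear_combination (-4 * H i l ^ 2) * hH1 i j + (-4 : K) * hH1 i l
        + (4 * H k l ^ 2) * hH1 k j + (4 : K) * hH1 k l
    · linear_combination (8 * H i l ^ 2) * hH1 i j + (8 : K) * hH1 i l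
        + (8 * H k l ^ 2) * hH1 k j + (8 : K) * hH1 k l

lemma gram_sq {K L : Type*} [Field K] [Field L]
    (φ : K →+* L) (i0 : L) (hi0 : i0 ^ 2 = -1)
    (conj : L →+* L) (hconjφ : ∀ a : K, conj (φ a) = φ a) (hconji : conj i0 = -i0)
    {d : ℕ} (H : Matrix (Fin d) (Fin d) K) (hH1 : ∀ i j, H i j ^ 2 = 1)
    (hH2 : H.transpose * H = (d : K) • (1 : Matrix (Fin d) (Fin d) K))
    (hd8 : (d : K) = 8) (i j k l : Fin d) (hmn : ¬(i = k ∧ j = l)) :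
    (sesq conj (sicVec φ i0 H i j) (sicVec φ i0 H k l)) ^ 2
      = 16 * φ (H i j * H i l * (H k j * H k l)) := by
  rw [sesq_gram φ i0 hi0 conj hconjφ hconji H hH2 hd8 i j k l]
  obtain ⟨hgh, hg2, -⟩ := gk H hH1 i j k l hmn
  have hGH : φ ((if j = l then (8:K) else 0) + (if i = k then 8 * (H i j * H i l) else 0)
      - 2 * (H k j * H k l + H i j * H i l)) * φ (2 * (H i j * H i l - H k j * H k l)) = 0 := by
    rw [← map_mul, hgh, map_zero]
  have h2 : φ (((if j = l then (8:K) else 0) + (if i = k then 8 * (H i j * H i l) else 0)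
      - 2 * (H k j * H k l + H i j * H i l)) ^ 2) - φ ((2 * (H i j * H i l - H k j * H k l)) ^ 2)
      = 16 * φ (H i j * H i l * (H k j * H k l)) := by
    rw [← map_sub, hg2, map_mul, map_ofNat]
  rw [← h2, map_pow, map_pow]
  linear_combination (φ (2 * (H i j * H i l - H k j * H k l))) ^ 2 * hi0 + (2 * i0) * hGH

lemma gram_norm {K L : Type*} [Field K] [Field L]
    (φ : K →+* L) (i0 : L) (hi0 : i0 ^ 2 = -1)
    (conj : L →+* L) (hconjφ : ∀ a : K, conj (φ a) = φ a) (hconji : conj i0 = -i0)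
    {d : ℕ} (H : Matrix (Fin d) (Fin d) K) (hH1 : ∀ i j, H i j ^ 2 = 1)
    (hH2 : H.transpose * H = (d : K) • (1 : Matrix (Fin d) (Fin d) K))
    (hd8 : (d : K) = 8) (i j k l : Fin d) (hmn : ¬(i = k ∧ j = l)) :
    conj (sesq conj (sicVec φ i0 H i j) (sicVec φ i0 H k l))
      * (sesq conj (sicVec φ i0 H i j) (sicVec φ i0 H k l)) = 16 := by
  rw [sesq_gram φ i0 hi0 conj hconjφ hconji H hH2 hd8 i j k l]
  obtain ⟨-, -, hn⟩ := gk H hH1 i j k l hmn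
  have h16 : φ (((if j = l then (8:K) else 0) + (if i = k then 8 * (H i j * H i l) else 0)
      - 2 * (H k j * H k l + H i j * H i l))) ^ 2
      + φ ((2 * (H i j * H i l - H k j * H k l))) ^ 2 = 16 := by
    rw [← map_pow, ← map_pow, ← map_add, hn, map_ofNat]
  simp only [conj.map_add, conj.map_mul, hconjφ, hconji]
  linear_combination h16 - (φ (2 * (H i j * H i l - H k j * H k l))) ^ 2 * hi0

-- auxiliary lemmas for the main theorem

lemma htilde_apply {K : Type*} [Field K] {d : ℕ} (H : Matrix (Fin d) (Fin d) K)
    (m n : Fin d × Fin d) : htilde H m n = H n.1 m.2 * H m.1 n.2 := rfl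

lemma htilde_symm {K : Type*} [Field K] {d : ℕ} (H : Matrix (Fin d) (Fin d) K)
    (m n : Fin d × Fin d) : htilde H m n = htilde H n m := by
  rw [htilde_apply, htilde_apply, mul_comm]

lemma htilde_sq {K : Type*} [Field K] {d : ℕ} (H : Matrix (Fin d) (Fin d) K)
    (hH1 : ∀ i j, H i j ^ 2 = 1) (m n : Fin d × Fin d) :
    htilde H m n ^ 2 = 1 := by
  rw [htilde_apply, mul_pow, hH1, hH1, one_mul]

lemma htilde_diag {K : Type*} [Field K] {d : ℕ} (H : Matrix (Fin d) (Fin d) K)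
    (hH1 : ∀ i j, H i j ^ 2 = 1) (m : Fin d × Fin d) :
    htilde H m m = 1 := by
  have := hH1 m.1 m.2
  rw [htilde_apply]
  linear_combination this

lemma abprod_eq {K : Type*} [Field K] {d : ℕ} (H : Matrix (Fin d) (Fin d) K)
    (hH1 : ∀ i j, H i j ^ 2 = 1) (m n p : Fin d × Fin d) :
    (H m.1 m.2 * H m.1 n.2 * (H n.1 m.2 * H n.1 n.2))
      * (H n.1 n.2 * H n.1 p.2 * (H p.1 n.2 * H p.1 p.2))
      * (H p.1 p.2 * H p.1 m.2 * (H m.1 p.2 * H m.1 m.2))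
      = htilde H m n * htilde H n p * htilde H p m := by
  rw [htilde_apply, htilde_apply, htilde_apply]
  linear_combination
    (H n.1 n.2 ^ 2 * H p.1 p.2 ^ 2 *
      (H m.1 n.2 * H n.1 m.2 * H n.1 p.2 * H p.1 n.2 * H p.1 m.2 * H m.1 p.2)) * hH1 m.1 m.2
    + (H p.1 p.2 ^ 2 *
      (H m.1 n.2 * H n.1 m.2 * H n.1 p.2 * H p.1 n.2 * H p.1 m.2 * H m.1 p.2)) * hH1 n.1 n.2
    + (H m.1 n.2 * H n.1 m.2 * H n.1 p.2 * H p.1 n.2 * H p.1 m.2 * H m.1 p.2) * hH1 p.1 p.2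

theorem stmt_9 {K L : Type*} [Field K] [Field L]
    (hK2 : (2 : K) ≠ 0) (hKroot : ∀ a : K, a ^ 2 ≠ -1)
    (φ : K →+* L) (i0 : L) (hi0 : i0 ^ 2 = -1)
    (conj : L →+* L) (hconj2 : ∀ x : L, conj (conj x) = x)
    (hconjφ : ∀ a : K, conj (φ a) = φ a) (hconji : conj i0 = -i0)
    (hLgen : ∀ x : L, ∃ a b : K, x = φ a + φ b * i0)
    {d : ℕ} (H : Matrix (Fin d) (Fin d) K)
    (hH1 : ∀ i j, H i j ^ 2 = 1)
    (hH2 : H.transpose * H = (d : K) • (1 : Matrix (Fin d) (Fin d) K))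
    (hd8 : (d : K) = 8)
    (H' : Matrix (Fin d) (Fin d) K)
    (hH1' : ∀ i j, H' i j ^ 2 = 1)
    (hH2' : H'.transpose * H' = (d : K) • (1 : Matrix (Fin d) (Fin d) K))
    (π : Equiv.Perm (Fin d × Fin d))
    (hweak : SICWeakEquiv conj π (sicFam φ i0 H) (sicFam φ i0 H')) :
    MatStrongEquiv π (htilde H) (htilde H') := by
  classical
  -- trivial case `d ≤ 1`
  by_cases hd : d ≤ 1
  · have hsub : Subsingleton (Fin d) := by
      rcases Nat.lt_or_ge d 1 with h | h
      · interval_cases d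
        · exact Fin.isEmpty.instSubsingleton
      · have : d = 1 := le_antisymm hd h
        subst this; infer_instance
    refine ⟨fun _ => 1, fun _ => Or.inl rfl, fun m n => ?_⟩
    have h1 : ∀ (M : Matrix (Fin d) (Fin d) K), (∀ i j, M i j ^ 2 = 1) →
        ∀ a b : Fin d × Fin d, htilde M a b = 1 := by
      intro M hM a b
      have e1 : b.1 = a.1 := Subsingleton.elim _ _
      have e2 : b.2 = a.2 := Subsingleton.elim _ _
      have e3 : a.2 = a.1 := Subsingleton.elim _ _
      rw [htilde_apply, e1, e2, e3]
      have := hM a.1 a.1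
      linear_combination this
    rw [h1 H hH1 m n, h1 H' hH1' (π m) (π n)]
    ring
  push_neg at hd
  have hd2 : 2 ≤ d := hd
  obtain ⟨U, c, cc, γ, hU, hc, hγ, hmap⟩ := hweak
  have hφinj : Function.Injective φ := φ.injective
  -- the Gram matrices transform by `conj (c m) * c n * γ ∘ ·`
  have hrel : ∀ m n : Fin d × Fin d,
      sesq conj (sicFam φ i0 H' (π m)) (sicFam φ i0 H' (π n))
        = conj (c m) * c n * γ (sesq conj (sicFam φ i0 H m) (sicFam φ i0 H n)) := by
    intro m n
    rw [← hU (sicFam φ i0 H m) (sicFam φ i0 H n)]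
    rw [hmap m, hmap n]
    simp only [sesq]
    rw [map_sum γ, Finset.mul_sum]
    refine Finset.sum_congr rfl fun k _ => ?_
    rw [conj.map_mul, map_mul γ, ← hγ]
    ring
  -- nonvanishing constants
  have h2L : (2 : L) ≠ 0 := by
    intro h
    apply hK2
    apply hφinj
    rw [map_ofNat, map_zero, h]
  have h16L : (16 : L) ≠ 0 := by
    intro h
    have : (2 : L) ^ 4 = 0 := by rw [← h]; norm_num
    exact h2L (pow_eq_zero_iff (by norm_num)|>.mp this)
  have h4096L : (4096 : L) ≠ 0 := by
    intro h
    have : (2 : L) ^ 12 = 0 := by rw [← h]; norm_num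
    exact h2L (pow_eq_zero_iff (by norm_num)|>.mp this)
  -- cc * cc = 1
  have hne : ∀ m n : Fin d × Fin d, m ≠ n → ¬(m.1 = n.1 ∧ m.2 = n.2) := by
    intro m n h hc'
    exact h (Prod.ext hc'.1 hc'.2)
  have hπne : ∀ m n : Fin d × Fin d, m ≠ n → ¬((π m).1 = (π n).1 ∧ (π m).2 = (π n).2) :=
    fun m n h => hne _ _ (fun e => h (π.injective e))
  have hnorm : ∀ m n : Fin d × Fin d, m ≠ n →
      conj (sesq conj (sicFam φ i0 H m) (sicFam φ i0 H n))
        * sesq conj (sicFam φ i0 H m) (sicFam φ i0 H n) = 16 := by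
    intro m n h
    exact gram_norm φ i0 hi0 conj hconjφ hconji H hH1 hH2 hd8 m.1 m.2 n.1 n.2 (hne m n h)
  have hnorm' : ∀ m n : Fin d × Fin d, m ≠ n →
      conj (sesq conj (sicFam φ i0 H' m) (sicFam φ i0 H' n))
        * sesq conj (sicFam φ i0 H' m) (sicFam φ i0 H' n) = 16 := by
    intro m n h
    exact gram_norm φ i0 hi0 conj hconjφ hconji H' hH1' hH2' hd8 m.1 m.2 n.1 n.2 (hne m n h)
  have hcc : cc * cc = 1 := by
    set m0 : Fin d × Fin d := (⟨0, by omega⟩, ⟨0, by omega⟩)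
    set n1 : Fin d × Fin d := (⟨1, by omega⟩, ⟨0, by omega⟩)
    have hmn : m0 ≠ n1 := by
      intro h
      have : (0 : ℕ) = 1 := congrArg (fun x => (x.1 : ℕ)) h
      omega
    have e := hrel m0 n1
    have e2 : (16 : L) = (conj (c m0) * c m0) * (conj (c n1) * c n1)
        * γ (conj (sesq conj (sicFam φ i0 H m0) (sicFam φ i0 H n1))
            * sesq conj (sicFam φ i0 H m0) (sicFam φ i0 H n1)) := by
      conv_lhs => rw [← hnorm' (π m0) (π n1) (fun h => hmn (π.injective h))]
      rw [e, conj.map_mul, conj.map_mul, hconj2, ← hγ, map_mul γ]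
      ring
    rw [hnorm m0 n1 hmn, hc m0, hc n1, map_ofNat] at e2
    have h16 : (16 : L) * (cc * cc) = 16 * 1 := by linear_combination -e2
    exact mul_left_cancel₀ h16L h16
  -- squares of Gram entries
  have hsq : ∀ m n : Fin d × Fin d, m ≠ n →
      (sesq conj (sicFam φ i0 H m) (sicFam φ i0 H n)) ^ 2
        = 16 * φ (H m.1 m.2 * H m.1 n.2 * (H n.1 m.2 * H n.1 n.2)) := by
    intro m n h
    exact gram_sq φ i0 hi0 conj hconjφ hconji H hH1 hH2 hd8 m.1 m.2 n.1 n.2 (hne m n h)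
  have hsq' : ∀ m n : Fin d × Fin d, m ≠ n →
      (sesq conj (sicFam φ i0 H' m) (sicFam φ i0 H' n)) ^ 2
        = 16 * φ (H' m.1 m.2 * H' m.1 n.2 * (H' n.1 m.2 * H' n.1 n.2)) := by
    intro m n h
    exact gram_sq φ i0 hi0 conj hconjφ hconji H' hH1' hH2' hd8 m.1 m.2 n.1 n.2 (hne m n h)
  -- triple product invariance
  have triple : ∀ m n p : Fin d × Fin d, m ≠ n → n ≠ p → p ≠ m →
      htilde H' (π m) (π n) * htilde H' (π n) (π p) * htilde H' (π p) (π m)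
        = htilde H m n * htilde H n p * htilde H p m := by
    intro m n p hmn hnp hpm
    have hP : sesq conj (sicFam φ i0 H' (π m)) (sicFam φ i0 H' (π n))
        * sesq conj (sicFam φ i0 H' (π n)) (sicFam φ i0 H' (π p))
        * sesq conj (sicFam φ i0 H' (π p)) (sicFam φ i0 H' (π m))
        = (conj (c m) * c m) * (conj (c n) * c n) * (conj (c p) * c p)
          * γ (sesq conj (sicFam φ i0 H m) (sicFam φ i0 H n)
            * sesq conj (sicFam φ i0 H n) (sicFam φ i0 H p)
            * sesq conj (sicFam φ i0 H p) (sicFam φ i0 H m)) := by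
      rw [hrel m n, hrel n p, hrel p m, map_mul γ, map_mul γ]
      ring
    have hL : (sesq conj (sicFam φ i0 H' (π m)) (sicFam φ i0 H' (π n))
        * sesq conj (sicFam φ i0 H' (π n)) (sicFam φ i0 H' (π p))
        * sesq conj (sicFam φ i0 H' (π p)) (sicFam φ i0 H' (π m))) ^ 2
        = 4096 * φ (htilde H' (π m) (π n) * htilde H' (π n) (π p) * htilde H' (π p) (π m)) := by
      have hπmn : π m ≠ π n := fun h => hmn (π.injective h)
      have hπnp : π n ≠ π p := fun h => hnp (π.injective h)
      have hπpm : π p ≠ π m := fun h => hpm (π.injective h)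
      rw [mul_pow, mul_pow, hsq' _ _ hπmn, hsq' _ _ hπnp, hsq' _ _ hπpm,
        ← abprod_eq H' hH1' (π m) (π n) (π p)]
      simp only [map_mul]
      ring
    have hR : (sesq conj (sicFam φ i0 H m) (sicFam φ i0 H n)
        * sesq conj (sicFam φ i0 H n) (sicFam φ i0 H p)
        * sesq conj (sicFam φ i0 H p) (sicFam φ i0 H m)) ^ 2
        = 4096 * φ (htilde H m n * htilde H n p * htilde H p m) := by
      rw [mul_pow, mul_pow, hsq _ _ hmn, hsq _ _ hnp, hsq _ _ hpm,
        ← abprod_eq H hH1 m n p]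
      simp only [map_mul]
      ring
    have hP2 : (sesq conj (sicFam φ i0 H' (π m)) (sicFam φ i0 H' (π n))
        * sesq conj (sicFam φ i0 H' (π n)) (sicFam φ i0 H' (π p))
        * sesq conj (sicFam φ i0 H' (π p)) (sicFam φ i0 H' (π m))) ^ 2
        = γ ((sesq conj (sicFam φ i0 H m) (sicFam φ i0 H n)
            * sesq conj (sicFam φ i0 H n) (sicFam φ i0 H p)
            * sesq conj (sicFam φ i0 H p) (sicFam φ i0 H m)) ^ 2) := by
      rw [hP, hc m, hc n, hc p, mul_pow, map_pow γ]
      rw [show (cc * cc * cc) ^ 2 = 1 by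
        linear_combination ((cc * cc) ^ 2 + cc * cc + 1) * hcc]
      rw [one_mul]
    rw [hL, hR] at hP2
    -- the K-quantity is ±1, hence fixed by γ
    have hT1 : φ (htilde H m n * htilde H n p * htilde H p m) = 1
        ∨ φ (htilde H m n * htilde H n p * htilde H p m) = -1 := by
      have : (htilde H m n * htilde H n p * htilde H p m)
          * (htilde H m n * htilde H n p * htilde H p m) = 1 := by
        have a1 := htilde_sq H hH1 m n
        have a2 := htilde_sq H hH1 n p
        have a3 := htilde_sq H hH1 p m
        linear_combination (htilde H n p ^ 2 * htilde H p m ^ 2) * a1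
          + (htilde H p m ^ 2) * a2 + a3
      have : φ (htilde H m n * htilde H n p * htilde H p m)
          * φ (htilde H m n * htilde H n p * htilde H p m) = 1 := by
        rw [← map_mul, this, map_one]
      exact mul_self_eq_one_iff.mp this
    have hγT : γ (4096 * φ (htilde H m n * htilde H n p * htilde H p m))
        = 4096 * φ (htilde H m n * htilde H n p * htilde H p m) := by
      rw [map_mul γ, map_ofNat]
      rcases hT1 with h | h
      · rw [h, map_one]
      · rw [h, map_neg, map_one]
    rw [hγT] at hP2
    have := mul_left_cancel₀ h4096L hP2
    exact hφinj this
  -- construct the signs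
  set m0 : Fin d × Fin d := (⟨0, by omega⟩, ⟨0, by omega⟩) with hm0
  refine ⟨fun m => htilde H' (π m) (π m0) * htilde H m m0, ?_, ?_⟩
  · intro m
    apply mul_self_eq_one_iff.mp
    have a1 := htilde_sq H' hH1' (π m) (π m0)
    have a2 := htilde_sq H hH1 m m0
    show (htilde H' (π m) (π m0) * htilde H m m0) * (htilde H' (π m) (π m0) * htilde H m m0) = 1
    linear_combination (htilde H m m0 ^ 2) * a1 + a2
  · intro m n
    show htilde H' (π m) (π n)
      = (htilde H' (π m) (π m0) * htilde H m m0) * (htilde H' (π n) (π m0) * htilde H n m0)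
        * htilde H m n
    by_cases hmn : m = n
    · subst hmn
      have D1 := htilde_diag H' hH1' (π m)
      have D2 := htilde_diag H hH1 m
      have a1 := htilde_sq H' hH1' (π m) (π m0)
      have a2 := htilde_sq H hH1 m m0
      linear_combination D1 - (htilde H' (π m) (π m0) ^ 2 * htilde H m m0 ^ 2) * D2
        - (htilde H m m0 ^ 2) * a1 - a2
    by_cases hm : m = m0
    · rw [hm]
      have D1 := htilde_diag H' hH1' (π m0)
      have D2 := htilde_diag H hH1 m0
      have hs1 := htilde_symm H' (π m0) (π n)
      have hs2 := htilde_symm H m0 n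
      have a := htilde_sq H hH1 n m0
      rw [hs1, hs2, D1, D2]
      linear_combination (- htilde H' (π n) (π m0)) * a
    by_cases hn : n = m0
    · rw [hn]
      have D1 := htilde_diag H' hH1' (π m0)
      have D2 := htilde_diag H hH1 m0
      rw [D1, D2]
      have a := htilde_sq H hH1 m m0
      linear_combination (- htilde H' (π m) (π m0)) * a
    · have htr := triple m n m0 hmn (fun h => hn h) (fun h => hm h.symm)
      have hs1 := htilde_symm H' (π m0) (π m)
      have hs2 := htilde_symm H m0 m
      rw [hs1, hs2] at htr
      have hx' := htilde_sq H' hH1' (π n) (π m0)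
      have hy' := htilde_sq H' hH1' (π m) (π m0)
      linear_combination (htilde H' (π n) (π m0) * htilde H' (π m) (π m0)) * htr
        - (htilde H' (π m) (π n) * htilde H' (π n) (π m0) ^ 2) * hy'
        - (htilde H' (π m) (π n)) * hx'
end
end

section
/- Let H be a modular Hadamard matrix in K^{d×d}, let {x_{ij}} be the corresponding SIC in L^d given by the construction, and let H̃ be the matrix indexed by [d]×[d] with H̃_{(i,j),(k,l)} = H_{kj}·H_{il}. With ι : S_d × S_d → S_{[d]×[d]} the embedding ι(π,σ)(i,j) = (π(i),σ(j)), the following chain of subgroup inclusions holds: ι(Aut_w(H)) ≤ Aut_s({x_{ij}}) ≤ Aut_w({x_{ij}}) ≤ Aut_s(H̃). -/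
open scoped BigOperators

noncomputable section

section
variable {K L : Type*} [Field K] [Field L] (φ : K →+* L) (i0 : L)
    (conj : L →+* L) {d : ℕ} (H : Matrix (Fin d) (Fin d) K)

lemma gram_eval (hi0 : i0 ^ 2 = -1)
    (hconjφ : ∀ a : K, conj (φ a) = φ a) (hconji : conj i0 = -i0)
    (hH2 : H.transpose * H = (d : K) • (1 : Matrix (Fin d) (Fin d) K))
    (hd8 : (d : K) = 8) (m n : Fin d × Fin d) :
    sesq conj (sicFam φ i0 H m) (sicFam φ i0 H n) =
      (if m.2 = n.2 then (8:L) else 0)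
      + (if m.1 = n.1 then (8:L) else 0) * (φ (H m.1 m.2) * φ (H m.1 n.2))
      + (-2*(1 - i0)) * (φ (H m.1 m.2) * φ (H m.1 n.2))
      + (-2*(1 + i0)) * (φ (H n.1 m.2) * φ (H n.1 n.2)) := by
  have key : ∀ k, conj (sicFam φ i0 H m k) * sicFam φ i0 H n k =
      φ (H k m.2) * φ (H k n.2)
      + (if k = m.1 then (-2*(1 - i0)) * (φ (H m.1 m.2) * φ (H m.1 n.2)) else 0)
      + (if k = n.1 then (-2*(1 + i0)) * (φ (H n.1 m.2) * φ (H n.1 n.2)) else 0)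
      + (if k = m.1 then (if k = n.1 then (8:L) * (φ (H m.1 m.2) * φ (H m.1 n.2)) else 0) else 0) := by
    intro k
    simp only [sicFam, sicVec, map_mul, map_add, map_one, map_neg, map_ofNat,
      hconjφ, apply_ite conj, map_zero, hconji]
    by_cases h1 : k = m.1 <;> by_cases h2 : k = n.1
    · subst h1
      rw [h2]
      simp only [eq_self_iff_true, if_true, if_pos rfl]
      linear_combination (-(φ (H n.1 m.2) * φ (H n.1 n.2) * 4)) * hi0
    · subst h1
      simp only [eq_self_iff_true, if_true, if_pos rfl, if_neg h2]
      ring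
    · subst h2
      simp only [eq_self_iff_true, if_true, if_pos rfl, if_neg h1]
      ring
    · simp only [if_neg h1, if_neg h2]
      ring
  unfold sesq
  rw [Finset.sum_congr rfl fun k _ => key k]
  rw [Finset.sum_add_distrib, Finset.sum_add_distrib, Finset.sum_add_distrib]
  have s1 : ∑ k, φ (H k m.2) * φ (H k n.2) = (if m.2 = n.2 then (8:L) else 0) := by
    have : ∑ k, φ (H k m.2) * φ (H k n.2) = φ ((H.transpose * H) m.2 n.2) := by
      rw [Matrix.mul_apply]
      simp [Matrix.transpose_apply, map_sum, map_mul]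
    rw [this, hH2]
    simp only [Matrix.smul_apply, Matrix.one_apply, smul_eq_mul]
    by_cases h : m.2 = n.2 <;> simp [h, hd8, map_ofNat]
  have s2 : ∑ k, (if k = m.1 then (-2*(1 - i0)) * (φ (H m.1 m.2) * φ (H m.1 n.2)) else 0)
      = (-2*(1 - i0)) * (φ (H m.1 m.2) * φ (H m.1 n.2)) := by
    simp [Finset.sum_ite_eq']
  have s3 : ∑ k, (if k = n.1 then (-2*(1 + i0)) * (φ (H n.1 m.2) * φ (H n.1 n.2)) else 0)
      = (-2*(1 + i0)) * (φ (H n.1 m.2) * φ (H n.1 n.2)) := by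
    simp [Finset.sum_ite_eq']
  have s4 : ∑ k, (if k = m.1 then (if k = n.1 then (8:L) * (φ (H m.1 m.2) * φ (H m.1 n.2)) else 0) else 0)
      = (if m.1 = n.1 then (8:L) else 0) * (φ (H m.1 m.2) * φ (H m.1 n.2)) := by
    rw [Finset.sum_ite_eq' Finset.univ m.1]
    by_cases h : m.1 = n.1 <;> simp [h]
  rw [s1, s2, s3, s4]
  ring

end
lemma gram_props {K L : Type*} [Field K] [Field L] (φ : K →+* L) (i0 : L)
    (conj : L →+* L) {d : ℕ} (H : Matrix (Fin d) (Fin d) K)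
    (hi0 : i0 ^ 2 = -1)
    (hconjφ : ∀ a : K, conj (φ a) = φ a) (hconji : conj i0 = -i0)
    (hH1 : ∀ i j, H i j ^ 2 = 1)
    (hH2 : H.transpose * H = (d : K) • (1 : Matrix (Fin d) (Fin d) K))
    (hd8 : (d : K) = 8) (m n : Fin d × Fin d) (hmn : m ≠ n) :
    conj (sesq conj (sicFam φ i0 H m) (sicFam φ i0 H n))
        * sesq conj (sicFam φ i0 H m) (sicFam φ i0 H n) = 16 ∧
    (sesq conj (sicFam φ i0 H m) (sicFam φ i0 H n)) ^ 2
      = 16 * φ (H m.1 m.2 * H m.1 n.2 * (H n.1 m.2 * H n.1 n.2)) := by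
  have hsq : ∀ i j, φ (H i j) * φ (H i j) = 1 := by
    intro i j; rw [← map_mul, ← pow_two, hH1, map_one]
  rw [gram_eval φ i0 conj H hi0 hconjφ hconji hH2 hd8 m n]
  simp only [map_mul]
  by_cases h1 : m.1 = n.1
  · have h2 : ¬ m.2 = n.2 := fun h => hmn (Prod.ext h1 h)
    rw [← h1]
    simp only [if_neg h2, eq_self_iff_true, if_true]
    constructor
    · simp only [map_add, map_mul, map_ofNat, map_one, map_neg, map_sub, map_zero,
        hconjφ, hconji]
      linear_combination (16 * (φ (H m.1 n.2) * φ (H m.1 n.2))) * hsq m.1 m.2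
        + 16 * hsq m.1 n.2
    · ring
  · by_cases h2 : m.2 = n.2
    · rw [← h2]
      simp only [if_neg h1, eq_self_iff_true, if_true]
      constructor
      · simp only [map_add, map_mul, map_ofNat, map_one, map_neg, map_sub, map_zero,
          hconjφ, hconji]
        rw [hsq m.1 m.2, hsq n.1 m.2]
        ring
      · rw [hsq m.1 m.2, hsq n.1 m.2]
        ring
    · simp only [if_neg h1, if_neg h2]
      constructor
      · simp only [map_add, map_mul, map_ofNat, map_one, map_neg, map_sub, map_zero,
          hconjφ, hconji]
        linear_combination ((-2*(1+i0))*(-2*(1-i0))*(φ (H m.1 n.2) * φ (H m.1 n.2))) * hsq m.1 m.2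
          + ((-2*(1+i0))*(-2*(1-i0))) * hsq m.1 n.2
          + ((-2*(1+i0))*(-2*(1-i0))*(φ (H n.1 n.2) * φ (H n.1 n.2))) * hsq n.1 m.2
          + ((-2*(1+i0))*(-2*(1-i0))) * hsq n.1 n.2
          + (8*(φ (H m.1 m.2) * φ (H m.1 n.2) * φ (H n.1 m.2) * φ (H n.1 n.2)) - 8) * hi0
      · linear_combination ((-2*(1-i0))^2*(φ (H m.1 n.2) * φ (H m.1 n.2))) * hsq m.1 m.2
          + (-2*(1-i0))^2 * hsq m.1 n.2
          + ((-2*(1+i0))^2*(φ (H n.1 n.2) * φ (H n.1 n.2))) * hsq n.1 m.2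
          + (-2*(1+i0))^2 * hsq n.1 n.2
          + (8 - 8*(φ (H m.1 m.2) * φ (H m.1 n.2) * φ (H n.1 m.2) * φ (H n.1 n.2))) * hi0
lemma part1 {K L : Type*} [Field K] [Field L] (φ : K →+* L) (i0 : L)
    (conj : L →+* L)
    (hconjφ : ∀ a : K, conj (φ a) = φ a)
    {d : ℕ} (H : Matrix (Fin d) (Fin d) K)
    (π σ : Equiv.Perm (Fin d)) (h : MatWeakEquiv π σ H H) :
    SICStrongEquiv conj (Equiv.prodCongr π σ) (sicFam φ i0 H) (sicFam φ i0 H) := by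
  obtain ⟨ε, ε', hε, hε', hrel⟩ := h
  set s : Fin d → L := fun k => φ (ε (π⁻¹ k)) with hs_def
  have hs : ∀ k, s k * s k = 1 := by
    intro k
    rcases hε (π⁻¹ k) with h | h <;> simp only [hs_def, h] <;> simp
  have hconjs : ∀ k, conj (s k) = s k := fun k => hconjφ _
  refine ⟨{
      toFun := fun v k => s k * v (π⁻¹ k)
      map_add' := by intro v w; funext k; simp [mul_add]
      map_smul' := by intro a v; funext k; simp [smul_eq_mul]; ring
      invFun := fun v k => s (π k) * v (π k)
      left_inv := by
        intro v; funext k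
        simp only [show π⁻¹ (π k) = k from π.symm_apply_apply k]
        rw [← mul_assoc, hs, one_mul]
      right_inv := by
        intro v; funext k
        simp only [show π (π⁻¹ k) = k from π.apply_symm_apply k]
        rw [← mul_assoc, hs, one_mul] }, fun m => φ (ε' m.2), 1, ?_, ?_, ?_⟩
  · intro v w
    unfold sesq
    simp only [LinearEquiv.coe_mk, LinearMap.coe_mk, AddHom.coe_mk]
    calc ∑ k, conj (s k * v (π⁻¹ k)) * (s k * w (π⁻¹ k))
        = ∑ k, (s k * s k) * (conj (v (π⁻¹ k)) * w (π⁻¹ k)) := by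
          refine Finset.sum_congr rfl fun k _ => ?_
          rw [map_mul, hconjs]; ring
      _ = ∑ k, conj (v (π⁻¹ k)) * w (π⁻¹ k) := by
          refine Finset.sum_congr rfl fun k _ => ?_
          rw [hs, one_mul]
      _ = ∑ k, conj (v k) * w k :=
          Fintype.sum_equiv (π⁻¹ : Equiv.Perm (Fin d)) _ _ (fun k => rfl)
  · intro m
    rw [hconjφ, ← map_mul]
    rcases hε' m.2 with h | h <;> rw [h] <;> simp
  · intro m
    funext k
    have hr := hrel (π⁻¹ k) m.2
    rw [show π (π⁻¹ k) = k from π.apply_symm_apply k] at hr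
    simp only [sicFam, sicVec, Equiv.prodCongr_apply, Prod.map_fst, Prod.map_snd,
      LinearEquiv.coe_mk, LinearMap.coe_mk, AddHom.coe_mk]
    have hite : (if k = π m.1 then (1:L) else 0) = (if π⁻¹ k = m.1 then (1:L) else 0) := by
      by_cases hk : k = π m.1
      · subst hk; simp
      · have h2 : ¬ π⁻¹ k = m.1 := fun hh => hk (by rw [← hh, show π (π⁻¹ k) = k from π.apply_symm_apply k])
        simp only [if_neg hk, if_neg h2]
    rw [hr, hite, map_mul, map_mul]
    ring
lemma part3 {K L : Type*} [Field K] [Field L]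
    (hK2 : (2 : K) ≠ 0)
    (φ : K →+* L) (i0 : L) (hi0 : i0 ^ 2 = -1)
    (conj : L →+* L) (hconj2 : ∀ x : L, conj (conj x) = x)
    (hconjφ : ∀ a : K, conj (φ a) = φ a) (hconji : conj i0 = -i0)
    {d : ℕ} (H : Matrix (Fin d) (Fin d) K)
    (hH1 : ∀ i j, H i j ^ 2 = 1)
    (hH2 : H.transpose * H = (d : K) • (1 : Matrix (Fin d) (Fin d) K))
    (hd8 : (d : K) = 8)
    (π : Equiv.Perm (Fin d × Fin d))
    (h : SICWeakEquiv conj π (sicFam φ i0 H) (sicFam φ i0 H)) :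
    MatStrongEquiv π (htilde H) (htilde H) := by
  set x := sicFam φ i0 H with hx
  obtain ⟨U, c, cc, γ, hU, hc, hγc, hy⟩ := h
  have hφinj : Function.Injective φ := φ.injective
  have h2L : (2 : L) ≠ 0 := by
    have e : (2 : L) = φ (2 : K) := by rw [map_ofNat]
    rw [e]
    exact fun hh => hK2 (hφinj (by rw [hh, map_zero]))
  have h16 : (16 : L) ≠ 0 := by
    have e : (16 : L) = 2 ^ 4 := by norm_num
    rw [e]; exact pow_ne_zero _ h2L
  have hsign : ∀ i j, H i j = 1 ∨ H i j = -1 := by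
    intro i j
    exact mul_self_eq_one_iff.mp (by rw [← pow_two]; exact hH1 i j)
  have smul : ∀ a b : K, (a = 1 ∨ a = -1) → (b = 1 ∨ b = -1) → (a * b = 1 ∨ a * b = -1) := by
    rintro a b (rfl | rfl) (rfl | rfl) <;> norm_num
  have hsq1K : ∀ a : K, (a = 1 ∨ a = -1) → a * a = 1 := by
    rintro a (rfl | rfl) <;> norm_num
  have hφsign : ∀ a : K, (a = 1 ∨ a = -1) → (φ a = 1 ∨ φ a = -1) := by
    rintro a (rfl | rfl) <;> simp
  have hγsign : ∀ u : L, (u = 1 ∨ u = -1) → γ u = u := by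
    rintro u (rfl | rfl) <;> simp
  -- Gram relation
  have hrel : ∀ m n : Fin d × Fin d,
      sesq conj (x (π m)) (x (π n)) = conj (c m) * c n * γ (sesq conj (x m) (x n)) := by
    intro m n
    have e1 : sesq conj (x (π m)) (x (π n))
        = ∑ k, conj (c m) * c n * γ (conj (U (x m) k) * U (x n) k) := by
      rw [hy m, hy n]
      unfold sesq
      refine Finset.sum_congr rfl fun k _ => ?_
      rw [map_mul conj, ← hγc, map_mul γ]
      ring
    rw [e1, ← Finset.mul_sum]
    congr 1
    rw [← map_sum]
    congr 1
    rw [← hU (x m) (x n)]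
    rfl
  have hGprops := fun (m n : Fin d × Fin d) (hmn : m ≠ n) =>
    gram_props φ i0 conj H hi0 hconjφ hconji hH1 hH2 hd8 m n hmn
  -- cc * cc = 1
  have hcc2 : ∀ m n : Fin d × Fin d, m ≠ n → cc * cc = 1 := by
    intro m n hmn
    have hπmn : π m ≠ π n := fun hh => hmn (π.injective hh)
    have h1 := (hGprops (π m) (π n) hπmn).1
    rw [hrel m n] at h1
    rw [map_mul, map_mul, hconj2, ← hγc] at h1
    have h2 := (hGprops m n hmn).1
    have hg16 : γ (conj (sesq conj (x m) (x n)) * sesq conj (x m) (x n)) = 16 := by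
      rw [h2]; exact map_ofNat γ 16
    have key : cc * cc * (16:L) = 16 := by
      have e : cc * cc * (16:L)
          = (conj (c m) * c m) * ((conj (c n) * c n)
            * γ (conj (sesq conj (x m) (x n)) * sesq conj (x m) (x n))) := by
        rw [hc m, hc n, hg16]; ring
      rw [e, map_mul γ]
      linear_combination h1
    exact mul_right_cancel₀ h16 (by rw [key, one_mul])
  -- abbreviations
  set S : (Fin d × Fin d) → (Fin d × Fin d) → K :=
    fun m n => H m.1 m.2 * H m.1 n.2 * (H n.1 m.2 * H n.1 n.2) with hSdef
  set q : (Fin d × Fin d) → K := fun m => H m.1 m.2 * H (π m).1 (π m).2 with hqdef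
  set δ : (Fin d × Fin d) → (Fin d × Fin d) → K :=
    fun m n => htilde H (π m) (π n) * htilde H m n with hδdef
  have hSsign : ∀ m n, S m n = 1 ∨ S m n = -1 := fun m n =>
    smul _ _ (smul _ _ (hsign _ _) (hsign _ _)) (smul _ _ (hsign _ _) (hsign _ _))
  have hqsign : ∀ m, q m = 1 ∨ q m = -1 := fun m => smul _ _ (hsign _ _) (hsign _ _)
  have hhtsign : ∀ a b, htilde H a b = 1 ∨ htilde H a b = -1 := fun a b =>
    smul _ _ (hsign _ _) (hsign _ _)
  have hδsign : ∀ m n, δ m n = 1 ∨ δ m n = -1 := fun m n =>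
    smul _ _ (hhtsign _ _) (hhtsign _ _)
  -- key identity
  have hkey : ∀ m n : Fin d × Fin d, m ≠ n →
      φ (δ m n) = ((conj (c m) * conj (c m)) * φ (q m)) * ((c n * c n) * φ (q n)) := by
    intro m n hmn
    have hπmn : π m ≠ π n := fun hh => hmn (π.injective hh)
    have h2 := (hGprops m n hmn).2
    have h3 := (hGprops (π m) (π n) hπmn).2
    have hsq : sesq conj (x (π m)) (x (π n)) ^ 2
        = (conj (c m) * c n) ^ 2 * γ (sesq conj (x m) (x n) ^ 2) := by
      rw [hrel m n, map_pow]; ring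
    rw [h3, h2] at hsq
    rw [map_mul γ, map_ofNat γ, hγsign _ (hφsign _ (hSsign m n))] at hsq
    have hdag : φ (S (π m) (π n)) =
        (conj (c m) * conj (c m)) * (c n * c n) * φ (S m n) :=
      mul_left_cancel₀ h16 (by linear_combination hsq)
    -- K-level identity
    have hSrel : δ m n = S (π m) (π n) * S m n * (q m * q n) := by
      simp only [hδdef, hSdef, hqdef, htilde, Matrix.of_apply]
      rcases hsign m.1 m.2 with h1 | h1 <;> rcases hsign n.1 n.2 with hh2 | hh2 <;>
        rcases hsign (π m).1 (π m).2 with h4 | h4 <;>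
        rcases hsign (π n).1 (π n).2 with h5 | h5 <;>
        rw [h1, hh2, h4, h5] <;> ring
    have hSS : φ (S m n) * φ (S m n) = 1 := by
      rcases hφsign _ (hSsign m n) with hh | hh <;> rw [hh] <;> norm_num
    rw [hSrel]
    simp only [map_mul]
    rw [hdag]
    linear_combination ((conj (c m) * conj (c m)) * (c n * c n) * (φ (q m) * φ (q n))) * hSS
  -- cocycle
  have hcoc : ∀ m n p : Fin d × Fin d, m ≠ n → m ≠ p → p ≠ n →
      δ m n = δ m p * δ p n := by
    intro m n p h1 h2 h3
    apply hφinj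
    rw [hkey m n h1, map_mul φ (δ m p) (δ p n), hkey m p h2, hkey p n h3]
    have hqp : φ (q p) * φ (q p) = 1 := by
      rcases hφsign _ (hqsign p) with hh | hh <;> rw [hh] <;> norm_num
    have hccp : (conj (c p) * conj (c p)) * (c p * c p) = 1 := by
      have e : (conj (c p) * conj (c p)) * (c p * c p)
          = (conj (c p) * c p) * (conj (c p) * c p) := by ring
      rw [e, hc p]
      exact hcc2 m n h1
    linear_combination (-(((conj (c m) * conj (c m)) * φ (q m)) * ((c n * c n) * φ (q n)))) * hccp
      + (-(((conj (c m) * conj (c m)) * φ (q m)) * ((c n * c n) * φ (q n))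
          * ((conj (c p) * conj (c p)) * (c p * c p)))) * hqp
  -- symmetry and diagonal
  have hδsymm : ∀ a b, δ a b = δ b a := by
    intro a b
    simp only [hδdef, htilde, Matrix.of_apply]
    ring
  have hdiag1 : ∀ a : Fin d × Fin d, htilde H a a = 1 := by
    intro a
    show H a.1 a.2 * H a.1 a.2 = 1
    rw [← pow_two]; exact hH1 _ _
  have hδdiag : ∀ m, δ m m = 1 := by
    intro m
    simp only [hδdef, hdiag1, one_mul]
  -- assemble
  rcases isEmpty_or_nonempty (Fin d × Fin d) with hE | hNE
  · exact ⟨fun _ => 1, fun i => (hE.false i).elim, fun i => (hE.false i).elim⟩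
  · obtain ⟨m₀⟩ := hNE
    refine ⟨fun m => δ m m₀, fun m => hδsign m m₀, ?_⟩
    intro m n
    have hδeq : δ m n = δ m m₀ * δ n m₀ := by
      by_cases hmn : m = n
      · subst hmn
        rw [hδdiag, hsq1K _ (hδsign m m₀)]
      · by_cases hm0 : m = m₀
        · subst hm0
          rw [hδdiag, one_mul, hδsymm]
        · by_cases hn0 : n = m₀
          · subst hn0
            rw [hδdiag, mul_one]
          · rw [hcoc m n m₀ hmn hm0 (fun hh => hn0 hh.symm), hδsymm m₀ n]
    have h1 : htilde H (π m) (π n) = δ m n * htilde H m n := by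
      have e : δ m n * htilde H m n
          = htilde H (π m) (π n) * (htilde H m n * htilde H m n) := by
        simp only [hδdef]; ring
      rw [e, hsq1K _ (hhtsign m n), mul_one]
    rw [h1, hδeq]
theorem stmt_10 {K L : Type*} [Field K] [Field L]
    (hK2 : (2 : K) ≠ 0) (hKroot : ∀ a : K, a ^ 2 ≠ -1)
    (φ : K →+* L) (i0 : L) (hi0 : i0 ^ 2 = -1)
    (conj : L →+* L) (hconj2 : ∀ x : L, conj (conj x) = x)
    (hconjφ : ∀ a : K, conj (φ a) = φ a) (hconji : conj i0 = -i0)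
    (hLgen : ∀ x : L, ∃ a b : K, x = φ a + φ b * i0)
    {d : ℕ} (H : Matrix (Fin d) (Fin d) K)
    (hH1 : ∀ i j, H i j ^ 2 = 1)
    (hH2 : H.transpose * H = (d : K) • (1 : Matrix (Fin d) (Fin d) K))
    (hd8 : (d : K) = 8) :
    ((fun q : Equiv.Perm (Fin d) × Equiv.Perm (Fin d) => Equiv.prodCongr q.1 q.2) ''
        {q | MatWeakEquiv q.1 q.2 H H}
      ⊆ {π | SICStrongEquiv conj π (sicFam φ i0 H) (sicFam φ i0 H)}) ∧
    ({π | SICStrongEquiv conj π (sicFam φ i0 H) (sicFam φ i0 H)}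
      ⊆ {π | SICWeakEquiv conj π (sicFam φ i0 H) (sicFam φ i0 H)}) ∧
    ({π | SICWeakEquiv conj π (sicFam φ i0 H) (sicFam φ i0 H)}
      ⊆ {π | MatStrongEquiv π (htilde H) (htilde H)}) := by
  refine ⟨?_, ?_, ?_⟩
  · rintro π' ⟨⟨π, σ⟩, hq, rfl⟩
    exact part1 φ i0 conj hconjφ H π σ hq
  · rintro π ⟨U, c, cc, hU, hc, hy⟩
    exact ⟨U, c, cc, RingEquiv.refl L, hU, hc, fun a => rfl, hy⟩
  · intro π hπ
    exact part3 hK2 φ i0 hi0 conj hconj2 hconjφ hconji H hH1 hH2 hd8 π hπ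
end
end

section
/- Let X = [d]×[d], and let {x_m}_{m∈X} and {x'_m}_{m∈X} be SICs in L^d constructed (from modular Hadamard matrices of order d) as in the construction. If a permutation π ∈ S_X induces a weak equivalence from {x_m} to {x'_m}, then there exist (i) ε ∈ {±1} with ε = 1 if char K ≠ 3, (ii) γ ∈ {identity, conjugation} with γ = identity if π induces a strong equivalence from {x_m} to {x'_m}, and (iii) scalars ω_m ∈ {1, −1, i, −i} for m ∈ X, such that (x'_{π(m)}, x'_{π(n)}) = ε·ω_m·conj(ω_n)·γ((x_m, x_n)) for every m, n ∈ X. -/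
open scoped BigOperators

noncomputable section

theorem sesq_sic_eq {K L : Type*} [Field K] [Field L]
    (φ : K →+* L) (i0 : L) (hi0 : i0 ^ 2 = -1)
    (conj : L →+* L) (hconjφ : ∀ a : K, conj (φ a) = φ a) (hconji : conj i0 = -i0)
    {d : ℕ} (H : Matrix (Fin d) (Fin d) K)
    (hH2 : H.transpose * H = (d : K) • (1 : Matrix (Fin d) (Fin d) K))
    (hd8 : (d : K) = 8) (i j k l : Fin d) :
    sesq conj (sicVec φ i0 H i j) (sicVec φ i0 H k l) =
      (if j = l then (8:L) else 0)
        + (-2*(1-i0)) * (φ (H i j) * φ (H i l)) + (-2*(1+i0)) * (φ (H k j) * φ (H k l))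
        + (if i = k then 8 * (φ (H i j) * φ (H i l)) else 0) := by
  have h2c : conj (2:L) = 2 := map_ofNat conj 2
  have hzc : conj (-2 * (1 + i0)) = -2 * (1 - i0) := by
    rw [map_mul, map_neg, h2c, map_add, map_one, hconji]; ring
  have hterm : ∀ a : Fin d,
      conj (sicVec φ i0 H i j a) * sicVec φ i0 H k l a =
        φ (H a j) * φ (H a l)
        + (if a = i then (-2*(1-i0)) * (φ (H a j) * φ (H a l)) else 0)
        + (if a = k then (-2*(1+i0)) * (φ (H a j) * φ (H a l)) else 0)
        + (if a = i then (if a = k then 8 * (φ (H a j) * φ (H a l)) else 0) else 0) := by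
    intro a
    simp only [sicVec, map_mul, map_add, map_one, map_zero, hconjφ, hzc, apply_ite conj]
    split_ifs <;> first | ring1 | linear_combination (-4 * φ (H a j) * φ (H a l)) * hi0
  have hsum0 : ∑ a, φ (H a j) * φ (H a l) = (if j = l then (8:L) else 0) := by
    have h : (H.transpose * H) j l = ((d:K) • (1 : Matrix (Fin d) (Fin d) K)) j l := by
      rw [hH2]
    rw [Matrix.mul_apply] at h
    simp only [Matrix.transpose_apply, Matrix.smul_apply, Matrix.one_apply, smul_eq_mul] at h
    have : ∑ a, φ (H a j) * φ (H a l) = φ (∑ a, H a j * H a l) := by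
      rw [map_sum]; exact Finset.sum_congr rfl fun a _ => (map_mul φ _ _).symm
    rw [this, h]
    split_ifs <;> simp [hd8, map_ofNat]
  show (∑ a, conj (sicVec φ i0 H i j a) * sicVec φ i0 H k l a) = _
  calc (∑ a, conj (sicVec φ i0 H i j a) * sicVec φ i0 H k l a)
      = ∑ a, (φ (H a j) * φ (H a l)
        + (if a = i then (-2*(1-i0)) * (φ (H a j) * φ (H a l)) else 0)
        + (if a = k then (-2*(1+i0)) * (φ (H a j) * φ (H a l)) else 0)
        + (if a = i then (if a = k then 8 * (φ (H a j) * φ (H a l)) else 0) else 0)) :=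
        Finset.sum_congr rfl fun a _ => hterm a
    _ = _ := by
        rw [Finset.sum_add_distrib, Finset.sum_add_distrib, Finset.sum_add_distrib, hsum0]
        simp [Finset.sum_ite_eq']

theorem sesq_sic_diag {K L : Type*} [Field K] [Field L]
    (φ : K →+* L) (i0 : L) (hi0 : i0 ^ 2 = -1)
    (conj : L →+* L) (hconjφ : ∀ a : K, conj (φ a) = φ a) (hconji : conj i0 = -i0)
    {d : ℕ} (H : Matrix (Fin d) (Fin d) K)
    (hH1 : ∀ i j, H i j ^ 2 = 1)
    (hH2 : H.transpose * H = (d : K) • (1 : Matrix (Fin d) (Fin d) K))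
    (hd8 : (d : K) = 8) (m : Fin d × Fin d) :
    sesq conj (sicFam φ i0 H m) (sicFam φ i0 H m) = 12 := by
  obtain ⟨i, j⟩ := m
  have e1 : φ (H i j) * φ (H i j) = 1 := by
    rw [← map_mul, ← pow_two, hH1, map_one]
  show sesq conj (sicVec φ i0 H i j) (sicVec φ i0 H i j) = 12
  rw [sesq_sic_eq φ i0 hi0 conj hconjφ hconji H hH2 hd8 i j i j, e1, if_pos rfl, if_pos rfl]
  ring

theorem sesq_sic_off {K L : Type*} [Field K] [Field L]
    (φ : K →+* L) (i0 : L) (hi0 : i0 ^ 2 = -1)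
    (conj : L →+* L) (hconjφ : ∀ a : K, conj (φ a) = φ a) (hconji : conj i0 = -i0)
    {d : ℕ} (H : Matrix (Fin d) (Fin d) K)
    (hH1 : ∀ i j, H i j ^ 2 = 1)
    (hH2 : H.transpose * H = (d : K) • (1 : Matrix (Fin d) (Fin d) K))
    (hd8 : (d : K) = 8) (m n : Fin d × Fin d) (hmn : m ≠ n) :
    sesq conj (sicFam φ i0 H m) (sicFam φ i0 H n) = 4 ∨
    sesq conj (sicFam φ i0 H m) (sicFam φ i0 H n) = -4 ∨
    sesq conj (sicFam φ i0 H m) (sicFam φ i0 H n) = 4 * i0 ∨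
    sesq conj (sicFam φ i0 H m) (sicFam φ i0 H n) = -(4 * i0) := by
  obtain ⟨i, j⟩ := m; obtain ⟨k, l⟩ := n
  have key := sesq_sic_eq φ i0 hi0 conj hconjφ hconji H hH2 hd8 i j k l
  have hpm : ∀ (p q r s : Fin d), φ (H p q) * φ (H r s) = 1 ∨ φ (H p q) * φ (H r s) = -1 := by
    intro p q r s
    have h : (φ (H p q) * φ (H r s)) * (φ (H p q) * φ (H r s)) = 1 := by
      have ha : φ (H p q) * φ (H p q) = 1 := by rw [← map_mul, ← pow_two, hH1, map_one]
      have hb : φ (H r s) * φ (H r s) = 1 := by rw [← map_mul, ← pow_two, hH1, map_one]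
      linear_combination (φ (H r s) * φ (H r s)) * ha + hb
    exact mul_self_eq_one_iff.mp h
  simp only [sicFam]
  by_cases hjl : j = l
  · subst hjl
    have hik : i ≠ k := fun h => hmn (by rw [h])
    have e1 : φ (H i j) * φ (H i j) = 1 := by rw [← map_mul, ← pow_two, hH1, map_one]
    have e2 : φ (H k j) * φ (H k j) = 1 := by rw [← map_mul, ← pow_two, hH1, map_one]
    left
    rw [key, if_pos rfl, if_neg hik, e1, e2]; ring
  · by_cases hik : i = k
    · subst hik
      rcases hpm i j i l with hs|hs
      · left; rw [key, if_neg hjl, if_pos rfl, hs]; ring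
      · right; left; rw [key, if_neg hjl, if_pos rfl, hs]; ring
    · rcases hpm i j i l with hs|hs <;> rcases hpm k j k l with ht|ht
      · right; left; rw [key, if_neg hjl, if_neg hik, hs, ht]; ring
      · right; right; left; rw [key, if_neg hjl, if_neg hik, hs, ht]; ring
      · right; right; right; rw [key, if_neg hjl, if_neg hik, hs, ht]; ring
      · left; rw [key, if_neg hjl, if_neg hik, hs, ht]; ring

theorem val_ratio {L : Type*} [Field L] {i0 v w t : L} (hi0 : i0 ^ 2 = -1)
    (h2L : (2:L) ≠ 0)
    (hv : v = 4 ∨ v = -4 ∨ v = 4*i0 ∨ v = -(4*i0))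
    (hw : w = 4 ∨ w = -4 ∨ w = 4*i0 ∨ w = -(4*i0))
    (h : v = t * w) :
    t = 1 ∨ t = -1 ∨ t = i0 ∨ t = -i0 := by
  have h4 : (4:L) ≠ 0 := by
    intro h0; apply h2L
    have hh : (2:L) * 2 = 0 := by rw [show (2:L)*2 = 4 by norm_num, h0]
    rcases mul_eq_zero.mp hh with h'|h' <;> exact h'
  have hi0ne : i0 ≠ 0 := by intro h0; rw [h0] at hi0; norm_num at hi0
  have hw0 : w ≠ 0 := by
    rcases hw with rfl|rfl|rfl|rfl
    · exact h4
    · simpa using h4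
    · exact mul_ne_zero h4 hi0ne
    · simpa using mul_ne_zero h4 hi0ne
  rcases hv with rfl|rfl|rfl|rfl <;> rcases hw with rfl|rfl|rfl|rfl <;>
    first
      | (left; refine mul_right_cancel₀ hw0 ?_; rw [← h];
          first | ring1 | linear_combination (4:L)*hi0 | linear_combination (-4:L)*hi0)
      | (right; left; refine mul_right_cancel₀ hw0 ?_; rw [← h];
          first | ring1 | linear_combination (4:L)*hi0 | linear_combination (-4:L)*hi0)
      | (right; right; left; refine mul_right_cancel₀ hw0 ?_; rw [← h];
          first | ring1 | linear_combination (4:L)*hi0 | linear_combination (-4:L)*hi0)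
      | (right; right; right; refine mul_right_cancel₀ hw0 ?_; rw [← h];
          first | ring1 | linear_combination (4:L)*hi0 | linear_combination (-4:L)*hi0)

theorem root4_conj {L : Type*} [Field L] (conj : L →+* L) {i0 t : L} (hi0 : i0 ^ 2 = -1)
    (hconji : conj i0 = -i0) (h : t = 1 ∨ t = -1 ∨ t = i0 ∨ t = -i0) :
    conj t * t = 1 := by
  rcases h with rfl|rfl|rfl|rfl
  · simp
  · simp
  · rw [hconji]; linear_combination -hi0
  · rw [map_neg, hconji]; linear_combination -hi0

theorem val_map {L F : Type*} [Field L] [FunLike F L L] [RingHomClass F L L] (γ : F) {i0 v : L}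
    (hγi : γ i0 = i0 ∨ γ i0 = -i0)
    (hv : v = 4 ∨ v = -4 ∨ v = 4*i0 ∨ v = -(4*i0)) :
    γ v = 4 ∨ γ v = -4 ∨ γ v = 4*i0 ∨ γ v = -(4*i0) := by
  rcases hv with rfl|rfl|rfl|rfl <;> rcases hγi with h|h <;>
    simp [map_mul, map_ofNat, map_neg, h] <;> tauto

theorem stmt_aux {K L : Type*} [Field K] [Field L]
    (hK2 : (2 : K) ≠ 0)
    (φ : K →+* L) (i0 : L) (hi0 : i0 ^ 2 = -1)
    (conj : L →+* L) (hconj2 : ∀ x : L, conj (conj x) = x)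
    (hconjφ : ∀ a : K, conj (φ a) = φ a) (hconji : conj i0 = -i0)
    {d : ℕ} (H : Matrix (Fin d) (Fin d) K)
    (hH1 : ∀ i j, H i j ^ 2 = 1)
    (hH2 : H.transpose * H = (d : K) • (1 : Matrix (Fin d) (Fin d) K))
    (hd8 : (d : K) = 8)
    (H' : Matrix (Fin d) (Fin d) K)
    (hH1' : ∀ i j, H' i j ^ 2 = 1)
    (hH2' : H'.transpose * H' = (d : K) • (1 : Matrix (Fin d) (Fin d) K))
    (π : Equiv.Perm (Fin d × Fin d))
    (U : (Fin d → L) ≃ₗ[L] (Fin d → L)) (c : Fin d × Fin d → L) (cc : L) (γ : L ≃+* L)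
    (hU : ∀ v w : Fin d → L, sesq conj (U v) (U w) = sesq conj v w)
    (hc : ∀ m, conj (c m) * c m = cc)
    (hγc : ∀ a : L, γ (conj a) = conj (γ a))
    (hy : ∀ m, sicFam φ i0 H' (π m) = fun k => c m * γ (U (sicFam φ i0 H m) k)) :
    ∃ ε : L, (ε = 1 ∨ ε = -1) ∧ ((3 : K) ≠ 0 → ε = 1) ∧
    ∃ g : L → L, (g = id ∨ g = fun a => conj a) ∧ (γ i0 = i0 → g = id) ∧
    ∃ ω : Fin d × Fin d → L,
      (∀ m, ω m = 1 ∨ ω m = -1 ∨ ω m = i0 ∨ ω m = -i0) ∧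
      ∀ m n : Fin d × Fin d,
        sesq conj (sicFam φ i0 H' (π m)) (sicFam φ i0 H' (π n)) =
          ε * ω m * conj (ω n) * g (sesq conj (sicFam φ i0 H m) (sicFam φ i0 H n)) := by
  have hφinj : Function.Injective φ := φ.injective
  have h2L : (2:L) ≠ 0 := by
    intro h0; apply hK2; apply hφinj; rw [map_ofNat, h0, map_zero]
  have hi0ne : i0 ≠ 0 := by intro h0; rw [h0] at hi0; norm_num at hi0
  have hi0neg : i0 ≠ -i0 := by
    intro h0
    have h : 2 * i0 = 0 := by linear_combination h0
    rcases mul_eq_zero.mp h with h|h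
    · exact h2L h
    · exact hi0ne h
  have hinner : ∀ m n, sesq conj (sicFam φ i0 H' (π m)) (sicFam φ i0 H' (π n)) =
      conj (c m) * c n * γ (sesq conj (sicFam φ i0 H m) (sicFam φ i0 H n)) := by
    intro m n
    rw [hy m, hy n, ← hU (sicFam φ i0 H m) (sicFam φ i0 H n)]
    simp only [sesq]
    rw [map_sum, Finset.mul_sum]
    refine Finset.sum_congr rfl fun k _ => ?_
    rw [map_mul conj, map_mul γ, hγc]
    ring
  have hγi : γ i0 = i0 ∨ γ i0 = -i0 := by
    have h1 : γ i0 ^ 2 = -1 := by rw [← map_pow, hi0, map_neg, map_one]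
    have h2 : (γ i0 - i0) * (γ i0 + i0) = 0 := by linear_combination h1 - hi0
    rcases mul_eq_zero.mp h2 with h|h
    · exact Or.inl (sub_eq_zero.mp h)
    · exact Or.inr (eq_neg_of_add_eq_zero_left h)
  obtain ⟨g, hgor, hgid, hgval⟩ :
      ∃ g : L → L, (g = id ∨ g = fun a => conj a) ∧ (γ i0 = i0 → g = id) ∧
        ∀ v : L, (v = 12 ∨ (v = 4 ∨ v = -4 ∨ v = 4*i0 ∨ v = -(4*i0))) → γ v = g v := by
    rcases hγi with h|h
    · refine ⟨id, Or.inl rfl, fun _ => rfl, ?_⟩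
      intro v hv
      rcases hv with rfl | rfl|rfl|rfl|rfl <;> simp [map_ofNat, map_neg, map_mul, h]
    · refine ⟨fun a => conj a, Or.inr rfl, fun h' => absurd (h'.symm.trans h) hi0neg, ?_⟩
      intro v hv
      rcases hv with rfl | rfl|rfl|rfl|rfl <;>
        simp [map_ofNat, map_neg, map_mul, h, hconji]
  have hdiag := fun m => sesq_sic_diag φ i0 hi0 conj hconjφ hconji H hH1 hH2 hd8 m
  have hdiag' := fun m => sesq_sic_diag φ i0 hi0 conj hconjφ hconji H' hH1' hH2' hd8 m
  have hoff := fun m n h => sesq_sic_off φ i0 hi0 conj hconjφ hconji H hH1 hH2 hd8 m n h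
  have hoff' := fun m n h => sesq_sic_off φ i0 hi0 conj hconjφ hconji H' hH1' hH2' hd8 m n h
  have hd0 : 0 < d := by
    rcases Nat.eq_zero_or_pos d with h|h
    · exfalso
      rw [h, Nat.cast_zero] at hd8
      have h8 : (2:K)^3 = 0 := by rw [show (2:K)^3 = 8 by norm_num, ← hd8]
      exact hK2 ((pow_eq_zero_iff (by norm_num)).mp h8)
    · exact h
  set m0 : Fin d × Fin d := (⟨0, hd0⟩, ⟨0, hd0⟩) with hm0def
  have hγ12 : γ (12:L) = 12 := map_ofNat γ 12
  have h12cc : (12:L) = cc * 12 := by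
    have h := hinner m0 m0
    rw [hdiag m0, hdiag' (π m0), hc m0, hγ12] at h
    exact h
  have hcc3 : (3:K) ≠ 0 → cc = 1 := by
    intro h3
    have h12 : (12:L) ≠ 0 := by
      intro h0
      have hφ12 : φ (12:K) = 0 := by rw [map_ofNat, h0]
      have h12K : (12:K) = 0 := by apply hφinj; rw [hφ12, map_zero]
      have hh : (2:K) * (2 * 3) = 0 := by linear_combination h12K
      rcases mul_eq_zero.mp hh with h|h
      · exact hK2 h
      rcases mul_eq_zero.mp h with h|h
      · exact hK2 h
      · exact h3 h
    have hsub : (cc - 1) * 12 = 0 := by linear_combination -h12cc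
    rcases mul_eq_zero.mp hsub with h|h
    · exact sub_eq_zero.mp h
    · exact absurd h h12
  have hroot : ∀ m n, m ≠ n →
      (conj (c m) * c n = 1 ∨ conj (c m) * c n = -1 ∨
       conj (c m) * c n = i0 ∨ conj (c m) * c n = -i0) := by
    intro m n hmn
    have hv := hoff' (π m) (π n) (fun h => hmn (π.injective h))
    have hw := hoff m n hmn
    have hwγ := val_map γ hγi hw
    exact val_ratio hi0 h2L hv hwγ (hinner m n)
  have hccpm : cc = 1 ∨ cc = -1 := by
    by_cases h3 : (3:K) = 0
    · have hd1 : d ≠ 1 := by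
        intro h
        rw [h, Nat.cast_one] at hd8
        have h1 : (1:K) = 0 := by linear_combination -hd8 - 2*h3
        exact one_ne_zero h1
      have hd2 : 2 ≤ d := by omega
      set m1 : Fin d × Fin d := (⟨1, by omega⟩, ⟨0, hd0⟩) with hm1def
      have hm1 : m1 ≠ m0 := by
        simp [hm1def, hm0def, Prod.ext_iff, Fin.ext_iff]
      have ht := hroot _ _ hm1
      have h1 := root4_conj conj hi0 hconji ht
      rw [map_mul, hconj2] at h1
      have h2 : cc * cc = 1 := by
        linear_combination h1 - cc * hc m0 - (conj (c m0) * c m0) * hc m1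
      exact mul_self_eq_one_iff.mp h2
    · exact Or.inl (hcc3 h3)
  have hcc2 : cc * cc = 1 := by rcases hccpm with rfl|rfl <;> norm_num
  refine ⟨cc, hccpm, hcc3, g, hgor, hgid, fun m => conj (c m) * c m0, ?_, ?_⟩
  · intro m
    beta_reduce
    by_cases hm : m = m0
    · rw [hm, hc m0]
      tauto
    · exact hroot m m0 hm
  · intro m n
    beta_reduce
    rw [hinner m n]
    have hγR : γ (sesq conj (sicFam φ i0 H m) (sicFam φ i0 H n)) =
        g (sesq conj (sicFam φ i0 H m) (sicFam φ i0 H n)) := by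
      by_cases hmn : m = n
      · subst hmn
        rw [hdiag m]
        exact hgval 12 (Or.inl rfl)
      · exact hgval _ (Or.inr (hoff m n hmn))
    rw [hγR, map_mul, hconj2]
    linear_combination
      (-(conj (c m) * c n * g (sesq conj (sicFam φ i0 H m) (sicFam φ i0 H n)))) * hcc2
      - (conj (c m) * c n * g (sesq conj (sicFam φ i0 H m) (sicFam φ i0 H n)) * cc) * hc m0

theorem stmt_11 {K L : Type*} [Field K] [Field L]
    (hK2 : (2 : K) ≠ 0) (hKroot : ∀ a : K, a ^ 2 ≠ -1)
    (φ : K →+* L) (i0 : L) (hi0 : i0 ^ 2 = -1)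
    (conj : L →+* L) (hconj2 : ∀ x : L, conj (conj x) = x)
    (hconjφ : ∀ a : K, conj (φ a) = φ a) (hconji : conj i0 = -i0)
    (hLgen : ∀ x : L, ∃ a b : K, x = φ a + φ b * i0)
    {d : ℕ} (H : Matrix (Fin d) (Fin d) K)
    (hH1 : ∀ i j, H i j ^ 2 = 1)
    (hH2 : H.transpose * H = (d : K) • (1 : Matrix (Fin d) (Fin d) K))
    (hd8 : (d : K) = 8)
    (H' : Matrix (Fin d) (Fin d) K)
    (hH1' : ∀ i j, H' i j ^ 2 = 1)
    (hH2' : H'.transpose * H' = (d : K) • (1 : Matrix (Fin d) (Fin d) K))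
    (π : Equiv.Perm (Fin d × Fin d))
    (hweak : SICWeakEquiv conj π (sicFam φ i0 H) (sicFam φ i0 H')) :
    ∃ ε : L, (ε = 1 ∨ ε = -1) ∧ ((3 : K) ≠ 0 → ε = 1) ∧
    ∃ g : L → L, (g = id ∨ g = fun a => conj a) ∧
      (SICStrongEquiv conj π (sicFam φ i0 H) (sicFam φ i0 H') → g = id) ∧
    ∃ ω : Fin d × Fin d → L,
      (∀ m, ω m = 1 ∨ ω m = -1 ∨ ω m = i0 ∨ ω m = -i0) ∧
      ∀ m n : Fin d × Fin d,
        sesq conj (sicFam φ i0 H' (π m)) (sicFam φ i0 H' (π n)) =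
          ε * ω m * conj (ω n) * g (sesq conj (sicFam φ i0 H m) (sicFam φ i0 H n)) := by
  by_cases hs : SICStrongEquiv conj π (sicFam φ i0 H) (sicFam φ i0 H')
  · obtain ⟨U, c, cc, hU, hc, hy⟩ := hs
    obtain ⟨ε, h1, h2, g, h3, h4, hrest⟩ :=
      stmt_aux hK2 φ i0 hi0 conj hconj2 hconjφ hconji H hH1 hH2 hd8 H' hH1' hH2' π U c cc
        (RingEquiv.refl L) hU hc (fun _ => rfl) (fun m => hy m)
    exact ⟨ε, h1, h2, g, h3, fun _ => h4 rfl, hrest⟩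
  · obtain ⟨U, c, cc, γ, hU, hc, hγc, hy⟩ := hweak
    obtain ⟨ε, h1, h2, g, h3, h4, hrest⟩ :=
      stmt_aux hK2 φ i0 hi0 conj hconj2 hconjφ hconji H hH1 hH2 hd8 H' hH1' hH2' π U c cc
        γ hU hc hγc hy
    exact ⟨ε, h1, h2, g, h3, fun h => absurd h hs, hrest⟩
end
end

section
/- Let X = [d]×[d] and let {x_m}_{m∈X} be a SIC in L^d given by the construction. For each ω ∈ C_4 = {1,−1,i,−i}, let Γ_ω be the directed graph on vertex set C_4 × X with an edge (α,m) → (β,n) if and only if (α·x_m, β·x_n) = 4ω. Then a permutation π ∈ S_X lies in Aut_s({x_m}) if and only if there exist (i) a bijection f : C_4 × X → C_4 × X with f(C_4 × {m}) = C_4 × {π(m)} for every m ∈ X, and (ii) ε ∈ {±1} with ε = 1 if char K ≠ 3, such that for every ω ∈ C_4, f induces an isomorphism from Γ_ω to Γ_{ε·ω}, i.e., (α,m) → (β,n) in Γ_ω if and only if f(α,m) → f(β,n) in Γ_{ε·ω}. -/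
open scoped BigOperators

noncomputable section

/-- The edge relation of the directed graph `Γ_ω`: there is an edge `(α, m) → (β, n)`
iff `(α • x m, β • x n) = 4 ω`. -/
def sicEdge {L : Type*} [Field L] (conj : L →+* L) {d : ℕ} {X : Type*}
    (x : X → Fin d → L) (ω : L) (v w : L × X) : Prop :=
  sesq conj (fun k => v.1 * x v.2 k) (fun k => w.1 * x w.2 k) = 4 * ω

section Aux
variable {K L : Type*} [Field K] [Field L]

lemma sesq_smul_smul (conj : L →+* L) {d : ℕ} (α β : L) (y w : Fin d → L) :
    sesq conj (fun k => α * y k) (fun k => β * w k) = conj α * β * sesq conj y w := by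
  simp only [sesq, map_mul, Finset.mul_sum]
  exact Finset.sum_congr rfl fun k _ => by ring

lemma gram_formula (φ : K →+* L) (i0 : L)
    (conj : L →+* L) (hconjφ : ∀ a : K, conj (φ a) = φ a) (hconji : conj i0 = -i0)
    (hi0 : i0 ^ 2 = -1)
    {d : ℕ} (H : Matrix (Fin d) (Fin d) K)
    (hH2 : H.transpose * H = (d : K) • (1 : Matrix (Fin d) (Fin d) K))
    (hd8 : (d : K) = 8)
    (i j k l : Fin d) :
    sesq conj (sicVec φ i0 H i j) (sicVec φ i0 H k l)
      = 8 * (if j = l then (1:L) else 0)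
        + (-2 * (1 - i0)) * φ (H i j * H i l) + (-2*(1+i0)) * φ (H k j * H k l)
        + (if i = k then 8 * φ (H i j * H i l) else 0) := by
  have h8 : (-2 * (1 - i0)) * (-2 * (1 + i0)) = (8:L) := by
    linear_combination (-4:L) * hi0
  have hcz : conj (-2 * (1 + i0)) = -2*(1-i0) := by
    have h2 : conj (-2 : L) = -2 := by rw [map_neg, map_ofNat]
    rw [map_mul, map_add, map_one, hconji, h2]; ring
  have hsum : ∀ s : Fin d,
      conj (φ (H s j) * (1 + (-2*(1+i0)) * (if s = i then 1 else 0))) *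
        (φ (H s l) * (1 + (-2*(1+i0)) * (if s = k then 1 else 0)))
      = φ (H s j * H s l) + (-2*(1-i0)) * (if s = i then φ (H s j * H s l) else 0)
        + (-2*(1+i0)) * (if s = k then φ (H s j * H s l) else 0)
        + (if s = i then (if s = k then (-2 * (1 - i0)) * (-2 * (1 + i0)) * φ (H s j * H s l) else 0) else 0) := by
    intro s
    rcases eq_or_ne s i with rfl | hsi <;> rcases eq_or_ne s k with rfl | hsk
    · simp only [if_pos rfl, ite_true, if_true, mul_one, map_mul, map_add, map_one,
        hconjφ, hcz]; try ring
    · simp only [if_pos rfl, if_neg hsk, ite_true, if_true, mul_one, mul_zero, add_zero,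
        map_mul, map_add, map_one, hconjφ, hcz]; try ring
    · simp only [if_pos rfl, if_neg hsi, ite_true, if_true, mul_one, mul_zero, add_zero,
        map_mul, map_add, map_one, hconjφ, hcz]; try ring
    · simp only [if_neg hsi, if_neg hsk, ite_true, if_true, mul_one, mul_zero, add_zero,
        map_mul, map_add, map_one, hconjφ, hcz]; try ring
  unfold sesq sicVec
  rw [Finset.sum_congr rfl (fun s _ => hsum s), Finset.sum_add_distrib,
    Finset.sum_add_distrib, Finset.sum_add_distrib]
  have hS1 : ∑ s, φ (H s j * H s l) = 8 * (if j = l then (1:L) else 0) := by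
    rw [← map_sum]
    have hTH : ∑ s, H s j * H s l = (H.transpose * H) j l := by
      simp [Matrix.mul_apply, Matrix.transpose_apply]
    rw [hTH, hH2]
    by_cases hjl : j = l
    · subst hjl; simp [Matrix.smul_apply, Matrix.one_apply_eq, hd8, map_ofNat]
    · simp [Matrix.smul_apply, Matrix.one_apply_ne hjl, hjl]
  have hS2 : ∑ s, (-2*(1-i0)) * (if s = i then φ (H s j * H s l) else 0)
      = (-2*(1-i0)) * φ (H i j * H i l) := by
    rw [← Finset.mul_sum, Finset.sum_ite_eq' Finset.univ i (fun s => φ (H s j * H s l))]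
    simp
  have hS3 : ∑ s, (-2*(1+i0)) * (if s = k then φ (H s j * H s l) else 0)
      = (-2*(1+i0)) * φ (H k j * H k l) := by
    rw [← Finset.mul_sum, Finset.sum_ite_eq' Finset.univ k (fun s => φ (H s j * H s l))]
    simp
  have hS4 : ∑ s, (if s = i then (if s = k then (-2 * (1 - i0)) * (-2 * (1 + i0)) * φ (H s j * H s l) else 0) else 0)
      = (if i = k then 8 * φ (H i j * H i l) else 0) := by
    rw [Finset.sum_ite_eq' Finset.univ i
      (fun s => if s = k then (-2 * (1 - i0)) * (-2 * (1 + i0)) * φ (H s j * H s l) else 0)]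
    simp only [Finset.mem_univ, if_true, h8]
  rw [hS1, hS2, hS3, hS4]

def C4 (i0 a : L) : Prop := a = 1 ∨ a = -1 ∨ a = i0 ∨ a = -i0

lemma C4.one (i0 : L) : C4 i0 1 := Or.inl rfl

lemma C4.nonzero {i0 a : L} (hi0 : i0 ^ 2 = -1) (h : C4 i0 a) : a ≠ 0 := by
  have hi : i0 ≠ 0 := by intro h'; rw [h'] at hi0; norm_num at hi0
  rcases h with rfl | rfl | rfl | rfl <;> simp [hi]

lemma C4.conj_mem {i0 a : L} (conj : L →+* L) (hconji : conj i0 = -i0)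
    (h : C4 i0 a) : C4 i0 (conj a) := by
  rcases h with rfl | rfl | rfl | rfl
  · exact Or.inl (map_one conj)
  · refine Or.inr (Or.inl ?_); rw [map_neg, map_one]
  · exact Or.inr (Or.inr (Or.inr hconji))
  · refine Or.inr (Or.inr (Or.inl ?_)); rw [map_neg, hconji, neg_neg]

lemma C4.conj_mul_self {i0 a : L} (conj : L →+* L) (hi0 : i0 ^ 2 = -1)
    (hconji : conj i0 = -i0) (h : C4 i0 a) : conj a * a = 1 := by
  have hii : i0 * i0 = -1 := by rw [← sq]; exact hi0
  rcases h with rfl | rfl | rfl | rfl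
  · rw [map_one, one_mul]
  · rw [map_neg, map_one]; ring
  · rw [hconji]; linear_combination -hii
  · rw [map_neg, hconji, neg_neg]; linear_combination -hii

lemma C4.mul_mem {i0 a b : L} (hi0 : i0 ^ 2 = -1) (ha : C4 i0 a) (hb : C4 i0 b) :
    C4 i0 (a * b) := by
  have hii : i0 * i0 = -1 := by rw [← sq]; exact hi0
  rcases ha with rfl | rfl | rfl | rfl <;> rcases hb with rfl | rfl | rfl | rfl <;>
    simp [C4, hii, neg_mul, mul_neg, neg_neg, one_mul, mul_one] <;> tauto

lemma C4.inv_eq_conj {i0 a : L} (conj : L →+* L) (hi0 : i0 ^ 2 = -1)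
    (hconji : conj i0 = -i0) (h : C4 i0 a) : a⁻¹ = conj a :=
  eq_comm.mp (eq_inv_of_mul_eq_one_left (C4.conj_mul_self conj hi0 hconji h))

lemma sesq_single (conj : L →+* L) {d : ℕ} (k : Fin d) (w : Fin d → L) :
    sesq conj (Pi.single k 1) w = w k := by
  unfold sesq
  have : ∀ s : Fin d, conj ((Pi.single k (1:L) : Fin d → L) s) * w s
      = if s = k then w s else 0 := by
    intro s
    rcases eq_or_ne s k with rfl | h
    · simp
    · simp [Pi.single_apply, h]
  rw [Finset.sum_congr rfl (fun s _ => this s), Finset.sum_ite_eq' Finset.univ k w]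
  simp

lemma sesq_add_left (conj : L →+* L) {d : ℕ} (x y w : Fin d → L) :
    sesq conj (x + y) w = sesq conj x w + sesq conj y w := by
  unfold sesq
  rw [← Finset.sum_add_distrib]
  exact Finset.sum_congr rfl fun k _ => by simp [map_add]; ring

lemma sesq_smul_left (conj : L →+* L) {d : ℕ} (a : L) (x w : Fin d → L) :
    sesq conj (a • x) w = conj a * sesq conj x w := by
  unfold sesq
  rw [Finset.mul_sum]
  exact Finset.sum_congr rfl fun k _ => by simp [map_mul]; ring

lemma sesq_mulVec_right (conj : L →+* L) {d : ℕ} {X : Type*} [Fintype X]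
    (y : Fin d → L) (M : Matrix (Fin d) X L) (p : X → L) :
    sesq conj y (M.mulVec p) = ∑ m, p m * sesq conj y (fun k => M k m) := by
  calc sesq conj y (M.mulVec p) = ∑ k, conj (y k) * ∑ m, M k m * p m := by
        refine Finset.sum_congr rfl fun k _ => ?_
        simp [Matrix.mulVec, dotProduct]
    _ = ∑ k, ∑ m, p m * (conj (y k) * M k m) := by
        refine Finset.sum_congr rfl fun k _ => ?_
        rw [Finset.mul_sum]
        exact Finset.sum_congr rfl fun m _ => by ring
    _ = ∑ m, ∑ k, p m * (conj (y k) * M k m) := Finset.sum_comm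
    _ = ∑ m, p m * sesq conj y (fun k => M k m) := by
        refine Finset.sum_congr rfl fun m _ => ?_
        rw [sesq, Finset.mul_sum]

lemma sesq_mulVec_mulVec (conj : L →+* L) {d : ℕ} {X : Type*} [Fintype X]
    (M : Matrix (Fin d) X L) (p q : X → L) :
    sesq conj (M.mulVec p) (M.mulVec q)
      = ∑ m, ∑ n, conj (p m) * q n * sesq conj (fun k => M k m) (fun k => M k n) := by
  calc sesq conj (M.mulVec p) (M.mulVec q)
      = ∑ k, (∑ m, conj (p m) * conj (M k m)) * (∑ n, M k n * q n) := by
        refine Finset.sum_congr rfl fun k _ => ?_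
        simp only [Matrix.mulVec, dotProduct, map_sum, map_mul]
        congr 1
        exact Finset.sum_congr rfl fun m _ => by ring
    _ = ∑ k, ∑ m, ∑ n, conj (p m) * q n * (conj (M k m) * M k n) := by
        refine Finset.sum_congr rfl fun k _ => ?_
        rw [Finset.sum_mul_sum]
        exact Finset.sum_congr rfl fun m _ => Finset.sum_congr rfl fun n _ => by ring
    _ = ∑ m, ∑ k, ∑ n, conj (p m) * q n * (conj (M k m) * M k n) := Finset.sum_comm
    _ = ∑ m, ∑ n, ∑ k, conj (p m) * q n * (conj (M k m) * M k n) :=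
        Finset.sum_congr rfl fun m _ => Finset.sum_comm
    _ = ∑ m, ∑ n, conj (p m) * q n * sesq conj (fun k => M k m) (fun k => M k n) := by
        refine Finset.sum_congr rfl fun m _ => Finset.sum_congr rfl fun n _ => ?_
        rw [sesq, Finset.mul_sum]



lemma sign_cases (φ : K →+* L) {d : ℕ} (H : Matrix (Fin d) (Fin d) K)
    (hH1 : ∀ i j, H i j ^ 2 = 1) (i j l : Fin d) :
    φ (H i j * H i l) = 1 ∨ φ (H i j * H i l) = -1 := by
  have h : (H i j * H i l) * (H i j * H i l) = 1 := by
    have h1 := hH1 i j; have h2 := hH1 i l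
    linear_combination (H i l)^2 * h1 + h2
  rcases mul_self_eq_one_iff.mp h with h' | h'
  · left; rw [h', map_one]
  · right; rw [h', map_neg, map_one]

lemma sign_self (φ : K →+* L) {d : ℕ} (H : Matrix (Fin d) (Fin d) K)
    (hH1 : ∀ i j, H i j ^ 2 = 1) (i j : Fin d) :
    φ (H i j * H i j) = 1 := by
  rw [← sq, hH1, map_one]

lemma gram_self (φ : K →+* L) (i0 : L)
    (conj : L →+* L) (hconjφ : ∀ a : K, conj (φ a) = φ a) (hconji : conj i0 = -i0)
    (hi0 : i0 ^ 2 = -1)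
    {d : ℕ} (H : Matrix (Fin d) (Fin d) K) (hH1 : ∀ i j, H i j ^ 2 = 1)
    (hH2 : H.transpose * H = (d : K) • (1 : Matrix (Fin d) (Fin d) K))
    (hd8 : (d : K) = 8) (m : Fin d × Fin d) :
    sesq conj (sicFam φ i0 H m) (sicFam φ i0 H m) = 12 := by
  show sesq conj (sicVec φ i0 H m.1 m.2) (sicVec φ i0 H m.1 m.2) = 12
  rw [gram_formula φ i0 conj hconjφ hconji hi0 H hH2 hd8, if_pos rfl, if_pos rfl,
    sign_self φ H hH1]
  ring

lemma gram_offdiag (φ : K →+* L) (i0 : L)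
    (conj : L →+* L) (hconjφ : ∀ a : K, conj (φ a) = φ a) (hconji : conj i0 = -i0)
    (hi0 : i0 ^ 2 = -1)
    {d : ℕ} (H : Matrix (Fin d) (Fin d) K) (hH1 : ∀ i j, H i j ^ 2 = 1)
    (hH2 : H.transpose * H = (d : K) • (1 : Matrix (Fin d) (Fin d) K))
    (hd8 : (d : K) = 8) (m n : Fin d × Fin d) (hmn : m ≠ n) :
    ∃ ω : L, C4 i0 ω ∧ sesq conj (sicFam φ i0 H m) (sicFam φ i0 H n) = 4 * ω := by
  obtain ⟨i, j⟩ := m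
  obtain ⟨k, l⟩ := n
  have hform := gram_formula φ i0 conj hconjφ hconji hi0 H hH2 hd8 i j k l
  show ∃ ω : L, C4 i0 ω ∧ sesq conj (sicVec φ i0 H i j) (sicVec φ i0 H k l) = 4 * ω
  rcases eq_or_ne j l with rfl | hjl
  · have hik : i ≠ k := fun h => hmn (by rw [h])
    refine ⟨1, C4.one i0, ?_⟩
    rw [hform, if_pos rfl, if_neg hik, sign_self φ H hH1, sign_self φ H hH1]
    ring
  · rcases eq_or_ne i k with rfl | hik
    · rcases sign_cases φ H hH1 i j l with ha | ha
      · refine ⟨1, C4.one i0, ?_⟩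
        rw [hform, if_neg hjl, if_pos rfl, ha]; ring
      · refine ⟨-1, Or.inr (Or.inl rfl), ?_⟩
        rw [hform, if_neg hjl, if_pos rfl, ha]; ring
    · rcases sign_cases φ H hH1 i j l with ha | ha <;>
        rcases sign_cases φ H hH1 k j l with hb | hb
      · refine ⟨-1, Or.inr (Or.inl rfl), ?_⟩
        rw [hform, if_neg hjl, if_neg hik, ha, hb]; ring
      · refine ⟨i0, Or.inr (Or.inr (Or.inl rfl)), ?_⟩
        rw [hform, if_neg hjl, if_neg hik, ha, hb]; ring
      · refine ⟨-i0, Or.inr (Or.inr (Or.inr rfl)), ?_⟩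
        rw [hform, if_neg hjl, if_neg hik, ha, hb]; ring
      · refine ⟨1, C4.one i0, ?_⟩
        rw [hform, if_neg hjl, if_neg hik, ha, hb]; ring



lemma span_sicFam (φ : K →+* L) (hK2 : (2:K) ≠ 0) (hKroot : ∀ a : K, a ^ 2 ≠ -1)
    (i0 : L) (hi0 : i0 ^ 2 = -1) {d : ℕ}
    (H : Matrix (Fin d) (Fin d) K)
    (hH2 : H.transpose * H = (d : K) • (1 : Matrix (Fin d) (Fin d) K))
    (hd8 : (d : K) = 8) :
    Submodule.span L (Set.range (sicFam φ i0 H)) = ⊤ := by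
  -- the matrix over L
  set M : Matrix (Fin d) (Fin d) L := φ.mapMatrix H with hM
  have h8 : (8 : K) ≠ 0 := by
    intro h
    apply hK2
    have : (2:K)^3 = 0 := by rw [show (2:K)^3 = 8 by norm_num, h]
    exact pow_eq_zero_iff (by norm_num) |>.mp this
  have hdet : H.det * H.det = 8 ^ d := by
    have := congrArg Matrix.det hH2
    rw [Matrix.det_mul, Matrix.det_transpose, Matrix.det_smul, Matrix.det_one, hd8] at this
    simpa using this
  have hHdet : H.det ≠ 0 := fun h => (pow_ne_zero d h8) (by rw [h, mul_zero] at hdet; exact hdet.symm)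
  have hMdet : IsUnit M.det := by
    rw [hM, ← RingHom.map_det]
    exact ((map_ne_zero φ).mpr hHdet).isUnit
  have hz1 : (1 : L) + (-2*(1+i0)) ≠ 0 := by
    intro h
    have hir : ∀ a : K, i0 ≠ φ a := by
      intro a hh
      apply hKroot a
      have : φ (a ^ 2) = φ (-1) := by rw [map_pow, map_neg, map_one, ← hh, hi0]
      exact φ.injective this
    apply hir (-(2⁻¹ : K))
    have h2L : (2 : L) = φ 2 := (map_ofNat φ 2).symm
    have h2ne : (2 : L) ≠ 0 := by rw [h2L]; exact (map_ne_zero φ).mpr hK2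
    have h' : 2 * i0 = -1 := by linear_combination -h
    rw [map_neg, map_inv₀, ← h2L, show -(2:L)⁻¹ = (-1)/2 by ring, eq_div_iff h2ne]
    linear_combination h'
  rw [eq_top_iff]
  intro v _
  -- it suffices that each `Pi.single i₀ 1` is in the span
  have hsingle : ∀ i₀ : Fin d, (Pi.single i₀ 1 : Fin d → L) ∈
      Submodule.span L (Set.range (sicFam φ i0 H)) := by
    intro i₀
    set a : Fin d → L := M⁻¹.mulVec (Pi.single i₀ 1) with ha
    have hMa : M.mulVec a = Pi.single i₀ 1 := by
      rw [ha, Matrix.mulVec_mulVec, Matrix.mul_nonsing_inv M hMdet, Matrix.one_mulVec]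
    have hcomb : ∑ j, a j • sicFam φ i0 H (i₀, j) = (1 + (-2*(1+i0))) • (Pi.single i₀ 1 : Fin d → L) := by
      funext k
      have hMak : ∑ j, a j * φ (H k j) = (Pi.single i₀ 1 : Fin d → L) k := by
        rw [← hMa]
        simp only [Matrix.mulVec, dotProduct]
        exact Finset.sum_congr rfl fun j _ => by
          rw [hM]; simp [RingHom.mapMatrix_apply, Matrix.map_apply]; ring
      rcases eq_or_ne k i₀ with rfl | hk
      · have h1 : (∑ j, a j • sicFam φ i0 H (k, j)) k
            = ∑ j, (1 + -2*(1+i0)) * (a j * φ (H k j)) := by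
          rw [Finset.sum_apply]
          refine Finset.sum_congr rfl fun j _ => ?_
          show a j * (φ (H k j) * (1 + (-2 * (1 + i0)) * (if k = k then 1 else 0))) = _
          rw [if_pos rfl]; ring
        rw [h1, ← Finset.mul_sum, hMak, Pi.single_eq_same]
        simp only [Pi.smul_apply, Pi.single_eq_same, smul_eq_mul]
        try ring
      · have h1 : (∑ j, a j • sicFam φ i0 H (i₀, j)) k
            = ∑ j, a j * φ (H k j) := by
          rw [Finset.sum_apply]
          refine Finset.sum_congr rfl fun j _ => ?_
          show a j * (φ (H k j) * (1 + (-2 * (1 + i0)) * (if k = i₀ then 1 else 0))) = _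
          rw [if_neg hk]; ring
        rw [h1, hMak, Pi.single_eq_of_ne hk]
        simp [Pi.single_eq_of_ne hk]
    have hmem : (1 + (-2*(1+i0))) • (Pi.single i₀ 1 : Fin d → L) ∈
        Submodule.span L (Set.range (sicFam φ i0 H)) := by
      rw [← hcomb]
      exact Submodule.sum_mem _ fun j _ =>
        Submodule.smul_mem _ _ (Submodule.subset_span ⟨(i₀, j), rfl⟩)
    have := Submodule.smul_mem _ ((1 + (-2*(1+i0)))⁻¹) hmem
    rwa [smul_smul, inv_mul_cancel₀ hz1, one_smul] at this
  have hv : v = ∑ i, v i • (Pi.single i 1 : Fin d → L) := by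
    funext k
    rw [Finset.sum_apply]
    have hterm : ∀ i, (v i • (Pi.single i (1:L) : Fin d → L)) k = if k = i then v i else 0 := by
      intro i
      rcases eq_or_ne k i with rfl | h
      · simp
      · simp [Pi.single_eq_of_ne h, h]
    rw [Finset.sum_congr rfl fun i _ => hterm i, Finset.sum_ite_eq Finset.univ k v]
    simp
  rw [hv]
  exact Submodule.sum_mem _ fun i _ => Submodule.smul_mem _ _ (hsingle i)
end Aux

theorem stmt_13 {K L : Type*} [Field K] [Field L]
    (hK2 : (2 : K) ≠ 0) (hKroot : ∀ a : K, a ^ 2 ≠ -1)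
    (φ : K →+* L) (i0 : L) (hi0 : i0 ^ 2 = -1)
    (conj : L →+* L) (hconj2 : ∀ x : L, conj (conj x) = x)
    (hconjφ : ∀ a : K, conj (φ a) = φ a) (hconji : conj i0 = -i0)
    (hLgen : ∀ x : L, ∃ a b : K, x = φ a + φ b * i0)
    {d : ℕ} (H : Matrix (Fin d) (Fin d) K)
    (hH1 : ∀ i j, H i j ^ 2 = 1)
    (hH2 : H.transpose * H = (d : K) • (1 : Matrix (Fin d) (Fin d) K))
    (hd8 : (d : K) = 8)
    (π : Equiv.Perm (Fin d × Fin d)) :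
    SICStrongEquiv conj π (sicFam φ i0 H) (sicFam φ i0 H) ↔
    ∃ f : ({a : L // a = 1 ∨ a = -1 ∨ a = i0 ∨ a = -i0} × (Fin d × Fin d)) ≃
        ({a : L // a = 1 ∨ a = -1 ∨ a = i0 ∨ a = -i0} × (Fin d × Fin d)),
      (∀ v, (f v).2 = π v.2) ∧
      ∃ ε : L, (ε = 1 ∨ ε = -1) ∧ ((3 : K) ≠ 0 → ε = 1) ∧
        ∀ ω : L, (ω = 1 ∨ ω = -1 ∨ ω = i0 ∨ ω = -i0) → ∀ v w,
          (sicEdge conj (sicFam φ i0 H) ω (v.1.1, v.2) (w.1.1, w.2) ↔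
            sicEdge conj (sicFam φ i0 H) (ε * ω)
              ((f v).1.1, (f v).2) ((f w).1.1, (f w).2)) := by

  have h8K : (8 : K) ≠ 0 := by
    intro h
    apply hK2
    have h23 : (2:K)^3 = 0 := by rw [show (2:K)^3 = 8 by norm_num, h]
    exact pow_eq_zero_iff (by norm_num) |>.mp h23
  have h4K : (4 : K) ≠ 0 := by
    intro h
    apply hK2
    have h22 : (2:K)^2 = 0 := by rw [show (2:K)^2 = 4 by norm_num, h]
    exact pow_eq_zero_iff (by norm_num) |>.mp h22
  have h4L : (4 : L) ≠ 0 := by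
    rw [show (4:L) = φ 4 from (map_ofNat φ 4).symm]
    exact (map_ne_zero φ).mpr h4K
  have hd0 : 0 < d := by
    rcases Nat.eq_zero_or_pos d with h | h
    · exfalso; apply h8K; rw [← hd8, h, Nat.cast_zero]
    · exact h
  have hGd := gram_self φ i0 conj hconjφ hconji hi0 H hH1 hH2 hd8
  have hGo := gram_offdiag φ i0 conj hconjφ hconji hi0 H hH1 hH2 hd8
  constructor
  · -- forward direction
    rintro ⟨U, c, cc, hU, hc, hx⟩
    rcases lt_or_ge d 2 with hd2 | hd2
    · -- trivial case d = 1
      haveI : Subsingleton (Fin d) := Fin.subsingleton_iff_le_one.mpr (by omega)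
      have hsub : ∀ m : Fin d × Fin d, π m = m := fun m => Subsingleton.elim _ _
      refine ⟨Equiv.prodCongr (Equiv.refl _) π, fun v => rfl, 1, Or.inl rfl, fun _ => rfl, ?_⟩
      intro ω hω v w
      rw [one_mul]
      show sicEdge conj (sicFam φ i0 H) ω (v.1.1, v.2) (w.1.1, w.2) ↔
        sicEdge conj (sicFam φ i0 H) ω (v.1.1, π v.2) (w.1.1, π w.2)
      rw [hsub v.2, hsub w.2]
    · -- main case d ≥ 2
      have ex_ne : ∀ m : Fin d × Fin d, ∃ n, n ≠ m := by
        intro m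
        apply Fintype.exists_ne_of_one_lt_card
        rw [Fintype.card_prod, Fintype.card_fin]
        nlinarith
      have hGt : ∀ m n, sesq conj (sicFam φ i0 H (π m)) (sicFam φ i0 H (π n))
          = conj (c m) * c n * sesq conj (sicFam φ i0 H m) (sicFam φ i0 H n) := by
        intro m n
        rw [hx m, hx n, sesq_smul_smul conj (c m) (c n) (U (sicFam φ i0 H m)) (U (sicFam φ i0 H n)),
          hU]
      have hρC4 : ∀ m n, m ≠ n → C4 i0 (conj (c m) * c n) := by
        intro m n hmn
        obtain ⟨ω, hω, hG⟩ := hGo m n hmn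
        obtain ⟨ω', hω', hG'⟩ := hGo (π m) (π n) (fun h => hmn (π.injective h))
        have hω0 : ω ≠ 0 := C4.nonzero hi0 hω
        have key := hGt m n
        rw [hG, hG'] at key
        have h44 : (4:L) * (conj (c m) * c n * ω) = 4 * ω' := by linear_combination -key
        have hmm := mul_left_cancel₀ h4L h44
        have hρ : conj (c m) * c n = ω' * ω⁻¹ := (eq_mul_inv_iff_mul_eq₀ hω0).mpr hmm
        rw [hρ]
        refine C4.mul_mem hi0 hω' ?_
        rw [C4.inv_eq_conj conj hi0 hconji hω]
        exact C4.conj_mem conj hconji hω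
      obtain ⟨m₀, -⟩ : ∃ m : Fin d × Fin d, True := ⟨(⟨0, hd0⟩, ⟨0, hd0⟩), trivial⟩
      have hcc2 : cc * cc = 1 := by
        obtain ⟨n, hn⟩ := ex_ne m₀
        have hρ := hρC4 n m₀ hn
        have hself := C4.conj_mul_self conj hi0 hconji hρ
        rw [map_mul, hconj2] at hself
        calc cc * cc = (conj (c n) * c n) * (conj (c m₀) * c m₀) := by rw [hc n, hc m₀]
          _ = 1 := by linear_combination hself
      have hccpm := mul_self_eq_one_iff.mp hcc2
      have hcc0 : cc ≠ 0 := by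
        rcases hccpm with rfl | rfl
        · exact one_ne_zero
        · simp
      have hccC4 : C4 i0 cc := by
        rcases hccpm with h | h
        · rw [h]; exact C4.one i0
        · rw [h]; exact Or.inr (Or.inl rfl)
      have hε3 : (3:K) ≠ 0 → cc = 1 := by
        intro h3
        have h12 : (12:L) ≠ 0 := by
          rw [show (12:L) = φ 12 from (map_ofNat φ 12).symm]
          apply (map_ne_zero φ).mpr
          intro h
          rw [show (12:K) = 4 * 3 by norm_num] at h
          rcases mul_eq_zero.mp h with h' | h'
          · exact h4K h'
          · exact h3 h'
        have key := hGt m₀ m₀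
        rw [hGd (π m₀), hGd m₀, hc m₀] at key
        have : cc * 12 = 1 * 12 := by linear_combination -key
        exact mul_right_cancel₀ h12 this
      set u : Fin d × Fin d → L := fun m => conj (c m₀) * c m with hu
      have huC4 : ∀ m, C4 i0 (u m) := by
        intro m
        rcases eq_or_ne m m₀ with rfl | hm
        · show C4 i0 (conj (c m) * c m); rw [hc m]; exact hccC4
        · exact hρC4 m₀ m (Ne.symm hm)
      have huinv : ∀ m, conj (u m) * u m = 1 := fun m =>
        C4.conj_mul_self conj hi0 hconji (huC4 m)
      refine ⟨⟨fun v => (⟨v.1.1 * conj (u v.2),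
            C4.mul_mem hi0 v.1.2 (C4.conj_mem conj hconji (huC4 v.2))⟩, π v.2),
          fun w => (⟨w.1.1 * u (π.symm w.2), C4.mul_mem hi0 w.1.2 (huC4 _)⟩, π.symm w.2),
          ?_, ?_⟩, fun v => rfl, cc, hccpm, hε3, ?_⟩
      · intro v
        refine Prod.ext (Subtype.ext ?_) ?_
        · show v.1.1 * conj (u v.2) * u (π.symm (π v.2)) = v.1.1
          rw [Equiv.symm_apply_apply, mul_assoc, huinv v.2, mul_one]
        · exact Equiv.symm_apply_apply π v.2
      · intro w
        refine Prod.ext (Subtype.ext ?_) ?_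
        · show w.1.1 * u (π.symm w.2) * conj (u (π.symm w.2)) = w.1.1
          rw [mul_assoc, mul_comm (u (π.symm w.2)), huinv (π.symm w.2), mul_one]
        · exact Equiv.apply_symm_apply π w.2
      · intro ω hω v w
        obtain ⟨⟨α, hα⟩, m⟩ := v
        obtain ⟨⟨β, hβ⟩, n⟩ := w
        simp only [sicEdge, Equiv.coe_fn_mk]
        rw [sesq_smul_smul conj α β, sesq_smul_smul conj (α * conj (u m)) (β * conj (u n))]
        have hkey : conj (α * conj (u m)) * (β * conj (u n)) *
            sesq conj (sicFam φ i0 H (π m)) (sicFam φ i0 H (π n))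
            = cc * (conj α * β * sesq conj (sicFam φ i0 H m) (sicFam φ i0 H n)) := by
          rw [hGt m n, map_mul, hconj2]
          simp only [hu]
          have h1 : conj (conj (c m₀) * c n) = c m₀ * conj (c n) := by
            rw [map_mul, hconj2]
          rw [h1]
          set G := sesq conj (sicFam φ i0 H m) (sicFam φ i0 H n) with hG
          set A' := conj α * β * G with hA'
          linear_combination (A' * (conj (c m) * c m) * (conj (c n) * c n)) * hc m₀ +
            (A' * cc * (conj (c n) * c n)) * hc m + (A' * cc * cc) * hc n + (A' * cc) * hcc2
        constructor
        · intro h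
          rw [hkey, h]; ring
        · intro h
          rw [hkey] at h
          have h' : cc * (conj α * β * sesq conj (sicFam φ i0 H m) (sicFam φ i0 H n))
              = cc * (4 * ω) := by linear_combination h
          exact mul_left_cancel₀ hcc0 h'
  · -- BACKWARD
    rintro ⟨f, hf2, ε, hε1, hε3, hedge⟩
    rcases lt_or_ge d 2 with hd2 | hd2
    · -- trivial case d ≤ 1
      haveI : Subsingleton (Fin d) := Fin.subsingleton_iff_le_one.mpr (by omega)
      have hsub : ∀ m : Fin d × Fin d, π m = m := fun m => Subsingleton.elim _ _
      refine ⟨LinearEquiv.refl L (Fin d → L), fun _ => 1, 1, ?_, ?_, ?_⟩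
      · intro v w; rfl
      · intro m; rw [map_one, one_mul]
      · intro m
        rw [hsub m]
        funext k
        simp
    · -- main case d ≥ 2
      have ex_ne : ∀ m : Fin d × Fin d, ∃ n, n ≠ m := by
        intro m
        apply Fintype.exists_ne_of_one_lt_card
        rw [Fintype.card_prod, Fintype.card_fin]
        nlinarith
      have hεne : (ε : L) ≠ 0 := by
        rcases hε1 with rfl | rfl
        · exact one_ne_zero
        · simp
      have h2L : (2 : L) ≠ 0 := by
        rw [show (2:L) = φ 2 from (map_ofNat φ 2).symm]
        exact (map_ne_zero φ).mpr hK2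
      -- the phase function u
      set u : Fin d × Fin d → L := fun m => (f (⟨1, C4.one i0⟩, m)).1.1 with hu
      have huC4 : ∀ m, C4 i0 (u m) := fun m => (f (⟨1, C4.one i0⟩, m)).1.2
      have huinv : ∀ m, conj (u m) * u m = 1 := fun m =>
        C4.conj_mul_self conj hi0 hconji (huC4 m)
      have hun0 : ∀ m, u m ≠ 0 := fun m => C4.nonzero hi0 (huC4 m)
      -- the key identity from the graph isomorphism
      have hKI : ∀ (m n : Fin d × Fin d), m ≠ n → ∀ (α β : L) (hα : C4 i0 α) (hβ : C4 i0 β),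
          conj ((f (⟨α, hα⟩, m)).1.1) * (f (⟨β, hβ⟩, n)).1.1 *
            sesq conj (sicFam φ i0 H (π m)) (sicFam φ i0 H (π n))
          = ε * (conj α * β * sesq conj (sicFam φ i0 H m) (sicFam φ i0 H n)) := by
        intro m n hmn α β hα hβ
        obtain ⟨ω₀, hω₀, hG⟩ := hGo m n hmn
        have hωC4 : C4 i0 (conj α * β * ω₀) :=
          C4.mul_mem hi0 (C4.mul_mem hi0 (C4.conj_mem conj hconji hα) hβ) hω₀
        have hL : sicEdge conj (sicFam φ i0 H) (conj α * β * ω₀) (α, m) (β, n) := by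
          show sesq conj (fun k => (α, m).1 * sicFam φ i0 H (α, m).2 k)
            (fun k => (β, n).1 * sicFam φ i0 H (β, n).2 k) = 4 * (conj α * β * ω₀)
          rw [sesq_smul_smul conj α β, hG]
          ring
        have hR := (hedge (conj α * β * ω₀) hωC4 (⟨α, hα⟩, m) (⟨β, hβ⟩, n)).mp hL
        rw [hf2 (⟨α, hα⟩, m), hf2 (⟨β, hβ⟩, n)] at hR
        unfold sicEdge at hR
        rw [sesq_smul_smul conj ((f (⟨α, hα⟩, m)).1.1) ((f (⟨β, hβ⟩, n)).1.1)] at hR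
        rw [hG]
        linear_combination hR
      -- the first coordinate of f acts by multiplication by u
      have hgAll : ∀ (m : Fin d × Fin d) (α : L) (hα : C4 i0 α),
          (f (⟨α, hα⟩, m)).1.1 = α * u m := by
        intro m α hα
        obtain ⟨n, hn⟩ := ex_ne m
        have hmn : m ≠ n := Ne.symm hn
        obtain ⟨ω₀', hω₀', hG'⟩ := hGo (π m) (π n) (fun h => hmn (π.injective h))
        have hG'0 : sesq conj (sicFam φ i0 H (π m)) (sicFam φ i0 H (π n)) ≠ 0 := by
          rw [hG']
          exact mul_ne_zero h4L (C4.nonzero hi0 hω₀')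
        have h1 := hKI m n hmn α 1 hα (C4.one i0)
        have h2 := hKI m n hmn 1 1 (C4.one i0) (C4.one i0)
        rw [map_one conj] at h2
        set g := (f (⟨α, hα⟩, m)).1.1 with hg
        set g1 := (f (⟨(1:L), C4.one i0⟩, n)).1.1 with hg1
        have hg10 : g1 ≠ 0 := C4.nonzero hi0 (f (⟨(1:L), C4.one i0⟩, n)).1.2
        -- h1 : conj g * g1 * G' = ε * (conj α * 1 * G); h2 : conj (u m) * g1 * G' = ε * (1*1*G)
        have e1 : conj g * (g1 * sesq conj (sicFam φ i0 H (π m)) (sicFam φ i0 H (π n)))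
            = (conj α * conj (u m)) * (g1 * sesq conj (sicFam φ i0 H (π m)) (sicFam φ i0 H (π n))) := by
          linear_combination h1 - conj α * h2
        have e2 := mul_right_cancel₀ (mul_ne_zero hg10 hG'0) e1
        have e3 := congrArg conj e2
        rw [hconj2, map_mul, hconj2, hconj2] at e3
        exact e3
      have hstar : ∀ (m n : Fin d × Fin d), m ≠ n →
          conj (u m) * u n * sesq conj (sicFam φ i0 H (π m)) (sicFam φ i0 H (π n))
          = ε * sesq conj (sicFam φ i0 H m) (sicFam φ i0 H n) := by
        intro m n hmn
        have h := hKI m n hmn 1 1 (C4.one i0) (C4.one i0)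
        rw [map_one] at h
        rw [h]
        ring
      -- the scalar lambda
      obtain ⟨lam, hlam, heps12⟩ : ∃ l : L, conj l * l = ε ∧ ε * (12:L) = 12 := by
        rcases hε1 with rfl | rfl
        · exact ⟨1, by rw [map_one, one_mul], by ring⟩
        · have h3 : (3:K) = 0 := by
            by_contra h3
            have h := hε3 h3
            apply h2L
            linear_combination -h
          have h3L : (3:L) = 0 := by
            rw [show (3:L) = φ 3 from (map_ofNat φ 3).symm, h3, map_zero]
          refine ⟨1 + i0, ?_, ?_⟩
          · rw [map_add, map_one, hconji]
            linear_combination -hi0 + h3L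
          · linear_combination -8 * h3L
      have hlam0 : lam ≠ 0 := by
        intro h
        apply hεne
        rw [← hlam, h, mul_zero]
      -- the scalars c
      set c : Fin d × Fin d → L := fun m => lam * conj (u m) with hcdef
      have hcnz : ∀ m, c m ≠ 0 := by
        intro m
        apply mul_ne_zero hlam0
        intro h
        apply hun0 m
        rw [← hconj2 (u m), h, map_zero]
      have hccm : ∀ m, conj (c m) * c m = ε := by
        intro m
        show conj (lam * conj (u m)) * (lam * conj (u m)) = ε
        rw [map_mul, hconj2]
        linear_combination (u m * conj (u m)) * hlam + ε * huinv m
      -- the Gram transfer identity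
      have hGt : ∀ m n, sesq conj (sicFam φ i0 H (π m)) (sicFam φ i0 H (π n))
          = conj (c m) * c n * sesq conj (sicFam φ i0 H m) (sicFam φ i0 H n) := by
        intro m n
        rcases eq_or_ne m n with rfl | hmn
        · rw [hGd (π m), hGd m, hccm m]
          exact heps12.symm
        · have hS := hstar m n hmn
          have hA := huinv m
          have hB := huinv n
          have h2 : u m * conj (u n) *
              (conj (u m) * u n * sesq conj (sicFam φ i0 H (π m)) (sicFam φ i0 H (π n)))
              = sesq conj (sicFam φ i0 H (π m)) (sicFam φ i0 H (π n)) := by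
            linear_combination (conj (u n) * u n *
              sesq conj (sicFam φ i0 H (π m)) (sicFam φ i0 H (π n))) * hA +
              sesq conj (sicFam φ i0 H (π m)) (sicFam φ i0 H (π n)) * hB
          have h3 : sesq conj (sicFam φ i0 H (π m)) (sicFam φ i0 H (π n))
              = u m * conj (u n) * (ε * sesq conj (sicFam φ i0 H m) (sicFam φ i0 H n)) := by
            rw [← hS, h2]
          show _ = conj (lam * conj (u m)) * (lam * conj (u n)) * _
          rw [map_mul, hconj2]
          linear_combination h3 - (u m * conj (u n) *
            sesq conj (sicFam φ i0 H m) (sicFam φ i0 H n)) * hlam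
      -- the matrices
      set A : Matrix (Fin d) (Fin d × Fin d) L := fun k m => sicFam φ i0 H m k with hA
      set A' : Matrix (Fin d) (Fin d × Fin d) L :=
        fun k m => (c m)⁻¹ * sicFam φ i0 H (π m) k with hA'
      have hGram' : ∀ m n, sesq conj (fun k => A' k m) (fun k => A' k n)
          = sesq conj (sicFam φ i0 H m) (sicFam φ i0 H n) := by
        intro m n
        show sesq conj (fun k => (c m)⁻¹ * sicFam φ i0 H (π m) k)
          (fun k => (c n)⁻¹ * sicFam φ i0 H (π n) k) = _
        rw [sesq_smul_smul conj ((c m)⁻¹) ((c n)⁻¹), hGt m n, map_inv₀]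
        have hcm0 : conj (c m) ≠ 0 := fun h => hcnz m (by rw [← hconj2 (c m), h, map_zero])
        have hre : (conj (c m))⁻¹ * (c n)⁻¹ * (conj (c m) * c n *
            sesq conj (sicFam φ i0 H m) (sicFam φ i0 H n))
            = ((conj (c m))⁻¹ * conj (c m)) * ((c n)⁻¹ * c n) *
              sesq conj (sicFam φ i0 H m) (sicFam φ i0 H n) := by ring
        rw [hre, inv_mul_cancel₀ hcm0, inv_mul_cancel₀ (hcnz n), one_mul, one_mul]
      have hspan := span_sicFam φ hK2 hKroot i0 hi0 H hH2 hd8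
      have hsurjA : ∀ v : Fin d → L, ∃ p, A.mulVec p = v := by
        intro v
        have hv : v ∈ Submodule.span L (Set.range (sicFam φ i0 H)) := by
          rw [hspan]; trivial
        obtain ⟨p, hp⟩ := (Submodule.mem_span_range_iff_exists_fun L).mp hv
        refine ⟨p, ?_⟩
        funext k
        rw [← hp, Finset.sum_apply]
        simp only [Matrix.mulVec, dotProduct]
        exact Finset.sum_congr rfl fun m _ => by
          simp [hA, mul_comm]
      choose Rp hRp using fun k : Fin d => hsurjA (Pi.single k 1)
      set R : Matrix (Fin d × Fin d) (Fin d) L := fun m k => Rp k m with hR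
      have hAR : A * R = 1 := by
        ext k k'
        rw [Matrix.mul_apply]
        have h1 : ∑ m, A k m * R m k' = A.mulVec (Rp k') k := by
          simp only [Matrix.mulVec, dotProduct, hR]
        rw [h1, hRp k']
        rw [Matrix.one_apply, Pi.single_apply]
      -- kernel inclusion
      have hker : ∀ p : Fin d × Fin d → L, A.mulVec p = 0 → A'.mulVec p = 0 := by
        intro p hp
        have hw : ∀ n, sesq conj (fun k => A' k n) (A'.mulVec p) = 0 := by
          intro n
          rw [sesq_mulVec_right conj _ A' p]
          rw [Finset.sum_congr rfl fun m _ => by rw [hGram' n m]]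
          have h2 : ∑ m, p m * sesq conj (sicFam φ i0 H n) (sicFam φ i0 H m)
              = sesq conj (sicFam φ i0 H n) (A.mulVec p) := by
            rw [sesq_mulVec_right conj _ A p]
          rw [h2, hp]
          simp [sesq]
        have hspan' : Submodule.span L (Set.range (fun m => (fun k => A' k m))) = ⊤ := by
          rw [eq_top_iff, ← hspan]
          apply Submodule.span_le.mpr
          rintro _ ⟨n, rfl⟩
          have hxn : sicFam φ i0 H n = c (π.symm n) • (fun k => A' k (π.symm n)) := by
            funext k
            show sicFam φ i0 H n k = c (π.symm n) * ((c (π.symm n))⁻¹ * sicFam φ i0 H (π (π.symm n)) k)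
            rw [Equiv.apply_symm_apply, ← mul_assoc, mul_inv_cancel₀ (hcnz (π.symm n)), one_mul]
          rw [hxn]
          exact Submodule.smul_mem _ _ (Submodule.subset_span ⟨π.symm n, rfl⟩)
        have hall : ∀ v, v ∈ Submodule.span L (Set.range (fun m => (fun k => A' k m))) →
            sesq conj v (A'.mulVec p) = 0 := by
          intro v hv
          induction hv using Submodule.span_induction with
          | mem v hv => obtain ⟨n, rfl⟩ := hv; exact hw n
          | zero => simp [sesq]
          | add a b _ _ ha hb =>
              have := sesq_add_left conj a b (A'.mulVec p)
              rw [this, ha, hb, add_zero]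
          | smul a v _ hv =>
              rw [sesq_smul_left conj a v (A'.mulVec p), hv, mul_zero]
        funext k
        have hk := hall (Pi.single k 1) (by rw [hspan']; trivial)
        rw [sesq_single] at hk
        simpa using hk
      set Umat : Matrix (Fin d) (Fin d) L := A' * R with hUmat
      have hUA : ∀ m, Umat.mulVec (sicFam φ i0 H m)
          = fun k => (c m)⁻¹ * sicFam φ i0 H (π m) k := by
        intro m
        have hxm : sicFam φ i0 H m = A.mulVec (Pi.single m 1) := by
          rw [Matrix.mulVec_single]
          funext k
          simp [hA, Matrix.col, Matrix.transpose]
        have h1 : A.mulVec (R.mulVec (sicFam φ i0 H m) - Pi.single m 1) = 0 := by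
          rw [Matrix.mulVec_sub, Matrix.mulVec_mulVec, hAR, Matrix.one_mulVec, ← hxm, sub_self]
        have h2 := hker _ h1
        rw [Matrix.mulVec_sub, sub_eq_zero] at h2
        calc Umat.mulVec (sicFam φ i0 H m)
            = A'.mulVec (R.mulVec (sicFam φ i0 H m)) := (Matrix.mulVec_mulVec _ _ _).symm
          _ = A'.mulVec (Pi.single m 1) := h2
          _ = fun k => (c m)⁻¹ * sicFam φ i0 H (π m) k := by
              rw [Matrix.mulVec_single]
              funext k
              simp [hA', Matrix.col, Matrix.transpose]
      have hUMA : Umat * A = A' := by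
        ext k m
        have h1 : (Umat * A) k m = Umat.mulVec (fun s => A s m) k := by
          rw [Matrix.mul_apply]
          simp only [Matrix.mulVec, dotProduct]
        have h2 : (fun s => A s m) = sicFam φ i0 H m := rfl
        rw [h1, h2, hUA m]
      have hpres : ∀ v w, sesq conj (Umat.mulVec v) (Umat.mulVec w) = sesq conj v w := by
        intro v w
        obtain ⟨p, rfl⟩ := hsurjA v
        obtain ⟨q, rfl⟩ := hsurjA w
        rw [Matrix.mulVec_mulVec, Matrix.mulVec_mulVec, hUMA]
        rw [sesq_mulVec_mulVec conj A' p q, sesq_mulVec_mulVec conj A p q]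
        refine Finset.sum_congr rfl fun m _ => Finset.sum_congr rfl fun n _ => ?_
        rw [hGram' m n]
      -- invertibility
      have hsurjA' : ∀ v : Fin d → L, ∃ t, A'.mulVec t = v := by
        intro v
        have hspan' : Submodule.span L (Set.range (fun m => (fun k => A' k m))) = ⊤ := by
          rw [eq_top_iff, ← hspan]
          apply Submodule.span_le.mpr
          rintro _ ⟨n, rfl⟩
          have hxn : sicFam φ i0 H n = c (π.symm n) • (fun k => A' k (π.symm n)) := by
            funext k
            show sicFam φ i0 H n k = c (π.symm n) * ((c (π.symm n))⁻¹ * sicFam φ i0 H (π (π.symm n)) k)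
            rw [Equiv.apply_symm_apply, ← mul_assoc, mul_inv_cancel₀ (hcnz (π.symm n)), one_mul]
          rw [hxn]
          exact Submodule.smul_mem _ _ (Submodule.subset_span ⟨π.symm n, rfl⟩)
        have hv : v ∈ Submodule.span L (Set.range (fun m => (fun k => A' k m))) := by
          rw [hspan']; trivial
        obtain ⟨t, ht⟩ := (Submodule.mem_span_range_iff_exists_fun L).mp hv
        refine ⟨t, ?_⟩
        funext k
        rw [← ht, Finset.sum_apply]
        simp only [Matrix.mulVec, dotProduct]
        exact Finset.sum_congr rfl fun m _ => by simp [mul_comm]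
      choose Wp hWp using fun k : Fin d => hsurjA' (Pi.single k 1)
      set W : Matrix (Fin d) (Fin d) L := fun s k => (A.mulVec (Wp k)) s with hW
      have hUW : Umat * W = 1 := by
        ext s k
        have h1 : (Umat * W) s k = Umat.mulVec (fun t => W t k) s := by
          rw [Matrix.mul_apply]
          simp only [Matrix.mulVec, dotProduct]
        have h2 : (fun t => W t k) = A.mulVec (Wp k) := rfl
        rw [h1, h2, Matrix.mulVec_mulVec, hUMA, hWp k]
        rw [Matrix.one_apply, Pi.single_apply]
      haveI hinv : Invertible Umat := invertibleOfRightInverse _ _ hUW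
      refine ⟨Matrix.toLinearEquiv' Umat hinv, c, ε, ?_, hccm, ?_⟩
      · intro v w
        have happ : ∀ v : Fin d → L, (Matrix.toLinearEquiv' Umat hinv) v = Umat.mulVec v :=
          fun v => rfl
        rw [happ, happ]
        exact hpres v w
      · intro m
        have happ : (Matrix.toLinearEquiv' Umat hinv) (sicFam φ i0 H m)
            = Umat.mulVec (sicFam φ i0 H m) := rfl
        funext k
        rw [happ, hUA m, ← mul_assoc, mul_inv_cancel₀ (hcnz m), one_mul]
end
end

section
/- Let X = [d]×[d], let {x_m}_{m∈X} and {x'_m}_{m∈X} be SICs in L^d constructed (from modular Hadamard matrices of order d) as in the construction, and let G, G' ∈ K^{X×X} be the entrywise squares of their Gram matrices: G_{m,n} = (x_m, x_n)² and G'_{m,n} = (x'_m, x'_n)². If a permutation π ∈ S_X induces a weak equivalence from {x_m} to {x'_m}, then π induces a strong equivalence from G to G'. -/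
open scoped BigOperators

noncomputable section

lemma gram_entry {K L : Type*} [Field K] [Field L]
    (φ : K →+* L) (i0 : L) (hi0 : i0 ^ 2 = -1)
    (conj : L →+* L) (hconjφ : ∀ a : K, conj (φ a) = φ a) (hconji : conj i0 = -i0)
    {d : ℕ} (H : Matrix (Fin d) (Fin d) K)
    (hH1 : ∀ i j, H i j ^ 2 = 1)
    (hH2 : H.transpose * H = (d : K) • (1 : Matrix (Fin d) (Fin d) K))
    (hd8 : (d : K) = 8) (m n : Fin d × Fin d) :
    ∃ e : L, (e = 1 ∨ e = -1) ∧
      sesq conj (sicFam φ i0 H m) (sicFam φ i0 H n) ^ 2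
        = if m = n then 144 else e * 16 := by
  classical
  obtain ⟨i, j⟩ := m; obtain ⟨i', j'⟩ := n
  set z : L := -2 * (1 + i0) with hz
  set w : L := -2 * (1 - i0) with hw
  have hconjz : conj z = w := by
    rw [hz, hw, map_mul, map_add, map_one, hconji, map_neg, map_ofNat]; ring
  have point : ∀ k : Fin d,
      conj (φ (H k j) * (1 + z * (if k = i then 1 else 0)))
        * (φ (H k j') * (1 + z * (if k = i' then 1 else 0)))
      = φ (H k j * H k j')
        + (if k = i then w * φ (H k j * H k j') else 0)
        + (if k = i' then z * φ (H k j * H k j') else 0)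
        + (if k = i then (if k = i' then w * z * φ (H k j * H k j') else 0) else 0) := by
    intro k
    have hc1 : conj (φ (H k j) * (1 + z * (if k = i then (1:L) else 0)))
        = φ (H k j) * (1 + w * (if k = i then 1 else 0)) := by
      by_cases h : k = i <;>
        simp [h, map_mul, map_add, map_one, hconjφ, hconjz]
    rw [hc1, map_mul φ]
    rcases eq_or_ne k i with rfl | h1
    · rcases eq_or_ne k i' with rfl | h2
      · simp; try ring
      · simp [h2]; try ring
    · rcases eq_or_ne k i' with rfl | h2
      · simp [h1]; try ring
      · simp [h1, h2]; try ring
  have hsum : sesq conj (sicFam φ i0 H (i, j)) (sicFam φ i0 H (i', j'))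
      = φ (∑ k, H k j * H k j') + w * φ (H i j * H i j') + z * φ (H i' j * H i' j')
        + (if i = i' then w * z * φ (H i j * H i j') else 0) := by
    unfold sesq sicFam sicVec
    rw [← hz]
    rw [Finset.sum_congr rfl fun k _ => point k]
    rw [Finset.sum_add_distrib, Finset.sum_add_distrib, Finset.sum_add_distrib,
      Finset.sum_ite_eq' Finset.univ i, Finset.sum_ite_eq' Finset.univ i',
      Finset.sum_ite_eq' Finset.univ i, ← map_sum]
    simp
  have hS : φ (∑ k, H k j * H k j') = if j = j' then (8:L) else 0 := by
    have h2 := congrFun (congrFun hH2 j) j'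
    simp only [Matrix.mul_apply, Matrix.transpose_apply, Matrix.smul_apply,
      Matrix.one_apply, smul_eq_mul, hd8] at h2
    rw [h2]
    by_cases h : j = j' <;> simp [h, map_ofNat]
  have hsq1 : ∀ r : Fin d, φ (H r j * H r j') ^ 2 = 1 := by
    intro r; rw [← map_pow, mul_pow, hH1, hH1, one_mul, map_one]
  have hsgn : ∀ r : Fin d, φ (H r j * H r j') = 1 ∨ φ (H r j * H r j') = -1 := by
    intro r
    have h3 : (φ (H r j * H r j') - 1) * (φ (H r j * H r j') + 1) = 0 := by
      linear_combination hsq1 r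
    rcases mul_eq_zero.mp h3 with h | h
    · left; linear_combination h
    · right; linear_combination h
  by_cases hii : i = i'
  · subst hii
    by_cases hjj : j = j'
    · subst hjj
      refine ⟨1, Or.inl rfl, ?_⟩
      rw [if_pos rfl, hsum, hS, if_pos rfl, if_pos rfl]
      have ha1 : φ (H i j * H i j) = 1 := by
        rw [show H i j * H i j = H i j ^ 2 from (sq (H i j)).symm, hH1, map_one]
      rw [ha1, hz, hw]
      linear_combination (-80 + 16 * i0 ^ 2) * hi0
    · refine ⟨1, Or.inl rfl, ?_⟩
      rw [if_neg (by simp [Prod.ext_iff, hjj]), hsum, hS, if_neg hjj, if_pos rfl]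
      rw [hz, hw]
      linear_combination (16 * i0 ^ 4) * hsq1 i + (16 * (i0 ^ 2 - 1)) * hi0
  · by_cases hjj : j = j'
    · subst hjj
      refine ⟨1, Or.inl rfl, ?_⟩
      rw [if_neg (by simp [Prod.ext_iff, hii]), hsum, hS, if_pos rfl, if_neg hii]
      have ha1 : φ (H i j * H i j) = 1 := by
        rw [show H i j * H i j = H i j ^ 2 from (sq (H i j)).symm, hH1, map_one]
      have hb1 : φ (H i' j * H i' j) = 1 := by
        rw [show H i' j * H i' j = H i' j ^ 2 from (sq (H i' j)).symm, hH1, map_one]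
      rw [ha1, hb1, hz, hw]
      ring
    · refine ⟨φ (H i j * H i j') * φ (H i' j * H i' j'), ?_, ?_⟩
      · rcases hsgn i with h1 | h1 <;> rcases hsgn i' with h2 | h2 <;>
          rw [h1, h2] <;> norm_num
      · rw [if_neg (by simp [Prod.ext_iff, hjj]), hsum, hS, if_neg hjj, if_neg hii]
        rw [hz, hw]
        linear_combination (4 - 8 * i0 + 4 * i0 ^ 2) * hsq1 i
          + (4 + 8 * i0 + 4 * i0 ^ 2) * hsq1 i'
          + (8 - 8 * (φ (H i j * H i j') * φ (H i' j * H i' j'))) * hi0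

private lemma sic_strong_aux {K L : Type*} [Field K] [Field L]
    (hK2 : (2 : K) ≠ 0) (hKroot : ∀ a : K, a ^ 2 ≠ -1)
    (φ : K →+* L) (i0 : L) (hi0 : i0 ^ 2 = -1)
    (conj : L →+* L) (hconj2 : ∀ x : L, conj (conj x) = x)
    (hconjφ : ∀ a : K, conj (φ a) = φ a) (hconji : conj i0 = -i0)
    (hLgen : ∀ x : L, ∃ a b : K, x = φ a + φ b * i0)
    {d : ℕ} (x x' : Fin d × Fin d → Fin d → L)
    (π : Equiv.Perm (Fin d × Fin d))
    (U : (Fin d → L) ≃ₗ[L] (Fin d → L)) (c : Fin d × Fin d → L) (cc : L) (γ : L ≃+* L)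
    (hU : ∀ v w : Fin d → L, sesq conj (U v) (U w) = sesq conj v w)
    (hc : ∀ m, conj (c m) * c m = cc)
    (hγc : ∀ a : L, γ (conj a) = conj (γ a))
    (hy : ∀ m, x' (π m) = fun k => c m * γ (U (x m) k))
    (hval : ∀ m n, ∃ e : L, (e = 1 ∨ e = -1) ∧
      sesq conj (x m) (x n) ^ 2 = if m = n then 144 else e * 16)
    (hval' : ∀ m n, ∃ e : L, (e = 1 ∨ e = -1) ∧
      sesq conj (x' m) (x' n) ^ 2 = if m = n then 144 else e * 16) :
    MatStrongEquiv π
      (Matrix.of fun m n : Fin d × Fin d => (sesq conj (x m) (x n)) ^ 2)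
      (Matrix.of fun m n : Fin d × Fin d => (sesq conj (x' m) (x' n)) ^ 2) := by
  classical
  have hφinj : Function.Injective φ := φ.injective
  have h2L : (2 : L) ≠ 0 := by
    intro h
    apply hK2
    apply hφinj
    rw [map_ofNat, map_zero, h]
  have h16 : (16 : L) ≠ 0 := by
    intro h
    apply h2L
    have : (16 : L) = 2 ^ 4 := by norm_num
    rw [this] at h
    exact pow_eq_zero_iff (by norm_num) |>.mp h
  -- Gram matrices
  set G : Fin d × Fin d → Fin d × Fin d → L := fun m n => sesq conj (x m) (x n) ^ 2 with hG
  set G' : Fin d × Fin d → Fin d × Fin d → L := fun m n => sesq conj (x' m) (x' n) ^ 2 with hG'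
  set v : Fin d × Fin d → L := fun m => conj (c m) ^ 2 with hv
  set t : Fin d × Fin d → L := fun m => (c m) ^ 2 with ht
  have hvt : ∀ m, v m * t m = cc ^ 2 := by
    intro m
    have := congrArg (· ^ 2) (hc m)
    simpa [hv, ht, mul_pow] using this
  -- the basic relation
  have hrel : ∀ m n, sesq conj (x' (π m)) (x' (π n))
      = conj (c m) * c n * γ (sesq conj (x m) (x n)) := by
    intro m n
    rw [hy m, hy n, ← hU (x m) (x n)]
    unfold sesq
    rw [map_sum γ, Finset.mul_sum]
    refine Finset.sum_congr rfl fun k _ => ?_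
    rw [map_mul conj, map_mul γ, ← hγc]
    ring
  have hγfix : ∀ m n, γ (G m n) = G m n := by
    intro m n
    obtain ⟨e, he, hGe⟩ := hval m n
    simp only [hG]
    rw [hGe]
    split
    · rw [map_ofNat]
    · rw [map_mul, map_ofNat]
      rcases he with rfl | rfl
      · rw [map_one]
      · rw [map_neg, map_one]
  have hrel2 : ∀ m n, G' (π m) (π n) = v m * t n * G m n := by
    intro m n
    simp only [hG', hG, hv, ht]
    rw [hrel m n, mul_pow, mul_pow, ← map_pow γ]
    have := hγfix m n
    simp only [hG] at this
    rw [this]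
  have hπne : ∀ {m n : Fin d × Fin d}, m ≠ n → π m ≠ π n := by
    intro m n hmn h
    exact hmn (π.injective h)
  -- sign of v m * t n for m ≠ n
  have hsign : ∀ m n, m ≠ n → v m * t n = 1 ∨ v m * t n = -1 := by
    intro m n hmn
    obtain ⟨e, he, hGe⟩ := hval m n
    obtain ⟨e', he', hGe'⟩ := hval' (π m) (π n)
    rw [if_neg hmn] at hGe
    rw [if_neg (hπne hmn)] at hGe'
    have hrmn := hrel2 m n
    simp only [hG, hG'] at hrmn
    rw [hGe, hGe'] at hrmn
    have he2 : e * e = 1 := by rcases he with rfl | rfl <;> norm_num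
    have h4 : v m * t n * 16 = e' * e * 16 := by
      linear_combination (-e) * hrmn + (-16 * (v m * t n)) * he2
    have h5 : v m * t n = e' * e := mul_right_cancel₀ h16 h4
    rcases he with rfl | rfl <;> rcases he' with rfl | rfl <;>
      rw [h5] <;> norm_num
  by_cases hX : ∀ m nn : Fin d × Fin d, m = nn
  · refine ⟨fun _ => 1, fun _ => Or.inl rfl, ?_⟩
    intro m n
    obtain rfl := hX m n
    obtain ⟨e, he, hGe⟩ := hval m m
    obtain ⟨e', he', hGe'⟩ := hval' (π m) (π m)
    rw [if_pos rfl] at hGe hGe'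
    simp only [Matrix.of_apply, hG, hG']
    rw [hGe, hGe']
    norm_num
  · push_neg at hX
    obtain ⟨p, q, hpq⟩ := hX
    -- cc is conjugation-fixed, hence in the image of φ
    have hccfix : conj cc = cc := by
      rw [← hc p, map_mul, hconj2, mul_comm]
    obtain ⟨a, b, hab⟩ := hLgen cc
    have hi0ne : i0 ≠ 0 := by
      intro h
      rw [h] at hi0
      norm_num at hi0
    have hbK : φ b = 0 := by
      have h2 : conj cc = φ a - φ b * i0 := by
        rw [hab, map_add, map_mul, hconjφ, hconjφ, hconji]
        ring
      have h3 : φ a - φ b * i0 = φ a + φ b * i0 := by rw [← h2, hccfix, hab]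
      have h4 : φ b * i0 * 2 = 0 := by linear_combination -h3
      rcases mul_eq_zero.mp h4 with h | h
      · rcases mul_eq_zero.mp h with h' | h'
        · exact h'
        · exact absurd h' hi0ne
      · exact absurd h h2L
    have hccK : cc = φ a := by rw [hab, hbK, zero_mul, add_zero]
    -- cc ^ 4 = 1
    have hs1 := hsign p q hpq
    have hs2 := hsign q p (Ne.symm hpq)
    have hprod : (v p * t q) * (v q * t p) = cc ^ 2 * cc ^ 2 := by
      linear_combination (v q * t q) * hvt p + cc ^ 2 * hvt q
    have hno : cc ^ 2 * cc ^ 2 ≠ -1 := by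
      intro h
      apply hKroot (a ^ 2)
      apply hφinj
      rw [map_pow, map_pow, ← hccK, map_neg, map_one]
      linear_combination h
    have hc4 : cc ^ 2 * cc ^ 2 = 1 := by
      rcases hs1 with h1 | h1 <;> rcases hs2 with h2 | h2 <;> rw [h1, h2] at hprod
      · linear_combination -hprod
      · exact absurd (by linear_combination -hprod) hno
      · exact absurd (by linear_combination -hprod) hno
      · linear_combination -hprod
    have hcc2 : cc ^ 2 = 1 := by
      have h1 : (cc ^ 2 - 1) * (cc ^ 2 + 1) = 0 := by linear_combination hc4
      rcases mul_eq_zero.mp h1 with h | h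
      · linear_combination h
      · exfalso
        apply hKroot a
        apply hφinj
        rw [map_pow, ← hccK, map_neg, map_one]
        linear_combination h
    have hvt1 : ∀ m, v m * t m = 1 := fun m => by rw [hvt m, hcc2]
    set ε : Fin d × Fin d → L := fun m => if m = q then 1 else v m * t q with hε
    have hεval : ∀ m, ε m = if m = q then 1 else v m * t q := fun m => rfl
    refine ⟨ε, ?_, ?_⟩
    · intro m
      rw [hεval m]
      by_cases h : m = q
      · rw [if_pos h]; left; rfl
      · rw [if_neg h]; exact hsign m q h
    · intro m n
      simp only [Matrix.of_apply]
      by_cases hmn : m = n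
      · subst hmn
        rw [hrel2 m m, hvt1 m, one_mul]
        have hsq : ε m * ε m = 1 := by
          rw [hεval m]
          by_cases h : m = q
          · rw [if_pos h]; norm_num
          · rw [if_neg h]
            rcases hsign m q h with hh | hh <;> rw [hh] <;> norm_num
        rw [hsq, one_mul]
      · rw [hrel2 m n]
        have hE : ε m * ε n = v m * t n := by
          rw [hεval m, hεval n]
          by_cases hm : m = q
          · by_cases hn : n = q
            · exact absurd (hm.trans hn.symm) hmn
            · subst hm
              rw [if_pos rfl, if_neg hn, one_mul]
              have hpr : (v m * t n) * (v n * t m) = 1 := by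
                linear_combination (v n * t n) * hvt1 m + hvt1 n
              rcases hsign n m (fun h => hmn h.symm) with h | h
              · rw [h, mul_one] at hpr
                rw [h, hpr]
              · have h' : v m * t n = -1 := by
                  rw [h] at hpr
                  linear_combination -hpr
                rw [h, h']
          · by_cases hn : n = q
            · subst hn
              rw [if_neg hm, if_pos rfl, mul_one]
            · rw [if_neg hm, if_neg hn]
              have hvn : v n ≠ 0 := left_ne_zero_of_mul_eq_one (hvt1 n)
              refine mul_right_cancel₀ hvn ?_
              have hs2' : (v n * t q) * (v n * t q) = 1 := by
                rcases hsign n q hn with h | h <;> rw [h] <;> norm_num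
              linear_combination (v m) * hs2' - (v m) * hvt1 n
        rw [← hE]

theorem stmt_14 {K L : Type*} [Field K] [Field L]
    (hK2 : (2 : K) ≠ 0) (hKroot : ∀ a : K, a ^ 2 ≠ -1)
    (φ : K →+* L) (i0 : L) (hi0 : i0 ^ 2 = -1)
    (conj : L →+* L) (hconj2 : ∀ x : L, conj (conj x) = x)
    (hconjφ : ∀ a : K, conj (φ a) = φ a) (hconji : conj i0 = -i0)
    (hLgen : ∀ x : L, ∃ a b : K, x = φ a + φ b * i0)
    {d : ℕ} (H : Matrix (Fin d) (Fin d) K)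
    (hH1 : ∀ i j, H i j ^ 2 = 1)
    (hH2 : H.transpose * H = (d : K) • (1 : Matrix (Fin d) (Fin d) K))
    (hd8 : (d : K) = 8)
    (H' : Matrix (Fin d) (Fin d) K)
    (hH1' : ∀ i j, H' i j ^ 2 = 1)
    (hH2' : H'.transpose * H' = (d : K) • (1 : Matrix (Fin d) (Fin d) K))
    (π : Equiv.Perm (Fin d × Fin d))
    (hweak : SICWeakEquiv conj π (sicFam φ i0 H) (sicFam φ i0 H')) :
    MatStrongEquiv π
      (Matrix.of fun m n : Fin d × Fin d =>
        (sesq conj (sicFam φ i0 H m) (sicFam φ i0 H n)) ^ 2)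
      (Matrix.of fun m n : Fin d × Fin d =>
        (sesq conj (sicFam φ i0 H' m) (sicFam φ i0 H' n)) ^ 2) := by
  obtain ⟨U, c, cc, γ, hU, hc, hγc, hy⟩ := hweak
  exact sic_strong_aux hK2 hKroot φ i0 hi0 conj hconj2 hconjφ hconji hLgen
    (sicFam φ i0 H) (sicFam φ i0 H') π U c cc γ hU hc hγc hy
    (gram_entry φ i0 hi0 conj hconjφ hconji H hH1 hH2 hd8)
    (gram_entry φ i0 hi0 conj hconjφ hconji H' hH1' hH2' hd8)
end
end
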